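/- arXiv:1104.0119 — 11 statements merged into one kernel-verified Lean document; each statement's English description precedes it below -/
import Mathlib

section
/- Let p be a prime and A a p-torsion-free commutative ring. For an ideal I of A and ν ≥ 0, let I^{[p^ν]} denote the ideal of A generated by all elements p^i·f^{p^j} with f ∈ I and i + j = ν (so I^{[1]} = I). Then: (1) I^{[p^{ν+1}]} ⊆ I^{[p^ν]}; (2) if f ∈ I^{[p^ν]} then p·f ∈ I^{[p^{ν+1}]}; (3) if f ∈ I^{[p^ν]} then f^p ∈ I^{[p^{ν+1}]}; (4) if I is generated by a family {f_s : s ∈ S}, then I^{[p^ν]} is generated by the family {p^i·f_s^{p^j} : s ∈ S, i,j ≥ 0, i + j = ν}. -/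
/-- For an ideal `I` of a commutative ring `A` and `ν ≥ 0`, `I^{[p^ν]}` is the ideal of `A`
generated by all elements `p^i * f^(p^j)` with `f ∈ I` and `i + j = ν`. -/
def bracketPow {A : Type*} [CommRing A] (p : ℕ) (I : Ideal A) (ν : ℕ) : Ideal A :=
  Ideal.span {g | ∃ f ∈ I, ∃ i j : ℕ, i + j = ν ∧ g = (p : A) ^ i * f ^ p ^ j}

section Aux

variable {A : Type*} [CommRing A] {p : ℕ} {S : Type*}

/-- The generalized span of the family `p^i * fs s ^ p^j`, `i + j = ν`. -/
def genPow (p : ℕ) (fs : S → A) (ν : ℕ) : Ideal A :=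
  Ideal.span {g | ∃ (s : S) (i j : ℕ), i + j = ν ∧ g = (p : A) ^ i * fs s ^ p ^ j}

lemma mem_genPow_of_gen (fs : S → A) (s : S) {i j ν : ℕ} (hij : i + j = ν) :
    (p : A) ^ i * fs s ^ p ^ j ∈ genPow p fs ν :=
  Ideal.subset_span ⟨s, i, j, hij, rfl⟩

lemma genPow_mul_p (fs : S → A) (ν : ℕ) {f : A} (hf : f ∈ genPow p fs ν) :
    (p : A) * f ∈ genPow p fs (ν + 1) := by
  refine Submodule.span_induction ?_ ?_ ?_ ?_ hf
  · rintro g ⟨s, i, j, hij, rfl⟩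
    have : (p : A) * ((p : A) ^ i * fs s ^ p ^ j) = (p : A) ^ (i + 1) * fs s ^ p ^ j := by
      ring
    rw [this]
    exact mem_genPow_of_gen fs s (by omega)
  · simp
  · intro x y _ _ hx hy
    rw [mul_add]; exact add_mem hx hy
  · intro a x _ hx
    rw [smul_eq_mul, mul_left_comm]
    exact Ideal.mul_mem_left _ _ hx

lemma genPow_pow_p (hp : p.Prime) (fs : S → A) (ν : ℕ) {f : A} (hf : f ∈ genPow p fs ν) :
    f ^ p ∈ genPow p fs (ν + 1) := by
  refine Submodule.span_induction ?_ ?_ ?_ ?_ hf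
  · rintro g ⟨s, i, j, hij, rfl⟩
    have hp1 : i * (p - 1) + i = i * p := by
      have := hp.pos
      rw [← Nat.mul_succ]
      congr 1
      omega
    have : ((p : A) ^ i * fs s ^ p ^ j) ^ p
        = (p : A) ^ (i * (p - 1)) * ((p : A) ^ i * fs s ^ p ^ (j + 1)) := by
      rw [mul_pow, ← pow_mul, ← pow_mul, ← hp1, pow_add, mul_assoc, pow_succ]
    rw [this]
    exact Ideal.mul_mem_left _ _ (mem_genPow_of_gen fs s (by omega))
  · rw [zero_pow hp.ne_zero]; exact zero_mem _
  · intro x y hxm hym hx hy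
    rw [add_pow_prime_eq hp]
    refine add_mem (add_mem hx hy) ?_
    rw [mul_assoc, mul_assoc]
    refine genPow_mul_p fs ν ?_
    exact Ideal.mul_mem_right _ _ hxm
  · intro a x _ hx
    rw [smul_eq_mul, mul_pow, ← smul_eq_mul]
    exact Submodule.smul_mem _ _ hx

lemma genPow_succ_le (hp : p.Prime) (fs : S → A) (ν : ℕ) :
    genPow p fs (ν + 1) ≤ genPow p fs ν := by
  rw [genPow, Ideal.span_le]
  rintro g ⟨s, i, j, hij, rfl⟩
  cases i with
  | zero =>
    have hj : j = ν + 1 := by omega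
    subst hj
    have hp1 : p - 1 + 1 = p := by have := hp.pos; omega
    have : (p : A) ^ 0 * fs s ^ p ^ (ν + 1)
        = (fs s ^ p ^ ν) ^ (p - 1) * ((p : A) ^ 0 * fs s ^ p ^ ν) := by
      rw [pow_zero, one_mul, one_mul, ← pow_succ, hp1, ← pow_mul, ← pow_succ]
    rw [this]
    exact Ideal.mul_mem_left _ _ (mem_genPow_of_gen fs s (by omega))
  | succ i =>
    have : (p : A) ^ (i + 1) * fs s ^ p ^ j = (p : A) * ((p : A) ^ i * fs s ^ p ^ j) := by
      ring
    rw [this]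
    exact Ideal.mul_mem_left _ _ (mem_genPow_of_gen fs s (by omega))

lemma pow_pow_mem_genPow (hp : p.Prime) (fs : S → A) {f : A}
    (hf : f ∈ Ideal.span (Set.range fs)) (j : ℕ) : f ^ p ^ j ∈ genPow p fs j := by
  induction j with
  | zero =>
    simp only [pow_zero, pow_one]
    refine Ideal.span_mono ?_ hf
    rintro g ⟨s, rfl⟩
    exact ⟨s, 0, 0, rfl, by simp⟩
  | succ j ih =>
    rw [pow_succ, pow_mul]
    exact genPow_pow_p hp fs j ih

lemma gen_mem_genPow (hp : p.Prime) (fs : S → A) {f : A}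
    (hf : f ∈ Ideal.span (Set.range fs)) (i j : ℕ) :
    (p : A) ^ i * f ^ p ^ j ∈ genPow p fs (i + j) := by
  induction i with
  | zero => simpa using pow_pow_mem_genPow hp fs hf j
  | succ i ih =>
    have : (p : A) ^ (i + 1) * f ^ p ^ j = (p : A) * ((p : A) ^ i * f ^ p ^ j) := by ring
    rw [this, show i + 1 + j = (i + j) + 1 by omega]
    exact genPow_mul_p fs _ ih

lemma bracketPow_eq_genPow (I : Ideal A) (ν : ℕ) :
    bracketPow p I ν = genPow p (fun f : I => (f : A)) ν := by
  unfold bracketPow genPow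
  congr 1
  ext g
  constructor
  · rintro ⟨f, hf, i, j, hij, rfl⟩; exact ⟨⟨f, hf⟩, i, j, hij, rfl⟩
  · rintro ⟨⟨f, hf⟩, i, j, hij, rfl⟩; exact ⟨f, hf, i, j, hij, rfl⟩

end Aux

theorem stmt0 {A : Type*} [CommRing A] (p : ℕ) (hp : p.Prime)
    (htf : ∀ a : A, (p : A) * a = 0 → a = 0) (I : Ideal A) (ν : ℕ) :
    (bracketPow p I (ν + 1) ≤ bracketPow p I ν) ∧
    (∀ f ∈ bracketPow p I ν, (p : A) * f ∈ bracketPow p I (ν + 1)) ∧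
    (∀ f ∈ bracketPow p I ν, f ^ p ∈ bracketPow p I (ν + 1)) ∧
    (∀ (S : Type*) (fs : S → A), I = Ideal.span (Set.range fs) →
      bracketPow p I ν =
        Ideal.span {g | ∃ (s : S) (i j : ℕ), i + j = ν ∧ g = (p : A) ^ i * fs s ^ p ^ j}) := by
  refine ⟨?_, ?_, ?_, ?_⟩
  · rw [bracketPow_eq_genPow, bracketPow_eq_genPow]
    exact genPow_succ_le hp _ ν
  · intro f hf
    rw [bracketPow_eq_genPow] at hf ⊢
    exact genPow_mul_p _ ν hf
  · intro f hf
    rw [bracketPow_eq_genPow] at hf ⊢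
    exact genPow_pow_p hp _ ν hf
  · intro S fs hI
    apply le_antisymm
    · rw [bracketPow, Ideal.span_le]
      rintro g ⟨f, hf, i, j, hij, rfl⟩
      rw [hI] at hf
      rw [← hij]
      exact gen_mem_genPow hp fs hf i j
    · rw [Ideal.span_le]
      rintro g ⟨s, i, j, hij, rfl⟩
      exact Ideal.subset_span ⟨fs s, hI ▸ Ideal.subset_span ⟨s, rfl⟩, i, j, hij, rfl⟩
end

section
/- Fix an odd prime p. Let A be a p-torsion-free commutative ring with a p-derivation δ, and let I be an ideal of A with δ(I) ⊆ I. Then for every ν ≥ 0: (1) δ(I^{[p^ν]}) ⊆ I^{[p^ν]}; (2) φ(I^{[p^ν]}) ⊆ I^{[p^{ν+1}]}, where φ(a) := a^p + p·δa. -/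
section aux
variable {A : Type*} [CommRing A] {p : ℕ} {I : Ideal A}

lemma bp_gen_mem (hp : 0 < p) {f : A} (hf : f ∈ I) {ν i j : ℕ} (h : ν ≤ i + j) :
    (p : A) ^ i * f ^ p ^ j ∈ bracketPow p I ν := by
  by_cases hj : j ≤ ν
  · have hgen : (p:A) ^ (ν - j) * f ^ p ^ j ∈ bracketPow p I ν :=
      Ideal.subset_span ⟨f, hf, ν - j, j, by omega, rfl⟩
    have e : (p:A) ^ i * f ^ p ^ j = (p:A) ^ (i - (ν - j)) * ((p:A) ^ (ν - j) * f ^ p ^ j) := by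
      rw [← mul_assoc, ← pow_add]; congr 2; omega
    rw [e]
    exact Ideal.mul_mem_left _ _ hgen
  · have hf' : f ^ p ^ (j - ν) ∈ I := I.pow_mem_of_mem hf _ (pow_pos hp _)
    have hgen : (p:A) ^ 0 * (f ^ p ^ (j - ν)) ^ p ^ ν ∈ bracketPow p I ν :=
      Ideal.subset_span ⟨_, hf', 0, ν, by omega, rfl⟩
    have he : (f ^ p ^ (j - ν)) ^ p ^ ν = f ^ p ^ j := by
      rw [← pow_mul, ← pow_add, Nat.sub_add_cancel (le_of_not_ge hj)]
    rw [pow_zero, one_mul, he] at hgen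
    exact Ideal.mul_mem_left _ _ hgen

lemma bp_pmul_mem (hp : 0 < p) {ν k μ : ℕ} (h : μ ≤ ν + k) {x : A}
    (hx : x ∈ bracketPow p I ν) : (p : A) ^ k * x ∈ bracketPow p I μ := by
  induction hx using Submodule.span_induction with
  | mem g hg =>
    obtain ⟨f, hf, i, j, hij, rfl⟩ := hg
    rw [← mul_assoc, ← pow_add]
    exact bp_gen_mem hp hf (by omega)
  | zero => rw [mul_zero]; exact zero_mem _
  | add x y hx hy ihx ihy => rw [mul_add]; exact add_mem ihx ihy
  | smul a x hx ih =>
    rw [smul_eq_mul, mul_left_comm]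
    exact Ideal.mul_mem_left _ _ ih

lemma key_bin (hp : p.Prime) (x y : A) :
    ∃ w, (x + y) ^ p = x ^ p + y ^ p + (p : A) * (x * (y * w)) := by
  refine ⟨∑ k ∈ Finset.Ioo 0 p, x ^ (k-1) * y ^ (p-k-1) * ((p.choose k / p : ℕ) : A), ?_⟩
  rw [add_pow_prime_eq hp]
  ring

lemma bp_pow_mem (hp : p.Prime) {m : ℕ} {x : A} (hx : x ∈ bracketPow p I m) :
    x ^ p ∈ bracketPow p I (m+1) := by
  induction hx using Submodule.span_induction with
  | mem g hg =>
    obtain ⟨f, hf, i, j, hij, rfl⟩ := hg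
    rw [mul_pow, ← pow_mul, ← pow_mul, ← pow_succ]
    have hi : i ≤ i * p := Nat.le_mul_of_pos_right i hp.pos
    exact bp_gen_mem hp.pos hf (by omega)
  | zero => rw [zero_pow hp.pos.ne']; exact zero_mem _
  | add x y hx hy ihx ihy =>
    obtain ⟨w, hw⟩ := key_bin hp x y
    rw [hw]
    refine add_mem (add_mem ihx ihy) ?_
    have e : (p:A) * (x * (y * w)) = (p:A)^1 * (y * w * x) := by ring
    rw [e]
    exact bp_pmul_mem hp.pos (by omega) (Ideal.mul_mem_left _ _ hx)
  | smul a x hx ih => rw [smul_eq_mul, mul_pow]; exact Ideal.mul_mem_left _ _ ih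

end aux


section aux2
variable {A : Type*} [CommRing A] {p : ℕ} {δ : A → A}

lemma phi_add (hadd : ∀ a b : A, (p : A) * (δ (a + b) - δ a - δ b) = a ^ p + b ^ p - (a + b) ^ p)
    (a b : A) :
    (a + b) ^ p + (p:A) * δ (a + b) = (a ^ p + (p:A) * δ a) + (b ^ p + (p:A) * δ b) := by
  linear_combination hadd a b

lemma phi_mul (hmul : ∀ a b : A, δ (a * b) = a ^ p * δ b + b ^ p * δ a + (p : A) * δ a * δ b)
    (a b : A) :
    (a * b) ^ p + (p:A) * δ (a * b) = (a ^ p + (p:A) * δ a) * (b ^ p + (p:A) * δ b) := by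
  rw [mul_pow]
  linear_combination (p:A) * hmul a b

lemma phi_pow (hmul : ∀ a b : A, δ (a * b) = a ^ p * δ b + b ^ p * δ a + (p : A) * δ a * δ b)
    (a : A) (n : ℕ) :
    (a ^ (n+1)) ^ p + (p:A) * δ (a ^ (n+1)) = (a ^ p + (p:A) * δ a) ^ (n+1) := by
  induction n with
  | zero => rw [pow_one, pow_one]
  | succ n ih =>
    calc (a ^ (n+1+1)) ^ p + (p:A) * δ (a ^ (n+1+1))
        = (a ^ (n+1) * a) ^ p + (p:A) * δ (a ^ (n+1) * a) := by rw [pow_succ]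
      _ = ((a ^ (n+1)) ^ p + (p:A) * δ (a ^ (n+1))) * (a ^ p + (p:A) * δ a) :=
          phi_mul hmul _ _
      _ = (a ^ p + (p:A) * δ a) ^ (n+1+1) := by rw [ih, ← pow_succ]

lemma delta_zero (hp0 : p ≠ 0) (htf : ∀ a : A, (p : A) * a = 0 → a = 0)
    (hadd : ∀ a b : A, (p : A) * (δ (a + b) - δ a - δ b) = a ^ p + b ^ p - (a + b) ^ p) :
    δ (0:A) = 0 := by
  apply htf
  have h := hadd 0 0
  rw [add_zero, zero_pow hp0] at h
  linear_combination -h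

lemma delta_add (hp : p.Prime) (htf : ∀ a : A, (p : A) * a = 0 → a = 0)
    (hadd : ∀ a b : A, (p : A) * (δ (a + b) - δ a - δ b) = a ^ p + b ^ p - (a + b) ^ p)
    (x y : A) : ∃ w, δ (x + y) = δ x + δ y - x * (y * w) := by
  obtain ⟨w, hw⟩ := key_bin hp x y
  refine ⟨w, sub_eq_zero.mp (htf _ ?_)⟩
  rw [mul_sub]
  have h := hadd x y
  linear_combination h - hw

lemma delta_p_pow (hp : p.Prime)
    (hmul : ∀ a b : A, δ (a * b) = a ^ p * δ b + b ^ p * δ a + (p : A) * δ a * δ b)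
    (i : ℕ) : ∃ u, δ ((p:A) ^ (i+1)) = (p:A) ^ i * u := by
  obtain ⟨q, hq⟩ : ∃ q, p = q + 2 := ⟨p - 2, by have := hp.two_le; omega⟩
  have pow_p : ∀ a : A, a ^ p = a ^ (q+2) := fun a => by rw [hq]
  induction i with
  | zero => exact ⟨δ ((p:A) ^ 1), by rw [pow_zero, one_mul]⟩
  | succ i ih =>
    obtain ⟨u, hu⟩ := ih
    refine ⟨(p:A)^(q+1) * u + (p:A)^((i+1)*(q+1)) * δ (p:A) + δ (p:A) * u, ?_⟩
    have h := hmul (p:A) ((p:A)^(i+1))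
    rw [show (p:A) * (p:A)^(i+1) = (p:A)^(i+1+1) by ring, hu] at h
    rw [h]
    simp only [pow_p]
    ring

lemma delta_pow_p (hp : p.Prime) (htf : ∀ a : A, (p : A) * a = 0 → a = 0)
    (hmul : ∀ a b : A, δ (a * b) = a ^ p * δ b + b ^ p * δ a + (p : A) * δ a * δ b)
    (x : A) : ∃ w, δ (x ^ p) = (p:A) * (δ x * w) := by
  obtain ⟨q, hq⟩ : ∃ q, p = q + 2 := ⟨p - 2, by have := hp.two_le; omega⟩
  have pow_p : ∀ a : A, a ^ p = a ^ (q+2) := fun a => by rw [hq]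
  obtain ⟨w, hw⟩ := key_bin hp (x ^ p) ((p:A) * δ x)
  refine ⟨(p:A)^q * (δ x)^(q+1) + x ^ p * w, sub_eq_zero.mp (htf _ ?_)⟩
  rw [mul_sub]
  have hphi := phi_pow hmul x (q+1)
  rw [show q+1+1 = p by omega] at hphi
  rw [hw] at hphi
  rw [mul_pow ((p:A)) (δ x) p] at hphi
  simp only [pow_p] at hphi ⊢
  linear_combination hphi

lemma phi_pmul (hp : p.Prime)
    (hmul : ∀ a b : A, δ (a * b) = a ^ p * δ b + b ^ p * δ a + (p : A) * δ a * δ b)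
    (i : ℕ) (x : A) : ∃ c, ((p:A) ^ i * x) ^ p + (p:A) * δ ((p:A) ^ i * x)
      = (p:A) ^ i * (c * (x ^ p + (p:A) * δ x)) := by
  obtain ⟨q, hq⟩ : ∃ q, p = q + 2 := ⟨p - 2, by have := hp.two_le; omega⟩
  have pow_p : ∀ a : A, a ^ p = a ^ (q+2) := fun a => by rw [hq]
  induction i with
  | zero => exact ⟨1, by rw [pow_zero]; simp⟩
  | succ i ih =>
    obtain ⟨c, hc⟩ := ih
    refine ⟨((p:A)^(q+1) + δ (p:A)) * c, ?_⟩
    have h1 : (p:A) ^ (i+1) * x = (p:A) * ((p:A) ^ i * x) := by ring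
    rw [h1, phi_mul hmul, hc]
    simp only [pow_p]
    ring
end aux2
section aux3
variable {A : Type*} [CommRing A] {p : ℕ} {δ : A → A} {I : Ideal A}

lemma delta_fpow (hp : p.Prime) (htf : ∀ a : A, (p : A) * a = 0 → a = 0)
    (hmul : ∀ a b : A, δ (a * b) = a ^ p * δ b + b ^ p * δ a + (p : A) * δ a * δ b)
    {f : A} (hδf : δ f ∈ I) (j : ℕ) : δ (f ^ p ^ j) ∈ bracketPow p I j := by
  induction j with
  | zero =>
    have h0 := bp_gen_mem (I := I) hp.pos hδf (ν := 0) (i := 0) (j := 0) le_rfl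
    simpa using h0
  | succ j ih =>
    obtain ⟨w, hw⟩ := delta_pow_p hp htf hmul (f ^ p ^ j)
    have harg : f ^ p ^ (j+1) = (f ^ p ^ j) ^ p := by rw [← pow_mul, pow_succ]
    rw [harg, hw]
    have e : (p:A) * (δ (f ^ p ^ j) * w) = w * ((p:A) ^ 1 * δ (f ^ p ^ j)) := by ring
    rw [e]
    exact Ideal.mul_mem_left _ _ (bp_pmul_mem hp.pos le_rfl ih)

lemma phi_fpow (hp : p.Prime)
    (hmul : ∀ a b : A, δ (a * b) = a ^ p * δ b + b ^ p * δ a + (p : A) * δ a * δ b)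
    {f : A} (hf : f ∈ I) (hδf : δ f ∈ I) (j : ℕ) :
    (f ^ p ^ j) ^ p + (p:A) * δ (f ^ p ^ j) ∈ bracketPow p I (j+1) := by
  induction j with
  | zero =>
    have e : f ^ p ^ 0 = f := by rw [pow_zero, pow_one]
    rw [e]
    refine add_mem ?_ ?_
    · have := bp_gen_mem (I := I) hp.pos hf (ν := 1) (i := 0) (j := 1) (by omega)
      simpa using this
    · have := bp_gen_mem (I := I) hp.pos hδf (ν := 1) (i := 1) (j := 0) (by omega)
      simpa using this
  | succ j ih =>
    obtain ⟨q, hq⟩ : ∃ q, p = q + 2 := ⟨p - 2, by have := hp.two_le; omega⟩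
    have hphi := phi_pow hmul (f ^ p ^ j) (q+1)
    rw [show q+1+1 = p by omega] at hphi
    have harg : f ^ p ^ (j+1) = (f ^ p ^ j) ^ p := by rw [← pow_mul, pow_succ]
    rw [harg, hphi]
    exact bp_pow_mem hp ih

lemma bp_delta_mem (hp : p.Prime) (htf : ∀ a : A, (p : A) * a = 0 → a = 0)
    (hadd : ∀ a b : A, (p : A) * (δ (a + b) - δ a - δ b) = a ^ p + b ^ p - (a + b) ^ p)
    (hmul : ∀ a b : A, δ (a * b) = a ^ p * δ b + b ^ p * δ a + (p : A) * δ a * δ b)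
    (hI : ∀ a ∈ I, δ a ∈ I) {ν : ℕ} {x : A} (hx : x ∈ bracketPow p I ν) :
    δ x ∈ bracketPow p I ν := by
  induction hx using Submodule.span_induction with
  | mem g hg =>
    obtain ⟨f, hf, i, j, hij, rfl⟩ := hg
    rcases i with _ | i
    · rw [pow_zero, one_mul]
      obtain rfl : j = ν := by omega
      exact delta_fpow hp htf hmul (hI f hf) _
    · obtain ⟨u, hu⟩ := delta_p_pow hp hmul i
      have h := hmul ((p:A) ^ (i+1)) (f ^ p ^ j)
      rw [hu] at h
      rw [h]
      refine add_mem (add_mem ?_ ?_) ?_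
      · rw [← pow_mul]
        have hle : i + 1 ≤ (i+1) * p := Nat.le_mul_of_pos_right _ hp.pos
        exact bp_pmul_mem hp.pos (by omega) (delta_fpow hp htf hmul (hI f hf) j)
      · have e : (f ^ p ^ j) ^ p * ((p:A) ^ i * u) = u * ((p:A) ^ i * f ^ p ^ (j+1)) := by
          rw [← pow_mul, ← pow_succ]; ring
        rw [e]
        exact Ideal.mul_mem_left _ _ (bp_gen_mem hp.pos hf (by omega))
      · have e : (p:A) * ((p:A) ^ i * u) * δ (f ^ p ^ j)
            = u * ((p:A) ^ (i+1) * δ (f ^ p ^ j)) := by ring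
        rw [e]
        exact Ideal.mul_mem_left _ _
          (bp_pmul_mem hp.pos (by omega) (delta_fpow hp htf hmul (hI f hf) j))
  | zero => rw [delta_zero hp.pos.ne' htf hadd]; exact zero_mem _
  | add x y hx hy ihx ihy =>
    obtain ⟨w, hw⟩ := delta_add hp htf hadd x y
    rw [hw]
    exact sub_mem (add_mem ihx ihy) (Ideal.mul_mem_right _ _ hx)
  | smul a x hx ih =>
    rw [smul_eq_mul, hmul]
    refine add_mem (add_mem (Ideal.mul_mem_left _ _ ih) ?_) (Ideal.mul_mem_left _ _ ih)
    exact Ideal.mul_mem_right _ _ (Ideal.pow_mem_of_mem _ hx p hp.pos)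

lemma bp_phi_mem (hp : p.Prime) (htf : ∀ a : A, (p : A) * a = 0 → a = 0)
    (hadd : ∀ a b : A, (p : A) * (δ (a + b) - δ a - δ b) = a ^ p + b ^ p - (a + b) ^ p)
    (hmul : ∀ a b : A, δ (a * b) = a ^ p * δ b + b ^ p * δ a + (p : A) * δ a * δ b)
    (hI : ∀ a ∈ I, δ a ∈ I) {ν : ℕ} {x : A} (hx : x ∈ bracketPow p I ν) :
    x ^ p + (p:A) * δ x ∈ bracketPow p I (ν+1) := by
  induction hx using Submodule.span_induction with
  | mem g hg =>
    obtain ⟨f, hf, i, j, hij, rfl⟩ := hg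
    obtain ⟨c, hc⟩ := phi_pmul hp hmul i (f ^ p ^ j)
    rw [hc]
    exact bp_pmul_mem hp.pos (by omega)
      (Ideal.mul_mem_left _ _ (phi_fpow hp hmul hf (hI f hf) j))
  | zero =>
    rw [delta_zero hp.pos.ne' htf hadd, zero_pow hp.pos.ne', mul_zero, add_zero]
    exact zero_mem _
  | add x y hx hy ihx ihy =>
    rw [phi_add hadd]
    exact add_mem ihx ihy
  | smul a x hx ih =>
    rw [smul_eq_mul, phi_mul hmul]
    exact Ideal.mul_mem_left _ _ ih

end aux3

theorem stmt1 {A : Type*} [CommRing A] (p : ℕ) (hp : p.Prime) (hodd : Odd p)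
    (htf : ∀ a : A, (p : A) * a = 0 → a = 0)
    (δ : A → A)
    (hadd : ∀ a b : A, (p : A) * (δ (a + b) - δ a - δ b) = a ^ p + b ^ p - (a + b) ^ p)
    (hmul : ∀ a b : A, δ (a * b) = a ^ p * δ b + b ^ p * δ a + (p : A) * δ a * δ b)
    (I : Ideal A) (hI : ∀ a ∈ I, δ a ∈ I) (ν : ℕ) :
    (∀ f ∈ bracketPow p I ν, δ f ∈ bracketPow p I ν) ∧
    (∀ f ∈ bracketPow p I ν, f ^ p + (p : A) * δ f ∈ bracketPow p I (ν + 1)) :=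
  ⟨fun _ hf => bp_delta_mem hp htf hadd hmul hI hf,
   fun _ hf => bp_phi_mem hp htf hadd hmul hI hf⟩
end

section
/- Fix an odd prime p. Let A be a p-torsion-free commutative ring with a p-derivation δ, and let A^0 ⊆ A^1 ⊆ A^2 ⊆ … be an increasing chain of subrings of A with δ(A^n) ⊆ A^{n+1} for all n ≥ 0. Define A^{{n}} := A^n + p·A^{n+1} + p²·A^{n+2} + … (the set of finite sums Σ_s p^s·f_s with f_s ∈ A^{n+s}). Then: (1) p·A^{{n+1}} ⊆ A^{{n}}; (2) δ(A^{{n}}) ⊆ A^{{n+1}}; (3) φ(A^{{n}}) ⊆ A^{{n}}, where φ(a) := a^p + p·δa. -/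
/-- Given an increasing chain of subrings `An 0 ⊆ An 1 ⊆ …` of `A`, the set
`A^{{n}} = An n + p·An (n+1) + p²·An (n+2) + …` of finite sums `Σ_s p^s · f_s` with
`f_s ∈ An (n+s)`. -/
def brace {A : Type*} [CommRing A] (p : ℕ) (An : ℕ → Subring A) (n : ℕ) : Set A :=
  {a | ∃ (m : ℕ) (f : ℕ → A), (∀ s, f s ∈ An (n + s)) ∧
    a = ∑ s ∈ Finset.range m, (p : A) ^ s * f s}

section Aux
variable {A : Type*} [CommRing A] (p : ℕ) (An : ℕ → Subring A)

lemma brace_zero_mem (n : ℕ) : (0:A) ∈ brace p An n :=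
  ⟨0, fun _ => 0, fun _ => zero_mem _, by simp⟩

lemma brace_mem_of_An (hmono : Monotone An) {n : ℕ} {a : A} (h : a ∈ An n) :
    a ∈ brace p An n :=
  ⟨1, fun _ => a, fun s => hmono (Nat.le_add_right n s) h, by simp⟩

lemma brace_mono (hmono : Monotone An) {n : ℕ} {a : A} (h : a ∈ brace p An n) :
    a ∈ brace p An (n+1) := by
  obtain ⟨m, f, hf, rfl⟩ := h
  exact ⟨m, f, fun s => hmono (by omega) (hf s), rfl⟩

lemma brace_shift {n : ℕ} {a : A} (h : a ∈ brace p An (n+1)) :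
    (p:A) * a ∈ brace p An n := by
  obtain ⟨m, f, hf, rfl⟩ := h
  refine ⟨m+1, fun s => Nat.rec 0 (fun s _ => f s) s, fun s => ?_, ?_⟩
  · cases s with
    | zero => exact zero_mem _
    | succ s => exact (show n + 1 + s = n + (s+1) by omega) ▸ hf s
  · rw [Finset.sum_range_succ']
    simp [Finset.mul_sum, pow_succ, mul_comm, mul_assoc, mul_left_comm]

lemma brace_add_mem {n : ℕ} {a b : A} (ha : a ∈ brace p An n) (hb : b ∈ brace p An n) :
    a + b ∈ brace p An n := by
  obtain ⟨m, f, hf, rfl⟩ := ha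
  obtain ⟨m', g, hg, rfl⟩ := hb
  have pad : ∀ (k : ℕ) (h : ℕ → A), k ≤ max m m' →
      ∑ s ∈ Finset.range k, (p:A)^s * h s
      = ∑ s ∈ Finset.range (max m m'), (p:A)^s * (if s < k then h s else 0) := by
    intro k h hk
    rw [← Finset.sum_subset (Finset.range_subset_range.2 hk)]
    · exact Finset.sum_congr rfl fun s hs => by rw [if_pos (Finset.mem_range.1 hs)]
    · intro s _ hs
      rw [if_neg (by simpa using hs), mul_zero]
  refine ⟨max m m', fun s => (if s < m then f s else 0) + (if s < m' then g s else 0),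
    fun s => add_mem (by split <;> [exact hf s; exact zero_mem _])
      (by split <;> [exact hg s; exact zero_mem _]), ?_⟩
  rw [pad m f (le_max_left _ _), pad m' g (le_max_right _ _), ← Finset.sum_add_distrib]
  exact Finset.sum_congr rfl fun s _ => by ring

lemma brace_neg_mem {n : ℕ} {a : A} (ha : a ∈ brace p An n) : -a ∈ brace p An n := by
  obtain ⟨m, f, hf, rfl⟩ := ha
  exact ⟨m, fun s => -f s, fun s => neg_mem (hf s), by simp [Finset.sum_neg_distrib]⟩

lemma brace_mul_mem (hmono : Monotone An) :
    ∀ (m n : ℕ) (f : ℕ → A) (b : A), (∀ s, f s ∈ An (n + s)) → b ∈ brace p An n →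
      (∑ s ∈ Finset.range m, (p:A)^s * f s) * b ∈ brace p An n := by
  intro m
  induction m with
  | zero => intro n f b _ _; simpa using brace_zero_mem p An n
  | succ m ih =>
    intro n f b hf hb
    have hsum : ∑ s ∈ Finset.range (m+1), (p:A)^s * f s
        = f 0 + (p:A) * ∑ s ∈ Finset.range m, (p:A)^s * f (s+1) := by
      rw [Finset.sum_range_succ']
      rw [Finset.mul_sum]
      simp [pow_succ, mul_comm, mul_assoc, mul_left_comm]
      ring
    rw [hsum, add_mul]
    apply brace_add_mem
    · obtain ⟨m', g, hg, rfl⟩ := hb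
      rw [Finset.mul_sum]
      exact ⟨m', fun s => f 0 * g s, fun s => mul_mem (hmono (Nat.le_add_right n s) (hf 0)) (hg s),
        Finset.sum_congr rfl fun s _ => by ring⟩
    · rw [mul_assoc]
      apply brace_shift
      exact ih (n+1) (fun s => f (s+1)) b
        (fun s => (show n + 1 + s = n + (s+1) by omega) ▸ hf (s+1)) (brace_mono p An hmono hb)

lemma brace_mul_mem' (hmono : Monotone An) {n : ℕ} {a b : A}
    (ha : a ∈ brace p An n) (hb : b ∈ brace p An n) : a * b ∈ brace p An n := by
  obtain ⟨m, f, hf, rfl⟩ := ha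
  exact brace_mul_mem p An hmono m n f b hf hb

lemma brace_pow_mem (hmono : Monotone An) {n : ℕ} {a : A}
    (ha : a ∈ brace p An n) (k : ℕ) : a ^ k ∈ brace p An n := by
  induction k with
  | zero => exact pow_zero a ▸ ⟨1, fun _ => 1, fun _ => one_mem _, by simp⟩
  | succ k ih => rw [pow_succ]; exact brace_mul_mem' p An hmono ih ha

lemma brace_sum_mem {ι : Type*} {n : ℕ} {s : Finset ι} {g : ι → A}
    (h : ∀ i ∈ s, g i ∈ brace p An n) : ∑ i ∈ s, g i ∈ brace p An n := by
  classical
  induction s using Finset.induction with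
  | empty => simpa using brace_zero_mem p An n
  | insert x s hx ih =>
    rw [Finset.sum_insert hx]
    exact brace_add_mem p An (h _ (Finset.mem_insert_self _ _))
      (ih fun i hi => h i (Finset.mem_insert_of_mem hi))

lemma pow_add_eq_aux {A : Type*} [CommRing A] (p : ℕ) (hp : p.Prime) (x y : A) :
    (x+y)^p = x^p + y^p
      + (p:A) * ∑ k ∈ Finset.Ioo 0 p, ((p.choose k / p : ℕ):A) * (x^k * y^(p-k)) := by
  rw [add_pow]
  have h1 : Finset.range (p+1) = insert p (insert 0 (Finset.Ioo 0 p)) := by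
    ext k; simp; omega
  rw [h1, Finset.sum_insert (by simp [hp.pos, Nat.pos_iff_ne_zero]), Finset.sum_insert (by simp)]
  rw [Finset.mul_sum]
  have h2 : ∀ k ∈ Finset.Ioo 0 p,
      x ^ k * y ^ (p - k) * (p.choose k : A)
        = (p:A) * (((p.choose k / p : ℕ):A) * (x^k * y^(p-k))) := by
    intro k hk
    obtain ⟨hk0, hkp⟩ := Finset.mem_Ioo.1 hk
    have hd : p ∣ p.choose k := hp.dvd_choose_self (by omega) hkp
    have : ((p.choose k : ℕ) : A) = ((p * (p.choose k / p) : ℕ) : A) := by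
      rw [Nat.mul_div_cancel' hd]
    rw [this]
    push_cast
    ring
  rw [Finset.sum_congr rfl h2]
  simp [Nat.choose_self, hp.pos]
  ring

lemma delta_zero_aux {A : Type*} [CommRing A] (p : ℕ) (hp : p.Prime)
    (htf : ∀ a : A, (p : A) * a = 0 → a = 0) (δ : A → A)
    (hadd : ∀ a b : A, (p : A) * (δ (a + b) - δ a - δ b) = a ^ p + b ^ p - (a + b) ^ p) :
    δ (0:A) = 0 := by
  have h := hadd 0 0
  simp [zero_pow hp.ne_zero] at h
  exact htf _ h

lemma delta_add_aux {A : Type*} [CommRing A] (p : ℕ) (hp : p.Prime)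
    (htf : ∀ a : A, (p : A) * a = 0 → a = 0) (δ : A → A)
    (hadd : ∀ a b : A, (p : A) * (δ (a + b) - δ a - δ b) = a ^ p + b ^ p - (a + b) ^ p)
    (x y : A) :
    δ (x+y) = δ x + δ y
      - ∑ k ∈ Finset.Ioo 0 p, ((p.choose k / p : ℕ):A) * (x^k * y^(p-k)) := by
  have h := hadd x y
  rw [pow_add_eq_aux p hp x y] at h
  have h2 := htf (δ (x+y) - δ x - δ y
      + ∑ k ∈ Finset.Ioo 0 p, ((p.choose k / p : ℕ):A) * (x^k * y^(p-k)))
    (by linear_combination h)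
  linear_combination h2

lemma delta_sum_aux {A : Type*} [CommRing A] (p : ℕ) (hp : p.Prime)
    (htf : ∀ a : A, (p : A) * a = 0 → a = 0) (δ : A → A)
    (hadd : ∀ a b : A, (p : A) * (δ (a + b) - δ a - δ b) = a ^ p + b ^ p - (a + b) ^ p)
    (hmul : ∀ a b : A, δ (a * b) = a ^ p * δ b + b ^ p * δ a + (p : A) * δ a * δ b)
    (An : ℕ → Subring A) (hmono : Monotone An)
    (hδA : ∀ n, ∀ a ∈ An n, δ a ∈ An (n + 1)) :
    ∀ (m n : ℕ) (f : ℕ → A), (∀ s, f s ∈ An (n + s)) →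
      δ (∑ s ∈ Finset.range m, (p:A)^s * f s) ∈ brace p An (n+1) := by
  intro m
  induction m with
  | zero =>
    intro n f _
    simpa [delta_zero_aux p hp htf δ hadd] using brace_zero_mem p An (n+1)
  | succ m ih =>
    intro n f hf
    set b := ∑ s ∈ Finset.range m, (p:A)^s * f (s+1) with hb_def
    have hsum : ∑ s ∈ Finset.range (m+1), (p:A)^s * f s = f 0 + (p:A) * b := by
      rw [hb_def, Finset.sum_range_succ', Finset.mul_sum]
      simp [pow_succ, mul_comm, mul_assoc, mul_left_comm]
      ring
    have hb : b ∈ brace p An (n+1) :=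
      ⟨m, fun s => f (s+1), fun s => (show n + 1 + s = n + (s+1) by omega) ▸ hf (s+1), rfl⟩
    have hδb : δ b ∈ brace p An (n+2) :=
      ih (n+1) (fun s => f (s+1))
        (fun s => (show n + 1 + s = n + (s+1) by omega) ▸ hf (s+1))
    have hpδb : (p:A) * δ b ∈ brace p An (n+1) := brace_shift p An hδb
    have hδp : δ (p:A) ∈ brace p An (n+1) :=
      brace_mem_of_An p An hmono
        (hmono (by omega : 1 ≤ n+1) (hδA 0 _ (natCast_mem _ p)))
    rw [hsum, delta_add_aux p hp htf δ hadd, hmul (p:A) b]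
    have e1 : (p:A)^p * δ b = (p:A)^(p-1) * ((p:A) * δ b) := by
      rw [← mul_assoc, ← pow_succ, Nat.sub_add_cancel hp.one_le]
    have e2 : (p:A) * δ (p:A) * δ b = δ (p:A) * ((p:A) * δ b) := by ring
    rw [e1, e2, sub_eq_add_neg]
    apply brace_add_mem
    apply brace_add_mem
    · exact brace_mem_of_An p An hmono (hδA n _ (hf 0))
    · apply brace_add_mem
      apply brace_add_mem
      · refine brace_mul_mem' p An hmono ?_ hpδb
        have : ((p:A))^(p-1) = ((p^(p-1) : ℕ) : A) := by push_cast; ring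
        rw [this]
        exact brace_mem_of_An p An hmono (natCast_mem _ _)
      · exact brace_mul_mem' p An hmono (brace_pow_mem p An hmono hb p) hδp
      · exact brace_mul_mem' p An hmono hδp hpδb
    · apply brace_neg_mem
      apply brace_sum_mem
      intro k hk
      apply brace_mul_mem' p An hmono
      · exact brace_mem_of_An p An hmono (natCast_mem _ _)
      apply brace_mul_mem' p An hmono
      · exact brace_pow_mem p An hmono
          (brace_mem_of_An p An hmono (hmono (by omega : n ≤ n+1) (hf 0))) k
      · refine brace_pow_mem p An hmono ?_ _
        exact brace_mono p An hmono (brace_shift p An hb)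

end Aux

theorem stmt2 {A : Type*} [CommRing A] (p : ℕ) (hp : p.Prime) (hodd : Odd p)
    (htf : ∀ a : A, (p : A) * a = 0 → a = 0)
    (δ : A → A)
    (hadd : ∀ a b : A, (p : A) * (δ (a + b) - δ a - δ b) = a ^ p + b ^ p - (a + b) ^ p)
    (hmul : ∀ a b : A, δ (a * b) = a ^ p * δ b + b ^ p * δ a + (p : A) * δ a * δ b)
    (An : ℕ → Subring A) (hmono : Monotone An)
    (hδA : ∀ n, ∀ a ∈ An n, δ a ∈ An (n + 1)) (n : ℕ) :
    (∀ a ∈ brace p An (n + 1), (p : A) * a ∈ brace p An n) ∧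
    (∀ a ∈ brace p An n, δ a ∈ brace p An (n + 1)) ∧
    (∀ a ∈ brace p An n, a ^ p + (p : A) * δ a ∈ brace p An n) := by
  have h2 : ∀ a ∈ brace p An n, δ a ∈ brace p An (n + 1) := by
    rintro a ⟨m, f, hf, rfl⟩
    exact delta_sum_aux p hp htf δ hadd hmul An hmono hδA m n f hf
  refine ⟨fun a ha => brace_shift p An ha, h2, fun a ha => ?_⟩
  exact brace_add_mem p An (brace_pow_mem p An hmono ha p)
    (brace_shift p An (h2 a ha))
end

section
/- Fix an odd prime p. Let A be a p-torsion-free commutative ring with a p-derivation δ, and let f, g ∈ A. Then for every n ≥ 0 the following two ideals of A are equal: the ideal generated by f−g, δ(f−g), δ²(f−g), …, δ^n(f−g), and the ideal generated by f−g, δf−δg, δ²f−δ²g, …, δ^n f−δ^n g. -/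
theorem stmt3 {A : Type*} [CommRing A] (p : ℕ) (hp : p.Prime) (hodd : Odd p)
    (htf : ∀ a : A, (p : A) * a = 0 → a = 0)
    (δ : A → A)
    (hadd : ∀ a b : A, (p : A) * (δ (a + b) - δ a - δ b) = a ^ p + b ^ p - (a + b) ^ p)
    (hmul : ∀ a b : A, δ (a * b) = a ^ p * δ b + b ^ p * δ a + (p : A) * δ a * δ b)
    (f g : A) (n : ℕ) :
    Ideal.span ((fun i => δ^[i] (f - g)) '' Set.Iic n) =
      Ideal.span ((fun i => δ^[i] f - δ^[i] g) '' Set.Iic n) := by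
  -- δ 0 = 0
  have hδ0 : δ 0 = 0 := by
    have h := hadd 0 0
    rw [add_zero, zero_pow hp.pos.ne'] at h
    have h2 : (p : A) * (- δ 0) = 0 := by linear_combination h
    have h3 := htf _ h2
    exact neg_eq_zero.mp h3
  -- key lemma: δ(y+s) = δ y + δ s + s * w for some w
  have key : ∀ y s : A, ∃ w : A, δ (y + s) = δ y + δ s + s * w := by
    intro y s
    have hpow := add_pow_prime_eq hp y s
    have hfac : ∑ k ∈ Finset.Ioo 0 p, y ^ k * s ^ (p - k) * ((p.choose k / p : ℕ) : A) =
        s * ∑ k ∈ Finset.Ioo 0 p, y ^ k * s ^ (p - k - 1) * ((p.choose k / p : ℕ) : A) := by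
      rw [Finset.mul_sum]
      refine Finset.sum_congr rfl fun k hk => ?_
      rw [Finset.mem_Ioo] at hk
      have hs : s ^ (p - k) = s * s ^ (p - k - 1) := by
        rw [← pow_succ']
        congr 1
        omega
      rw [hs]
      ring
    have hy : y * ∑ k ∈ Finset.Ioo 0 p, y ^ (k - 1) * s ^ (p - k - 1) * ((p.choose k / p : ℕ) : A) =
        ∑ k ∈ Finset.Ioo 0 p, y ^ k * s ^ (p - k - 1) * ((p.choose k / p : ℕ) : A) := by
      rw [Finset.mul_sum]
      refine Finset.sum_congr rfl fun k hk => ?_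
      rw [Finset.mem_Ioo] at hk
      have hyk : y ^ k = y * y ^ (k - 1) := by
        rw [← pow_succ']
        congr 1
        omega
      rw [hyk]
      ring
    rw [show ∀ X : A, (p : A) * y * s * X = (p : A) * (s * (y * X)) from fun X => by ring, hy] at hpow
    set W := ∑ k ∈ Finset.Ioo 0 p, y ^ k * s ^ (p - k - 1) * ((p.choose k / p : ℕ) : A) with hW
    refine ⟨-W, ?_⟩
    have h2 := hadd y s
    rw [hpow] at h2
    have h3 : (p : A) * (δ (y + s) - δ y - δ s + s * W) = 0 := by linear_combination h2
    have h4 := htf _ h3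
    linear_combination h4
  -- main engine: δ of an element of a span lies in a larger ideal
  have main : ∀ (S : Set A) (J : Ideal A), Ideal.span S ≤ J → (∀ s ∈ S, δ s ∈ J) →
      ∀ z ∈ Ideal.span S, δ z ∈ J := by
    intro S J hle hgen z hz
    induction hz using Submodule.span_induction with
    | mem s hs => exact hgen s hs
    | zero => rw [hδ0]; exact J.zero_mem
    | add z1 z2 hz1 hz2 ih1 ih2 =>
      obtain ⟨w, hw⟩ := key z1 z2
      rw [hw]
      exact J.add_mem (J.add_mem ih1 ih2) (J.mul_mem_right w (hle hz2))
    | smul a z hz ihz =>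
      rw [smul_eq_mul, hmul]
      have hzJ : z ∈ J := hle hz
      have hp1 : 0 < p := hp.pos
      have hzp : z ^ p ∈ J := by
        have hzz : z ^ p = z * z ^ (p - 1) := by
          rw [← pow_succ']
          congr 1
          omega
        rw [hzz]
        exact J.mul_mem_right _ hzJ
      refine J.add_mem (J.add_mem ?_ (J.mul_mem_right _ hzp)) ?_
      · exact J.mul_mem_left _ ihz
      · exact J.mul_mem_left _ ihz
  -- step: δ x - δ y ∈ J when x - y ∈ span S
  have step : ∀ (S : Set A) (J : Ideal A), Ideal.span S ≤ J → (∀ s ∈ S, δ s ∈ J) →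
      ∀ x y : A, x - y ∈ Ideal.span S → δ x - δ y ∈ J := by
    intro S J hle hgen x y hxy
    obtain ⟨w, hw⟩ := key y (x - y)
    rw [show y + (x - y) = x by ring] at hw
    have h1 : δ x - δ y = δ (x - y) + (x - y) * w := by rw [hw]; ring
    rw [h1]
    exact J.add_mem (main S J hle hgen _ hxy) (J.mul_mem_right _ (hle hxy))
  have claim1 : ∀ i : ℕ,
      δ^[i] f - δ^[i] g ∈ Ideal.span ((fun j => δ^[j] (f - g)) '' Set.Iic i) := by
    intro i
    induction i with
    | zero => exact Ideal.subset_span ⟨0, by simp, by simp⟩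
    | succ i ih =>
      have hmono : Ideal.span ((fun j => δ^[j] (f - g)) '' Set.Iic i) ≤
          Ideal.span ((fun j => δ^[j] (f - g)) '' Set.Iic (i + 1)) :=
        Ideal.span_mono (Set.image_mono (Set.Iic_subset_Iic.2 (Nat.le_succ i)))
      have hgen : ∀ s ∈ (fun j => δ^[j] (f - g)) '' Set.Iic i,
          δ s ∈ Ideal.span ((fun j => δ^[j] (f - g)) '' Set.Iic (i + 1)) := by
        rintro s ⟨j, hj, rfl⟩
        refine Ideal.subset_span ⟨j + 1, by simpa using Nat.succ_le_succ hj, ?_⟩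
        show δ^[j + 1] (f - g) = δ (δ^[j] (f - g))
        exact Function.iterate_succ_apply' δ j (f - g)
      have := step _ _ hmono hgen (δ^[i] f) (δ^[i] g) ih
      simpa [Function.iterate_succ_apply'] using this
  have claim2 : ∀ i : ℕ,
      δ^[i] (f - g) ∈ Ideal.span ((fun j => δ^[j] f - δ^[j] g) '' Set.Iic i) := by
    intro i
    induction i with
    | zero => exact Ideal.subset_span ⟨0, by simp, by simp⟩
    | succ i ih =>
      have hmono : Ideal.span ((fun j => δ^[j] f - δ^[j] g) '' Set.Iic i) ≤
          Ideal.span ((fun j => δ^[j] f - δ^[j] g) '' Set.Iic (i + 1)) :=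
        Ideal.span_mono (Set.image_mono (Set.Iic_subset_Iic.2 (Nat.le_succ i)))
      have hgen : ∀ s ∈ (fun j => δ^[j] f - δ^[j] g) '' Set.Iic i,
          δ s ∈ Ideal.span ((fun j => δ^[j] f - δ^[j] g) '' Set.Iic (i + 1)) := by
        rintro s ⟨j, hj, rfl⟩
        obtain ⟨w, hw⟩ := key (δ^[j] g) (δ^[j] f - δ^[j] g)
        rw [show δ^[j] g + (δ^[j] f - δ^[j] g) = δ^[j] f by ring] at hw
        have hδbj : δ (δ^[j] f - δ^[j] g) =
            (δ^[j + 1] f - δ^[j + 1] g) - (δ^[j] f - δ^[j] g) * w := by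
          rw [Function.iterate_succ_apply', Function.iterate_succ_apply']
          linear_combination -hw
        rw [hδbj]
        refine sub_mem (Ideal.subset_span ⟨j + 1, by simpa using Nat.succ_le_succ hj, rfl⟩)
          (Ideal.mul_mem_right _ _ (Ideal.subset_span ⟨j, by simpa using Nat.le_succ_of_le hj, rfl⟩))
      rw [Function.iterate_succ_apply']
      exact main _ _ hmono hgen _ ih
  apply le_antisymm <;> rw [Ideal.span_le] <;> rintro _ ⟨i, hi, rfl⟩
  · exact Ideal.span_mono (Set.image_mono (Set.Iic_subset_Iic.2 hi)) (claim2 i)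
  · exact Ideal.span_mono (Set.image_mono (Set.Iic_subset_Iic.2 hi)) (claim1 i)
end

section
/- Fix an odd prime p. Let A be a p-torsion-free commutative ring with a p-derivation δ. Then for every f ∈ A and every ν ≥ 1, δ(f^{p^ν}) − p^ν·f^{p·(p^ν−1)}·δf lies in the ideal of A generated by p^{ν+1}·(δf)²; that is, there exists Q ∈ A with δ(f^{p^ν}) = p^ν·f^{p·(p^ν−1)}·δf + p^{ν+1}·(δf)²·Q. -/
theorem aux_pow {A : Type*} [CommRing A] (p : ℕ)
    (δ : A → A)
    (hmul : ∀ a b : A, δ (a * b) = a ^ p * δ b + b ^ p * δ a + (p : A) * δ a * δ b)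
    (a : A) : ∀ k : ℕ, ∃ R : A, δ (a ^ (k + 2)) =
      ((k : A) + 2) * (a ^ p) ^ (k + 1) * δ a +
      (p : A) * (δ a) ^ 2 * (((k + 2).choose 2 : ℕ) * (a ^ p) ^ k + (p : A) * R) := by
  intro k
  induction k with
  | zero =>
    refine ⟨0, ?_⟩
    have h : a ^ 2 = a * a := sq a
    rw [h, hmul a a]
    norm_num
    ring
  | succ k ih =>
    obtain ⟨R, hR⟩ := ih
    refine ⟨R * a ^ p + δ a * (((k + 2).choose 2 : ℕ) * (a ^ p) ^ k + (p : A) * R), ?_⟩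
    have h1 : a ^ (k + 1 + 2) = a * a ^ (k + 2) := by ring
    have h2 : (a ^ (k + 2)) ^ p = (a ^ p) ^ (k + 2) := by
      rw [← pow_mul, ← pow_mul, mul_comm]
    have h3 : ((k + 1 + 2).choose 2 : ℕ) = (k + 2).choose 2 + (k + 2) := by
      simp [Nat.choose_succ_succ, Nat.choose_one_right]
      omega
    rw [h1, hmul, hR, h2, h3]
    push_cast
    ring

theorem aux_p {A : Type*} [CommRing A] (p : ℕ) (hp : p.Prime) (hodd : Odd p)
    (δ : A → A)
    (hmul : ∀ a b : A, δ (a * b) = a ^ p * δ b + b ^ p * δ a + (p : A) * δ a * δ b)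
    (a : A) : ∃ S : A, δ (a ^ p) =
      (p : A) * a ^ (p * (p - 1)) * δ a + (p : A) ^ 2 * (δ a) ^ 2 * S := by
  have hp3 : 3 ≤ p := by
    rcases hp.two_le.lt_or_eq with h | h
    · omega
    · exfalso; rw [← h] at hodd; exact (Nat.not_odd_iff_even.mpr (by decide)) hodd
  obtain ⟨q, hq⟩ : ∃ q, p = q + 3 := ⟨p - 3, by omega⟩
  obtain ⟨R, hR⟩ := aux_pow p δ hmul a (q + 1)
  obtain ⟨m, hm⟩ : p ∣ (q + 1 + 2).choose 2 := by
    have h : q + 1 + 2 = p := by omega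
    rw [h]
    exact hp.dvd_choose_self (by omega) (by omega)
  refine ⟨(m : A) * (a ^ p) ^ (q + 1) + R, ?_⟩
  have hpow : a ^ (q + 1 + 2) = a ^ p := by rw [hq]
  have hexp : (a ^ p) ^ (q + 1 + 1) = a ^ (p * (p - 1)) := by
    rw [← pow_mul]
    have h : p - 1 = q + 1 + 1 := by omega
    rw [h]
  rw [hpow] at hR
  rw [hR, hexp, hm]
  have hc : ((q : A) + 1) + 2 = (p : A) := by push_cast [hq]; ring
  push_cast
  rw [hq]
  push_cast
  ring

theorem stmt4 {A : Type*} [CommRing A] (p : ℕ) (hp : p.Prime) (hodd : Odd p)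
    (htf : ∀ a : A, (p : A) * a = 0 → a = 0)
    (δ : A → A)
    (hadd : ∀ a b : A, (p : A) * (δ (a + b) - δ a - δ b) = a ^ p + b ^ p - (a + b) ^ p)
    (hmul : ∀ a b : A, δ (a * b) = a ^ p * δ b + b ^ p * δ a + (p : A) * δ a * δ b)
    (f : A) (ν : ℕ) (hν : 1 ≤ ν) :
    ∃ Q : A, δ (f ^ p ^ ν) =
      (p : A) ^ ν * f ^ (p * (p ^ ν - 1)) * δ f + (p : A) ^ (ν + 1) * (δ f) ^ 2 * Q := by
  induction ν, hν using Nat.le_induction with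
  | base =>
    obtain ⟨S, hS⟩ := aux_p p hp hodd δ hmul f
    exact ⟨S, by simpa using hS⟩
  | succ ν hν ih =>
    obtain ⟨Q, hQ⟩ := ih
    set g := f ^ p ^ ν with hg
    obtain ⟨S, hS⟩ := aux_p p hp hodd δ hmul g
    obtain ⟨e, he⟩ : ∃ e, p ^ ν = e + 1 := ⟨p ^ ν - 1, by have := Nat.one_le_pow ν p hp.pos; omega⟩
    obtain ⟨r, hr⟩ : ∃ r, p = r + 1 := ⟨p - 1, by have := hp.pos; omega⟩
    refine ⟨g ^ (p * (p - 1)) * Q + (p : A) ^ ν * (f ^ (p * (p ^ ν - 1)) + (p : A) * δ f * Q) ^ 2 * S, ?_⟩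
    have hgp : g ^ p = f ^ p ^ (ν + 1) := by
      rw [hg, ← pow_mul, ← pow_succ]
    have hδg : δ g = (p : A) ^ ν * (f ^ (p * (p ^ ν - 1)) + (p : A) * δ f * Q) * δ f := by
      rw [hQ]; ring
    have hexp : g ^ (p * (p - 1)) * f ^ (p * (p ^ ν - 1)) = f ^ (p * (p ^ (ν + 1) - 1)) := by
      rw [hg, ← pow_mul, ← pow_add]
      congr 1
      have h4 : p ^ (ν + 1) = e * r + e + r + 1 := by rw [pow_succ, he, hr]; ring
      have h5 : p - 1 = r := by omega
      have h6 : p ^ ν - 1 = e := by omega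
      have h7 : p ^ (ν + 1) - 1 = e * r + e + r := by omega
      rw [h5, h6, h7, he, hr]
      ring
    rw [← hgp, hS, hδg, ← hexp]
    push_cast [pow_succ]
    ring
end

section
/- Fix an odd prime p and let ν ≥ 1. In the δ-polynomial ring A over ℤ_p: for 1 ≤ n ≤ ν one has δ^n(x^{p^ν}) ∈ A^{{0}} ∩ I^{[p^ν]}, and for n ≥ ν+1 one has δ^n(x^{p^ν}) ∈ A^{{n−ν}} ∩ I^{[p^ν]}. -/
open MvPolynomial

/-- The subring `A^n = ℤ_p[x, x', …, x^{(n)}]` of the δ-polynomial ring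
`A = MvPolynomial ℕ ℤ_[p]`, generated over `ℤ_p` by the variables `x^{(0)}, …, x^{(n)}`. -/
noncomputable def Asub (p : ℕ) [Fact p.Prime] (n : ℕ) : Subalgebra ℤ_[p] (MvPolynomial ℕ ℤ_[p]) :=
  Algebra.adjoin ℤ_[p] {f | ∃ i ≤ n, f = X i}

/-- The set `A^{{n}} = A^n + p·A^{n+1} + p²·A^{n+2} + …` of finite sums `Σ_s p^s·f_s`
with `f_s ∈ A^{n+s}`. -/
def Abrace (p : ℕ) [Fact p.Prime] (n : ℕ) : Set (MvPolynomial ℕ ℤ_[p]) :=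
  {a | ∃ (m : ℕ) (f : ℕ → MvPolynomial ℕ ℤ_[p]), (∀ s, f s ∈ Asub p (n + s)) ∧
    a = ∑ s ∈ Finset.range m, (p : MvPolynomial ℕ ℤ_[p]) ^ s * f s}

/-- The ideal `I^{[p^ν]}` of the δ-polynomial ring generated by
`{p^i·(x^{(s)})^{p^j} : s ≥ 1, i + j = ν}` (where `I = (x', x'', …)`). -/
noncomputable def Ibr (p : ℕ) [Fact p.Prime] (ν : ℕ) : Ideal (MvPolynomial ℕ ℤ_[p]) :=
  Ideal.span {g | ∃ s : ℕ, 1 ≤ s ∧ ∃ i j : ℕ, i + j = ν ∧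
    g = (p : MvPolynomial ℕ ℤ_[p]) ^ i * X s ^ p ^ j}

namespace Stmt6Aux

variable (p : ℕ) [Fact p.Prime]

/-- max variable index occurring in a monomial exponent vector -/
def Dd (d : ℕ →₀ ℕ) : ℕ := d.support.sup id

theorem Dd_add_le (d1 d2 : ℕ →₀ ℕ) : Dd (d1 + d2) ≤ max (Dd d1) (Dd d2) := by
  apply Finset.sup_le
  intro i hi
  have := Finsupp.support_add (g₁ := d1) (g₂ := d2) hi
  rcases Finset.mem_union.1 this with h | h
  · exact le_max_of_le_left (Finset.le_sup (f := id) h)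
  · exact le_max_of_le_right (Finset.le_sup (f := id) h)

/-- The filtration submodule: coefficient of each monomial `d` is divisible by
`p ^ (max (Dd d + a) b).toNat`. -/
noncomputable def SSm (a b : ℤ) : Submodule ℤ_[p] (MvPolynomial ℕ ℤ_[p]) where
  carrier := {f | ∀ d, (p : ℤ_[p]) ^ (max ((Dd d : ℤ) + a) b).toNat ∣ f.coeff d}
  add_mem' h1 h2 d := by simpa [coeff_add] using dvd_add (h1 d) (h2 d)
  zero_mem' d := by simp
  smul_mem' c f h d := by
    rw [coeff_smul]
    exact Dvd.dvd.mul_left (h d) c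

theorem mem_SSm_iff {a b : ℤ} {f : MvPolynomial ℕ ℤ_[p]} :
    f ∈ SSm p a b ↔ ∀ d, (p : ℤ_[p]) ^ (max ((Dd d : ℤ) + a) b).toNat ∣ f.coeff d :=
  Iff.rfl

theorem SSm_mono {a b a' b' : ℤ} (ha : a' ≤ a) (hb : b' ≤ b) : SSm p a b ≤ SSm p a' b' := by
  intro f hf d
  exact dvd_trans (pow_dvd_pow _ (by have := hf d; omega)) (hf d)

theorem monomial_mem_SSm {a b : ℤ} {d : ℕ →₀ ℕ} {c : ℤ_[p]}
    (h : (p : ℤ_[p]) ^ (max ((Dd d : ℤ) + a) b).toNat ∣ c) :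
    (monomial d c : MvPolynomial ℕ ℤ_[p]) ∈ SSm p a b := by
  intro d'
  rw [coeff_monomial]
  split
  · next heq => subst heq; exact h
  · exact dvd_zero _

theorem mul_mem_SSm {a b a' b' : ℤ} (hb : 0 ≤ b) (hb' : 0 ≤ b')
    {f g : MvPolynomial ℕ ℤ_[p]} (hf : f ∈ SSm p a b) (hg : g ∈ SSm p a' b') :
    f * g ∈ SSm p (min (a + b') (a' + b)) (b + b') := by
  intro d
  rw [coeff_mul]
  apply Finset.dvd_sum
  rintro ⟨d1, d2⟩ hmem
  have hd : d1 + d2 = d := Finset.HasAntidiagonal.mem_antidiagonal.1 hmem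
  have hD : Dd d ≤ max (Dd d1) (Dd d2) := hd ▸ Dd_add_le d1 d2
  have h1 := hf d1
  have h2 := hg d2
  have key : (max ((Dd d : ℤ) + min (a + b') (a' + b)) (b + b')).toNat ≤
      (max ((Dd d1 : ℤ) + a) b).toNat + (max ((Dd d2 : ℤ) + a') b').toNat := by
    omega
  calc (p : ℤ_[p]) ^ (max ((Dd d : ℤ) + min (a + b') (a' + b)) (b + b')).toNat
      ∣ (p : ℤ_[p]) ^ ((max ((Dd d1 : ℤ) + a) b).toNat + (max ((Dd d2 : ℤ) + a') b').toNat) :=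
        pow_dvd_pow _ key
    _ = (p : ℤ_[p]) ^ (max ((Dd d1 : ℤ) + a) b).toNat * (p : ℤ_[p]) ^ (max ((Dd d2 : ℤ) + a') b').toNat := pow_add _ _ _
    _ ∣ _ := mul_dvd_mul h1 h2

theorem mul_mem_SSm_self {a b : ℤ} (hb : 0 ≤ b)
    {f g : MvPolynomial ℕ ℤ_[p]} (hf : f ∈ SSm p a b) (hg : g ∈ SSm p a b) :
    f * g ∈ SSm p a b := by
  have := mul_mem_SSm p hb hb hf hg
  exact SSm_mono p (by omega) (by omega) this

theorem pow_mem_SSm {a b : ℤ} (hb : 0 ≤ b) {f : MvPolynomial ℕ ℤ_[p]}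
    (hf : f ∈ SSm p a b) : ∀ k, 1 ≤ k → f ^ k ∈ SSm p a b := by
  intro k hk
  induction k with
  | zero => omega
  | succ n ih =>
    rcases Nat.eq_or_lt_of_le hk with h | h
    · simpa [← h] using hf
    · have := ih (by omega)
      rw [pow_succ]
      exact mul_mem_SSm_self p hb this hf



noncomputable def Phi : ℕ → MvPolynomial ℕ ℤ_[p] := fun i => X i ^ p + (p : MvPolynomial ℕ ℤ_[p]) * X (i + 1)



theorem dvd_coeff_of_toZMod_zero {f : MvPolynomial ℕ ℤ_[p]}
    (h : map (PadicInt.toZMod : ℤ_[p] →+* ZMod p) f = 0) (d : ℕ →₀ ℕ) :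
    (p : ℤ_[p]) ∣ f.coeff d := by
  have : (PadicInt.toZMod : ℤ_[p] →+* ZMod p) (f.coeff d) = 0 := by
    have := congrArg (fun g => MvPolynomial.coeff d g) h
    simpa [coeff_map] using this
  have hk : f.coeff d ∈ RingHom.ker (PadicInt.toZMod : ℤ_[p] →+* ZMod p) := this
  rw [PadicInt.ker_toZMod, PadicInt.maximalIdeal_eq_span_p, Ideal.mem_span_singleton] at hk
  exact hk

theorem frob_dvd (f : MvPolynomial ℕ ℤ_[p]) (d : ℕ →₀ ℕ) :
    (p : ℤ_[p]) ∣ (aeval (Phi p) f - f ^ p).coeff d := by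
  apply dvd_coeff_of_toZMod_zero
  have h1 : map (PadicInt.toZMod : ℤ_[p] →+* ZMod p) (aeval (Phi p) f)
      = map (PadicInt.toZMod : ℤ_[p] →+* ZMod p) (f ^ p) := by
    have haev : aeval (Phi p) f = bind₁ (Phi p) f := rfl
    rw [haev, map_bind₁]
    have hPhi : ∀ i, map (PadicInt.toZMod : ℤ_[p] →+* ZMod p) (Phi p i)
        = X i ^ p := by
      intro i
      simp [Phi]
    simp only [hPhi]
    have hexp : bind₁ (fun i => (X i ^ p : MvPolynomial ℕ (ZMod p)))
        (map (PadicInt.toZMod : ℤ_[p] →+* ZMod p) f)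
        = expand p (map (PadicInt.toZMod : ℤ_[p] →+* ZMod p) f) := by
      rw [expand]
    rw [hexp, ← frobenius_zmod, frobenius_def, map_pow]
  rw [map_sub, h1, sub_self]

theorem exists_p_mul {f : MvPolynomial ℕ ℤ_[p]} (h : ∀ d, (p : ℤ_[p]) ∣ f.coeff d) :
    ∃ t : MvPolynomial ℕ ℤ_[p], f = (p : MvPolynomial ℕ ℤ_[p]) * t ∧
      ∀ d, t.coeff d ≠ 0 → f.coeff d ≠ 0 := by
  classical
  have hC : ((p : ℕ) : MvPolynomial ℕ ℤ_[p]) = C ((p : ℕ) : ℤ_[p]) := by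
    simp
  have hco : ∀ d', (f.support.sum (fun d => monomial d ((h d).choose))).coeff d'
      = if d' ∈ f.support then (h d').choose else 0 := by
    intro d'
    rw [coeff_sum]
    simp only [coeff_monomial]
    exact Finset.sum_ite_eq' f.support d' _
  refine ⟨f.support.sum (fun d => monomial d ((h d).choose)), ?_, ?_⟩
  · ext d'
    rw [hC, coeff_C_mul, hco]
    split
    · next hmem => exact (h d').choose_spec
    · next hmem =>
      rw [MvPolynomial.notMem_support_iff.1 hmem]
      ring
  · intro d hd
    rw [hco] at hd
    split at hd
    · next hmem => exact MvPolynomial.mem_support_iff.1 hmem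
    · exact absurd rfl hd


theorem Dd_smul_le (k : ℕ) (d : ℕ →₀ ℕ) : Dd (k • d) ≤ Dd d :=
  Finset.sup_le fun i hi => Finset.le_sup (f := id) (Finsupp.support_smul hi)

theorem fermat_padic (c : ℤ_[p]) : (p : ℤ_[p]) ∣ c - c ^ p := by
  have : (PadicInt.toZMod : ℤ_[p] →+* ZMod p) (c - c ^ p) = 0 := by
    rw [map_sub, map_pow, ZMod.pow_card, sub_self]
  have hk : c - c ^ p ∈ RingHom.ker (PadicInt.toZMod : ℤ_[p] →+* ZMod p) := this
  rw [PadicInt.ker_toZMod, PadicInt.maximalIdeal_eq_span_p, Ideal.mem_span_singleton] at hk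
  exact hk

theorem monomial_mem_supported {n : ℕ} {d : ℕ →₀ ℕ} {c : ℤ_[p]} (h : ∀ i ∈ d.support, i ≤ n) :
    (monomial d c : MvPolynomial ℕ ℤ_[p]) ∈ supported ℤ_[p] {i | i ≤ n} := by
  rw [monomial_eq]
  refine mul_mem (Subalgebra.algebraMap_mem _ c) ?_
  refine prod_mem fun i hi => pow_mem ?_ _
  exact (X_mem_supported).2 (h i hi)

theorem supported_coeff {n : ℕ} {f : MvPolynomial ℕ ℤ_[p]}
    (hf : f ∈ supported ℤ_[p] {i | i ≤ n}) {d : ℕ →₀ ℕ} (hd : f.coeff d ≠ 0) : Dd d ≤ n := by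
  rw [mem_supported] at hf
  refine Finset.sup_le fun i hi => ?_
  exact hf ((mem_vars i).2 ⟨d, mem_support_iff.2 hd, hi⟩)

theorem aevalPhi_monomial_mem (d : ℕ →₀ ℕ) :
    aeval (Phi p) (monomial d (1 : ℤ_[p])) ∈ supported ℤ_[p] {i | i ≤ Dd d + 1} := by
  rw [monomial_eq, map_mul]
  refine mul_mem ?_ ?_
  · simpa using one_mem (supported ℤ_[p] {i | i ≤ Dd d + 1})
  · rw [Finsupp.prod, map_prod]
    refine prod_mem fun i hi => ?_
    rw [map_pow, aeval_X]
    refine pow_mem ?_ _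
    have hi' : i ≤ Dd d := Finset.le_sup (f := id) hi
    refine add_mem (pow_mem ((X_mem_supported).2 ?_) _) (mul_mem ?_ ((X_mem_supported).2 ?_))
    · exact Nat.le_succ_of_le hi'
    · exact Subalgebra.natCast_mem _ p
    · simpa using Nat.succ_le_succ hi'

theorem prodlem (d : ℕ →₀ ℕ) :
    ∃ t : MvPolynomial ℕ ℤ_[p],
      aeval (Phi p) (monomial d (1 : ℤ_[p])) = (monomial d (1 : ℤ_[p])) ^ p + (p : MvPolynomial ℕ ℤ_[p]) * t ∧
      ∀ d', t.coeff d' ≠ 0 → Dd d' ≤ Dd d + 1 := by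
  obtain ⟨t, ht, hsupp⟩ := exists_p_mul p
    (f := aeval (Phi p) (monomial d (1 : ℤ_[p])) - (monomial d (1 : ℤ_[p])) ^ p) (frob_dvd p _)
  refine ⟨t, by rw [← ht]; ring, ?_⟩
  intro d' hd'
  have hne := hsupp d' hd'
  have hmem : aeval (Phi p) (monomial d (1 : ℤ_[p])) - (monomial d (1 : ℤ_[p])) ^ p
      ∈ supported ℤ_[p] {i | i ≤ Dd d + 1} := by
    refine sub_mem (aevalPhi_monomial_mem p d) ?_
    rw [monomial_pow]
    exact monomial_mem_supported p fun i hi =>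
      Nat.le_succ_of_le (Finset.le_sup (f := id) (Finsupp.support_smul hi))
  exact supported_coeff p hmem hne


theorem corr (u v : MvPolynomial ℕ ℤ_[p]) :
    ∃ w ∈ Submodule.span ℤ_[p] {x : MvPolynomial ℕ ℤ_[p] | ∃ k, 0 < k ∧ k < p ∧ x = u ^ k * v ^ (p - k)},
      (u + v) ^ p = u ^ p + v ^ p + (p : MvPolynomial ℕ ℤ_[p]) * w := by
  classical
  have hp2 : 2 ≤ p := (Fact.out : p.Prime).two_le
  refine ⟨∑ k ∈ Finset.Ioo 0 p, ((p.choose k / p : ℕ) : ℤ_[p]) • (u ^ k * v ^ (p - k)), ?_, ?_⟩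
  · exact Submodule.sum_smul_mem _ _ (fun k hk =>
      Submodule.subset_span ⟨k, (Finset.mem_Ioo.1 hk).1, (Finset.mem_Ioo.1 hk).2, rfl⟩)
  · rw [add_pow]
    have hsplit : Finset.range (p + 1) = insert 0 (insert p (Finset.Ioo 0 p)) := by
      ext k
      simp only [Finset.mem_range, Finset.mem_insert, Finset.mem_Ioo]
      omega
    rw [hsplit, Finset.sum_insert (by simp only [Finset.mem_insert, Finset.mem_Ioo]; omega),
        Finset.sum_insert (by simp only [Finset.mem_Ioo]; omega), Finset.mul_sum]
    simp only [pow_zero, one_mul, Nat.sub_zero, Nat.choose_zero_right, Nat.cast_one, mul_one,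
      Nat.sub_self, Nat.choose_self]
    rw [show ∀ x y z : MvPolynomial ℕ ℤ_[p], y + (x + z) = x + y + z from fun x y z => by ring]
    congr 1
    apply Finset.sum_congr rfl
    intro k hk
    obtain ⟨hk0, hkp⟩ := Finset.mem_Ioo.1 hk
    have hdvd : p ∣ p.choose k := Nat.Prime.dvd_choose_self (Fact.out) (by omega) hkp
    have hval : p * (p.choose k / p) = p.choose k := Nat.mul_div_cancel' hdvd
    rw [smul_eq_C_mul]
    rw [show ((p : ℕ) : MvPolynomial ℕ ℤ_[p]) = C ((p : ℕ) : ℤ_[p]) by simp]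
    rw [← mul_assoc, ← C_mul, ← Nat.cast_mul, hval]
    rw [show (C ((p.choose k : ℕ) : ℤ_[p]) : MvPolynomial ℕ ℤ_[p]) = ((p.choose k : ℕ) : MvPolynomial ℕ ℤ_[p]) by simp]
    ring

theorem key (δ : MvPolynomial ℕ ℤ_[p] → MvPolynomial ℕ ℤ_[p])
    (hadd : ∀ a b, (p : MvPolynomial ℕ ℤ_[p]) * (δ (a + b) - δ a - δ b)
      = a ^ p + b ^ p - (a + b) ^ p)
    (hmul : ∀ a b, δ (a * b) = a ^ p * δ b + b ^ p * δ a
      + (p : MvPolynomial ℕ ℤ_[p]) * δ a * δ b)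
    (hX : ∀ i, δ (X i) = X (i + 1))
    (hC : ∀ c : ℤ_[p], (p : MvPolynomial ℕ ℤ_[p]) * δ (C c) = C (c - c ^ p)) :
    ∀ f, aeval (Phi p) f = f ^ p + (p : MvPolynomial ℕ ℤ_[p]) * δ f := by
  intro f
  induction f using MvPolynomial.induction_on with
  | C c =>
    rw [aeval_C, hC c, ← C_pow]
    rw [show (algebraMap ℤ_[p] (MvPolynomial ℕ ℤ_[p])) c = C c from rfl, ← C_add]
    congr 1
    ring
  | add a b ha hb =>
    rw [map_add]
    linear_combination ha + hb - hadd a b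
  | mul_X q i ih =>
    rw [map_mul, aeval_X, hmul, hX, ih,
      show Phi p i = X i ^ p + (p : MvPolynomial ℕ ℤ_[p]) * X (i + 1) from rfl]
    ring



theorem p_mul_mem_SSm {a b : ℤ} {f : MvPolynomial ℕ ℤ_[p]} (hf : f ∈ SSm p a b) :
    (p : MvPolynomial ℕ ℤ_[p]) * f ∈ SSm p (a + 1) (b + 1) := by
  intro d
  rw [show ((p : ℕ) : MvPolynomial ℕ ℤ_[p]) = C ((p : ℕ) : ℤ_[p]) by simp, coeff_C_mul]
  calc (p : ℤ_[p]) ^ (max ((Dd d : ℤ) + (a + 1)) (b + 1)).toNat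
      ∣ (p : ℤ_[p]) ^ ((max ((Dd d : ℤ) + a) b).toNat + 1) := pow_dvd_pow _ (by omega)
    _ = (p : ℤ_[p]) * (p : ℤ_[p]) ^ (max ((Dd d : ℤ) + a) b).toNat := by rw [pow_succ]; ring
    _ ∣ (p : ℤ_[p]) * f.coeff d := mul_dvd_mul_left _ (hf d)

theorem L1 {a b : ℤ} (hb : 0 ≤ b) {f : MvPolynomial ℕ ℤ_[p]} (hf : f ∈ SSm p a b) :
    aeval (Phi p) f - f ^ p ∈ SSm p a (max b 1) := by
  classical
  have hp0 : p ≠ 0 := (Fact.out : p.Prime).ne_zero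
  suffices H : ∀ (s : Finset (ℕ →₀ ℕ)) (f : MvPolynomial ℕ ℤ_[p]), f ∈ SSm p a b → f.support ⊆ s →
      aeval (Phi p) f - f ^ p ∈ SSm p a (max b 1) from H f.support f hf subset_rfl
  intro s
  induction s using Finset.induction with
  | empty =>
    intro f hf hsupp
    have hf0 : f = 0 := by rwa [← support_eq_empty, ← Finset.subset_empty]
    subst hf0
    rw [map_zero, zero_pow hp0, sub_zero]
    exact zero_mem _
  | @insert d s hd ih =>
    intro f hf hsupp
    set c := f.coeff d with hc_def
    set u : MvPolynomial ℕ ℤ_[p] := monomial d c with hu_def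
    have hu : u ∈ SSm p a b := monomial_mem_SSm p (hf d)
    set v := f - u with hv_def
    have hv : v ∈ SSm p a b := Submodule.sub_mem _ hf hu
    have hvsupp : v.support ⊆ s := by
      intro d' hd'
      have h1 : v.coeff d' ≠ 0 := mem_support_iff.1 hd'
      have h2 : d' ≠ d := by
        intro h
        subst h
        apply h1
        simp [hv_def, hu_def, hc_def, coeff_monomial, coeff_sub]
      have h3 : f.coeff d' ≠ 0 := by
        intro h
        apply h1
        rw [hv_def, coeff_sub, h, hu_def, coeff_monomial, if_neg (fun hh => h2 hh.symm)]
        ring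
      rcases Finset.mem_insert.1 (hsupp (mem_support_iff.2 h3)) with h | h
      · exact absurd h h2
      · exact h
    obtain ⟨w, hwspan, hw⟩ := corr p u v
    have hfuv : f = u + v := by rw [hv_def]; ring
    obtain ⟨t, ht, htsupp⟩ := prodlem p d
    have hceq : u = C c * monomial d 1 := by rw [hu_def, C_mul_monomial, mul_one]
    have hM : (monomial d (1 : ℤ_[p])) ^ p = monomial (p • d) 1 := by
      rw [monomial_pow, one_pow]
    have hmon : (monomial (p • d) (c - c ^ p) : MvPolynomial ℕ ℤ_[p])
        = (C c - C (c ^ p)) * (monomial d (1 : ℤ_[p])) ^ p := by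
      rw [hM, ← map_sub C, C_mul_monomial, mul_one]
    have hGu_eq : aeval (Phi p) u - u ^ p
        = monomial (p • d) (c - c ^ p) + (p : MvPolynomial ℕ ℤ_[p]) * (C c * t) := by
      rw [hceq, map_mul, ht, hmon, mul_pow, ← C_pow]
      rw [show aeval (Phi p) (C c) = C c from aeval_C _ c]
      ring
    have hGu : aeval (Phi p) u - u ^ p ∈ SSm p a (max b 1) := by
      rw [hGu_eq]
      have he := hf d
      set e := (max ((Dd d : ℤ) + a) b).toNat with he_def
      refine Submodule.add_mem _ ?_ ?_
      · -- monomial (p • d) (c - c ^ p)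
        apply monomial_mem_SSm
        have h1 : (p : ℤ_[p]) ^ (max e 1) ∣ c - c ^ p := by
          rcases Nat.eq_zero_or_pos e with h | h
          · rw [h]
            simpa using fermat_padic p c
          · rw [show max e 1 = e by omega]
            exact dvd_sub he (he.trans (dvd_pow_self c hp0))
        refine dvd_trans (pow_dvd_pow _ ?_) h1
        have hDd : Dd (p • d) ≤ Dd d := Dd_smul_le p d
        omega
      · -- p * (C c * t)
        intro d'
        rw [show ((p : ℕ) : MvPolynomial ℕ ℤ_[p]) = C ((p : ℕ) : ℤ_[p]) by simp,
          coeff_C_mul, coeff_C_mul]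
        by_cases hz : t.coeff d' = 0
        · rw [hz]
          simp
        · have hDd' : Dd d' ≤ Dd d + 1 := htsupp d' hz
          calc (p : ℤ_[p]) ^ (max ((Dd d' : ℤ) + a) (max b 1)).toNat
              ∣ (p : ℤ_[p]) ^ (e + 1) := pow_dvd_pow _ (by omega)
            _ = (p : ℤ_[p]) * (p : ℤ_[p]) ^ e := by rw [pow_succ]; ring
            _ ∣ (p : ℤ_[p]) * c := mul_dvd_mul_left _ he
            _ ∣ (p : ℤ_[p]) * (c * t.coeff d') := ⟨t.coeff d', by ring⟩
    have hsplit : aeval (Phi p) f - f ^ p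
        = (aeval (Phi p) u - u ^ p) + (aeval (Phi p) v - v ^ p)
          - (p : MvPolynomial ℕ ℤ_[p]) * w := by
      rw [hfuv, map_add, hw]
      ring
    rw [hsplit]
    refine Submodule.sub_mem _ (Submodule.add_mem _ hGu (ih v hv hvsupp)) ?_
    have hwmem : w ∈ SSm p a b := by
      refine Submodule.span_le.2 ?_ hwspan
      rintro x ⟨k, hk0, hkp, rfl⟩
      exact mul_mem_SSm_self p hb (pow_mem_SSm p hb hu k hk0)
        (pow_mem_SSm p hb hv (p - k) (by omega))
    exact SSm_mono p (by omega) (by omega) (p_mul_mem_SSm p hwmem)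

theorem choose_val {j m : ℕ} (hm1 : 1 ≤ m) (hm2 : m ≤ p ^ j) :
    p ^ (j - m.factorization p) ∣ (p ^ j).choose m := by
  have hp : p.Prime := Fact.out
  set v := m.factorization p with hv
  have hvm : p ^ v ∣ m := Nat.ordProj_dvd m p
  have hpv : p ^ v ≤ m := Nat.le_of_dvd (by omega) hvm
  have hvj : v ≤ j := by
    by_contra h
    have : p ^ j < p ^ v := Nat.pow_lt_pow_right hp.one_lt (by omega)
    omega
  -- p^j * choose (p^j - 1) (m - 1) = choose (p^j) m * m
  have habs : p ^ j * Nat.choose (p ^ j - 1) (m - 1) = (p ^ j).choose m * m := by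
    have := Nat.add_one_mul_choose_eq (p ^ j - 1) (m - 1)
    have hpj : 1 ≤ p ^ j := Nat.one_le_pow _ _ hp.pos
    rw [show p ^ j - 1 + 1 = p ^ j by omega, show m - 1 + 1 = m by omega] at this
    omega
  have hdvd : p ^ j ∣ (p ^ j).choose m * m := ⟨_, habs.symm⟩
  set m' := m / p ^ v with hm'
  have hmm : m = p ^ v * m' := (Nat.ordProj_mul_ordCompl_eq_self m p).symm
  have hndvd : ¬ p ∣ m' := Nat.not_dvd_ordCompl hp (by omega)
  have hco : Nat.Coprime (p ^ (j - v)) m' :=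
    Nat.Coprime.pow_left _ ((Nat.Prime.coprime_iff_not_dvd hp).2 hndvd)
  have h2 : p ^ (j - v) * p ^ v ∣ ((p ^ j).choose m * m') * p ^ v := by
    rw [← pow_add]
    rw [show j - v + v = j by omega]
    calc (p:ℕ) ^ j ∣ (p ^ j).choose m * m := hdvd
      _ = (p ^ j).choose m * m' * p ^ v := by rw [hmm]; ring
  have h3 : p ^ (j - v) ∣ (p ^ j).choose m * m' :=
    (Nat.mul_dvd_mul_iff_right (pow_pos hp.pos v)).1 h2
  exact hco.dvd_of_dvd_mul_right h3


noncomputable def wBin (s j : ℕ) : MvPolynomial ℕ ℤ_[p] :=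
  ∑ k ∈ Finset.range (p ^ j),
    ((p ^ j).choose k : MvPolynomial ℕ ℤ_[p]) * (p : MvPolynomial ℕ ℤ_[p]) ^ (p ^ j - k - 1)
      * X s ^ (p * k) * X (s + 1) ^ (p ^ j - k)

theorem binom_eq (s j : ℕ) :
    (X s ^ p + (p : MvPolynomial ℕ ℤ_[p]) * X (s + 1)) ^ (p ^ j)
      = X s ^ (p ^ (j + 1)) + (p : MvPolynomial ℕ ℤ_[p]) * wBin p s j := by
  have hp : p.Prime := Fact.out
  rw [add_pow, Finset.sum_range_succ]
  rw [show ∀ x y : MvPolynomial ℕ ℤ_[p], x + y = y + x from fun x y => by ring]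
  congr 1
  · rw [Nat.sub_self, Nat.choose_self]
    rw [← pow_mul, show p * p ^ j = p ^ (j + 1) by rw [pow_succ]; ring]
    simp
  · rw [wBin, Finset.mul_sum]
    apply Finset.sum_congr rfl
    intro k hk
    have hk' : k < p ^ j := Finset.mem_range.1 hk
    rw [mul_pow, ← pow_mul]
    have hpk : (p : MvPolynomial ℕ ℤ_[p]) * (p : MvPolynomial ℕ ℤ_[p]) ^ (p ^ j - k - 1)
        = (p : MvPolynomial ℕ ℤ_[p]) ^ (p ^ j - k) := by
      rw [← pow_succ']
      congr 1
      omega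
    linear_combination (-(X s ^ (p * k) * X (s + 1) ^ (p ^ j - k)
      * (((p ^ j).choose k : ℕ) : MvPolynomial ℕ ℤ_[p]))) * hpk

theorem wBin_term_mem_Ibr (s j i ν k : ℕ) (hij : i + j = ν) (hk : k < p ^ j) :
    (p : MvPolynomial ℕ ℤ_[p]) ^ i *
      (((p ^ j).choose k : MvPolynomial ℕ ℤ_[p]) * (p : MvPolynomial ℕ ℤ_[p]) ^ (p ^ j - k - 1)
        * X s ^ (p * k) * X (s + 1) ^ (p ^ j - k)) ∈ Ibr p ν := by
  have hp : p.Prime := Fact.out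
  set m := p ^ j - k with hm
  have hm1 : 1 ≤ m := by omega
  have hm2 : m ≤ p ^ j := by omega
  set v := m.factorization p with hv
  have hvm : p ^ v ∣ m := Nat.ordProj_dvd m p
  have hpv : p ^ v ≤ m := Nat.le_of_dvd (by omega) hvm
  have hvj : v ≤ j := by
    by_contra h
    have : p ^ j < p ^ v := Nat.pow_lt_pow_right hp.one_lt (by omega)
    omega
  set j' := min v ν with hj'
  have hgen : (p : MvPolynomial ℕ ℤ_[p]) ^ (ν - j') * X (s + 1) ^ (p ^ j') ∈ Ibr p ν :=
    Ideal.subset_span ⟨s + 1, by omega, ν - j', j', by omega, rfl⟩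
  obtain ⟨c, hc⟩ := choose_val p hm1 hm2
  have hchoose : ((p ^ j).choose k) = (p ^ j).choose m := by
    rw [hm, Nat.choose_symm (by omega)]
  have hdvd1 : (p : MvPolynomial ℕ ℤ_[p]) ^ (ν - j') ∣
      (p : MvPolynomial ℕ ℤ_[p]) ^ i * ((p ^ j).choose k : MvPolynomial ℕ ℤ_[p])
        * (p : MvPolynomial ℕ ℤ_[p]) ^ (m - 1) := by
    rw [hchoose, hc]
    push_cast
    rw [show (p : MvPolynomial ℕ ℤ_[p]) ^ i * ((p:MvPolynomial ℕ ℤ_[p]) ^ (j - v) * (c:MvPolynomial ℕ ℤ_[p])) * (p : MvPolynomial ℕ ℤ_[p]) ^ (m - 1)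
        = (p : MvPolynomial ℕ ℤ_[p]) ^ (i + (j - v) + (m - 1)) * (c : MvPolynomial ℕ ℤ_[p]) by
      rw [pow_add, pow_add]; ring]
    exact Dvd.dvd.mul_right (pow_dvd_pow _ (by omega)) _
  have hdvd2 : X (s + 1) ^ (p ^ j') ∣ (X (s + 1) : MvPolynomial ℕ ℤ_[p]) ^ m := by
    refine pow_dvd_pow _ ?_
    calc p ^ j' ≤ p ^ v := Nat.pow_le_pow_right hp.one_lt.le (by omega)
      _ ≤ m := hpv
  obtain ⟨r, hr⟩ := mul_dvd_mul hdvd1 hdvd2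
  have hgoal : (p : MvPolynomial ℕ ℤ_[p]) ^ i *
      (((p ^ j).choose k : MvPolynomial ℕ ℤ_[p]) * (p : MvPolynomial ℕ ℤ_[p]) ^ (m - 1)
        * X s ^ (p * k) * X (s + 1) ^ m)
      = (p : MvPolynomial ℕ ℤ_[p]) ^ i * ((p ^ j).choose k : MvPolynomial ℕ ℤ_[p])
          * (p : MvPolynomial ℕ ℤ_[p]) ^ (m - 1) * X (s + 1) ^ m * X s ^ (p * k) := by
    ring
  rw [hgoal, hr]
  exact Ideal.mul_mem_right _ _ (Ideal.mul_mem_right _ _ hgen)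

theorem wBin_mem_Ibr (s j i ν : ℕ) (hij : i + j = ν) :
    (p : MvPolynomial ℕ ℤ_[p]) ^ i * wBin p s j ∈ Ibr p ν := by
  rw [wBin, Finset.mul_sum]
  exact Ideal.sum_mem _ fun k hk =>
    wBin_term_mem_Ibr p s j i ν k hij (Finset.mem_range.1 hk)

theorem wBin_mem_SSm (j : ℕ) : wBin p 0 j ∈ SSm p ((j : ℤ) - 1) ((j : ℤ) - 1) := by
  have hp : p.Prime := Fact.out
  rw [wBin]
  refine Submodule.sum_mem _ fun k hk => ?_
  have hk' : k < p ^ j := Finset.mem_range.1 hk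
  set m := p ^ j - k with hm
  have hm1 : 1 ≤ m := by omega
  have hm2 : m ≤ p ^ j := by omega
  set v := m.factorization p with hv
  have hvm : p ^ v ∣ m := Nat.ordProj_dvd m p
  have hpv : p ^ v ≤ m := Nat.le_of_dvd (by omega) hvm
  have hvlt : v < p ^ v := Nat.lt_pow_self hp.one_lt (n := v)
  obtain ⟨c, hc⟩ := choose_val p hm1 hm2
  have hvj : v ≤ j := by
    by_contra h
    have : p ^ j < p ^ v := Nat.pow_lt_pow_right hp.one_lt (by omega)
    omega
  have hterm : (((p ^ j).choose k : ℕ) : MvPolynomial ℕ ℤ_[p])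
        * (p : MvPolynomial ℕ ℤ_[p]) ^ (m - 1) * X 0 ^ (p * k) * X 1 ^ m
      = monomial (Finsupp.single 0 (p * k) + Finsupp.single 1 m)
          ((((p ^ j).choose k * p ^ (m - 1) : ℕ)) : ℤ_[p]) := by
    rw [X_pow_eq_monomial, X_pow_eq_monomial]
    rw [show (((p ^ j).choose k : ℕ) : MvPolynomial ℕ ℤ_[p]) * (p : MvPolynomial ℕ ℤ_[p]) ^ (m - 1)
        = C ((((p ^ j).choose k * p ^ (m - 1) : ℕ)) : ℤ_[p]) by push_cast; simp]
    rw [C_mul_monomial, monomial_mul, mul_one, mul_one]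
  rw [hterm]
  apply monomial_mem_SSm
  have hD : Dd (Finsupp.single 0 (p * k) + Finsupp.single 1 m) ≤ 1 := by
    apply Finset.sup_le
    intro i hi
    simp only [id_eq]
    rcases Finset.mem_union.1 (Finsupp.support_add hi) with h | h
    · have := Finsupp.support_single_subset h
      simp only [Finset.mem_singleton] at this
      omega
    · have := Finsupp.support_single_subset h
      simp only [Finset.mem_singleton] at this
      omega
  have hnat : (p : ℕ) ^ j ∣ (p ^ j).choose k * p ^ (m - 1) := by
    rw [show (p ^ j).choose k = (p ^ j).choose m by rw [hm, Nat.choose_symm (by omega)], hc]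
    calc (p : ℕ) ^ j ∣ p ^ (j - v + (m - 1)) := pow_dvd_pow _ (by omega)
      _ = p ^ (j - v) * p ^ (m - 1) := pow_add _ _ _
      _ ∣ p ^ (j - v) * c * p ^ (m - 1) := ⟨c, by ring⟩
  refine dvd_trans (pow_dvd_pow (p : ℤ_[p]) (n := j) (by omega)) ?_
  exact_mod_cast Nat.cast_dvd_cast (α := ℤ_[p]) hnat

theorem pA_ne_zero : (p : MvPolynomial ℕ ℤ_[p]) ≠ 0 := by
  have hp : p.Prime := Fact.out
  exact Nat.cast_ne_zero.2 hp.ne_zero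

theorem div_SSm {a b : ℤ} {g : MvPolynomial ℕ ℤ_[p]}
    (h : (p : MvPolynomial ℕ ℤ_[p]) * g ∈ SSm p a b) : g ∈ SSm p (a - 1) (b - 1) := by
  have hp : p.Prime := Fact.out
  have hpz : (p : ℤ_[p]) ≠ 0 := Nat.cast_ne_zero.2 hp.ne_zero
  intro d
  have hd := h d
  rw [show ((p : ℕ) : MvPolynomial ℕ ℤ_[p]) = C ((p : ℕ) : ℤ_[p]) by simp, coeff_C_mul] at hd
  by_cases hcase : max ((Dd d : ℤ) + a) b ≤ 0
  · rw [show (max ((Dd d : ℤ) + (a - 1)) (b - 1)).toNat = 0 by omega, pow_zero]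
    exact one_dvd _
  · have hE : (max ((Dd d : ℤ) + a) b).toNat = (max ((Dd d : ℤ) + (a - 1)) (b - 1)).toNat + 1 := by
      omega
    rw [hE, pow_succ'] at hd
    exact (mul_dvd_mul_iff_left hpz).1 hd

theorem Ibr_stab {ν : ℕ} {f : MvPolynomial ℕ ℤ_[p]} (hf : f ∈ Ibr p ν) :
    ∃ w ∈ Ibr p ν, aeval (Phi p) f - f ^ p = (p : MvPolynomial ℕ ℤ_[p]) * w := by
  have hp : p.Prime := Fact.out
  have hp0 : p ≠ 0 := hp.ne_zero
  refine Submodule.span_induction ?_ ?_ ?_ ?_ hf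
  · -- generators
    rintro g ⟨s, hs, i, j, hij, rfl⟩
    have hGg : aeval (Phi p) ((p : MvPolynomial ℕ ℤ_[p]) ^ i * X s ^ p ^ j)
        = (p : MvPolynomial ℕ ℤ_[p]) ^ i * (X s ^ (p ^ (j + 1)) + (p : MvPolynomial ℕ ℤ_[p]) * wBin p s j) := by
      rw [map_mul, map_pow, map_pow, aeval_X, map_natCast]
      rw [show Phi p s = X s ^ p + (p : MvPolynomial ℕ ℤ_[p]) * X (s + 1) from rfl]
      rw [binom_eq p s j]
    have hpow : ((p : MvPolynomial ℕ ℤ_[p]) ^ i * X s ^ p ^ j) ^ p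
        = (p : MvPolynomial ℕ ℤ_[p]) ^ (i * p) * X s ^ (p ^ (j + 1)) := by
      rw [mul_pow, ← pow_mul, ← pow_mul, pow_succ]
    rcases Nat.eq_zero_or_pos i with hi | hi
    · refine ⟨wBin p s j, by simpa using wBin_mem_Ibr p s j 0 ν (by omega), ?_⟩
      rw [hGg, hpow, hi]
      ring
    · refine ⟨(p : MvPolynomial ℕ ℤ_[p]) ^ i * wBin p s j
        + ((p : MvPolynomial ℕ ℤ_[p]) ^ (i - 1) - (p : MvPolynomial ℕ ℤ_[p]) ^ (i * p - 1)) * X s ^ (p ^ (j + 1)), ?_, ?_⟩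
      · refine Submodule.add_mem _ (wBin_mem_Ibr p s j i ν hij) ?_
        have hile : i ≤ i * p := Nat.le_mul_of_pos_right i hp.pos
        have hgen2 : (p : MvPolynomial ℕ ℤ_[p]) ^ (i - 1) * X s ^ (p ^ (j + 1)) ∈ Ibr p ν :=
          Ideal.subset_span ⟨s, hs, i - 1, j + 1, by omega, rfl⟩
        have hsplit : ((p : MvPolynomial ℕ ℤ_[p]) ^ (i - 1) - (p : MvPolynomial ℕ ℤ_[p]) ^ (i * p - 1)) * X s ^ (p ^ (j + 1))
            = (1 - (p : MvPolynomial ℕ ℤ_[p]) ^ (i * p - i)) * ((p : MvPolynomial ℕ ℤ_[p]) ^ (i - 1) * X s ^ (p ^ (j + 1))) := by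
          have : (p : MvPolynomial ℕ ℤ_[p]) ^ (i * p - 1) = (p : MvPolynomial ℕ ℤ_[p]) ^ (i * p - i) * (p : MvPolynomial ℕ ℤ_[p]) ^ (i - 1) := by
            rw [← pow_add]
            congr 1
            have h2 : 2 ≤ p := hp.two_le
            have : i * 2 ≤ i * p := Nat.mul_le_mul_left i h2
            omega
          rw [this]
          ring
        rw [hsplit]
        exact Ideal.mul_mem_left _ _ hgen2
      · rw [hGg, hpow]
        have e1 : (p : MvPolynomial ℕ ℤ_[p]) ^ i = (p : MvPolynomial ℕ ℤ_[p]) * (p : MvPolynomial ℕ ℤ_[p]) ^ (i - 1) := by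
          rw [← pow_succ']
          congr 1
          omega
        have hile : i ≤ i * p := Nat.le_mul_of_pos_right i hp.pos
        have e2 : (p : MvPolynomial ℕ ℤ_[p]) ^ (i * p) = (p : MvPolynomial ℕ ℤ_[p]) * (p : MvPolynomial ℕ ℤ_[p]) ^ (i * p - 1) := by
          rw [← pow_succ']
          congr 1
          omega
        calc (p : MvPolynomial ℕ ℤ_[p]) ^ i * (X s ^ p ^ (j + 1) + (p : MvPolynomial ℕ ℤ_[p]) * wBin p s j)
            - (p : MvPolynomial ℕ ℤ_[p]) ^ (i * p) * X s ^ p ^ (j + 1)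
            = (p : MvPolynomial ℕ ℤ_[p]) * ((p : MvPolynomial ℕ ℤ_[p]) ^ i * wBin p s j)
              + ((p : MvPolynomial ℕ ℤ_[p]) ^ i - (p : MvPolynomial ℕ ℤ_[p]) ^ (i * p)) * X s ^ p ^ (j + 1) := by ring
          _ = _ := by rw [e1, e2]; ring
  · exact ⟨0, zero_mem _, by rw [map_zero, zero_pow hp0, mul_zero, sub_zero]⟩
  · rintro x y hxI hyI ⟨wx, hwx, hx⟩ ⟨wy, hwy, hy⟩
    obtain ⟨wc, hwc, hcorr⟩ := corr p x y
    have hwcI : wc ∈ Ibr p ν := by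
      have hsub : {z : MvPolynomial ℕ ℤ_[p] | ∃ k, 0 < k ∧ k < p ∧ z = x ^ k * y ^ (p - k)}
          ⊆ (Submodule.restrictScalars ℤ_[p] (Ibr p ν) : Set (MvPolynomial ℕ ℤ_[p])) := by
        rintro z ⟨k, hk0, hkp, rfl⟩
        exact Ideal.mul_mem_right _ _ (Ideal.pow_mem_of_mem _ hxI k hk0)
      exact Submodule.span_le.2 hsub hwc
    refine ⟨wx + wy - wc, Submodule.sub_mem _ (Submodule.add_mem _ hwx hwy) hwcI, ?_⟩
    rw [map_add, hcorr]
    rw [show aeval (Phi p) x = x ^ p + (p : MvPolynomial ℕ ℤ_[p]) * wx by rw [← hx]; ring,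
        show aeval (Phi p) y = y ^ p + (p : MvPolynomial ℕ ℤ_[p]) * wy by rw [← hy]; ring]
    ring
  · rintro r x hxI ⟨wx, hwx, hx⟩
    obtain ⟨t, ht, -⟩ := exists_p_mul p (f := aeval (Phi p) r - r ^ p) (frob_dvd p r)
    refine ⟨t * x ^ p + aeval (Phi p) r * wx,
      Submodule.add_mem _ (Ideal.mul_mem_left _ _ (Ideal.pow_mem_of_mem _ hxI p hp.pos))
        (Ideal.mul_mem_left _ _ hwx), ?_⟩
    rw [smul_eq_mul, map_mul, mul_pow]
    rw [show aeval (Phi p) x = x ^ p + (p : MvPolynomial ℕ ℤ_[p]) * wx by rw [← hx]; ring,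
        show aeval (Phi p) r = r ^ p + (p : MvPolynomial ℕ ℤ_[p]) * t by rw [← ht]; ring]
    ring

theorem monomial_mem_Asub {n : ℕ} {d : ℕ →₀ ℕ} (c : ℤ_[p]) (h : Dd d ≤ n) :
    (monomial d c : MvPolynomial ℕ ℤ_[p]) ∈ Asub p n := by
  rw [monomial_eq]
  refine mul_mem ?_ ?_
  · exact Subalgebra.algebraMap_mem _ c
  · refine prod_mem fun i hi => pow_mem ?_ _
    exact Algebra.subset_adjoin ⟨i, le_trans (Finset.le_sup (f := id) hi) h, rfl⟩

theorem zero_mem_Abrace (n : ℕ) : (0 : MvPolynomial ℕ ℤ_[p]) ∈ Abrace p n :=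
  ⟨0, fun _ => 0, fun _ => zero_mem _, by simp⟩

theorem add_mem_Abrace {n : ℕ} {x y : MvPolynomial ℕ ℤ_[p]}
    (hx : x ∈ Abrace p n) (hy : y ∈ Abrace p n) : x + y ∈ Abrace p n := by
  obtain ⟨m1, f, hf, rfl⟩ := hx
  obtain ⟨m2, g, hg, rfl⟩ := hy
  have key : ∀ (m M : ℕ) (f : ℕ → MvPolynomial ℕ ℤ_[p]), m ≤ M →
      ∑ s ∈ Finset.range M, (p : MvPolynomial ℕ ℤ_[p]) ^ s * (if s < m then f s else 0)
        = ∑ s ∈ Finset.range m, (p : MvPolynomial ℕ ℤ_[p]) ^ s * f s := by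
    intro m M f hm
    rw [← Finset.sum_subset (Finset.range_subset_range.2 hm)
      (fun x _ hx => by rw [if_neg (by simpa using hx), mul_zero])]
    exact Finset.sum_congr rfl fun s hs => by rw [if_pos (Finset.mem_range.1 hs)]
  refine ⟨max m1 m2, (fun s => (if s < m1 then f s else 0) + (if s < m2 then g s else 0)),
    fun s => add_mem (by split <;> [exact hf s; exact zero_mem _])
      (by split <;> [exact hg s; exact zero_mem _]), ?_⟩
  have : ∀ s, (p : MvPolynomial ℕ ℤ_[p]) ^ s * ((if s < m1 then f s else 0) + (if s < m2 then g s else 0))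
      = (p : MvPolynomial ℕ ℤ_[p]) ^ s * (if s < m1 then f s else 0)
        + (p : MvPolynomial ℕ ℤ_[p]) ^ s * (if s < m2 then g s else 0) := fun s => by ring
  rw [Finset.sum_congr rfl (fun s _ => this s), Finset.sum_add_distrib,
    key m1 (max m1 m2) f (le_max_left _ _), key m2 (max m1 m2) g (le_max_right _ _)]

theorem SSm_to_Abrace {n : ℕ} {f : MvPolynomial ℕ ℤ_[p]} (hf : f ∈ SSm p (-(n : ℤ)) 0) :
    f ∈ Abrace p n := by
  classical
  suffices H : ∀ (s : Finset (ℕ →₀ ℕ)) (f : MvPolynomial ℕ ℤ_[p]), f ∈ SSm p (-(n : ℤ)) 0 →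
      f.support ⊆ s → f ∈ Abrace p n from H f.support f hf subset_rfl
  intro s
  induction s using Finset.induction with
  | empty =>
    intro f _ hsupp
    have hf0 : f = 0 := by rwa [← support_eq_empty, ← Finset.subset_empty]
    rw [hf0]
    exact zero_mem_Abrace p n
  | @insert d s hd ih =>
    intro f hf hsupp
    set c := f.coeff d with hc_def
    set u : MvPolynomial ℕ ℤ_[p] := monomial d c with hu_def
    have hu : u ∈ SSm p (-(n : ℤ)) 0 := monomial_mem_SSm p (hf d)
    set v := f - u with hv_def
    have hv : v ∈ SSm p (-(n : ℤ)) 0 := Submodule.sub_mem _ hf hu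
    have hvsupp : v.support ⊆ s := by
      intro d' hd'
      have h1 : v.coeff d' ≠ 0 := mem_support_iff.1 hd'
      have h2 : d' ≠ d := by
        intro h
        subst h
        apply h1
        simp [hv_def, hu_def, hc_def, coeff_monomial, coeff_sub]
      have h3 : f.coeff d' ≠ 0 := by
        intro h
        apply h1
        rw [hv_def, coeff_sub, h, hu_def, coeff_monomial, if_neg (fun hh => h2 hh.symm)]
        ring
      rcases Finset.mem_insert.1 (hsupp (mem_support_iff.2 h3)) with h | h
      · exact absurd h h2
      · exact h
    have humem : u ∈ Abrace p n := by
      set s0 := (max ((Dd d : ℤ) + -(n : ℤ)) 0).toNat with hs0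
      obtain ⟨c', hc'⟩ := hf d
      rw [← hs0] at hc'
      have hDd : Dd d ≤ n + s0 := by omega
      refine ⟨s0 + 1, (fun t => if t = s0 then monomial d c' else 0), ?_, ?_⟩
      · intro t
        dsimp only
        split
        · next h => exact monomial_mem_Asub p c' (by omega)
        · exact zero_mem _
      · have hsum : ∑ t ∈ Finset.range (s0 + 1), (p : MvPolynomial ℕ ℤ_[p]) ^ t
            * (if t = s0 then monomial d c' else (0 : MvPolynomial ℕ ℤ_[p]))
            = (p : MvPolynomial ℕ ℤ_[p]) ^ s0 * monomial d c' := by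
          rw [Finset.sum_congr rfl (fun t _ => by
            rw [show (p : MvPolynomial ℕ ℤ_[p]) ^ t * (if t = s0 then monomial d c' else 0)
              = (if t = s0 then (p : MvPolynomial ℕ ℤ_[p]) ^ t * monomial d c' else 0) from by
                split <;> simp])]
          rw [Finset.sum_ite_eq' (Finset.range (s0 + 1)) s0]
          rw [if_pos (Finset.mem_range.2 (by omega))]
        rw [hsum, show ((p : ℕ) : MvPolynomial ℕ ℤ_[p]) ^ s0
            = C (((p : ℕ) : ℤ_[p]) ^ s0) by rw [map_pow]; simp, C_mul_monomial,
          hu_def, hc_def, hc']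
    have huv : u + v = f := by rw [hv_def]; ring
    rw [← huv]
    exact add_mem_Abrace p humem (ih v hv hvsupp)

end Stmt6Aux

open Stmt6Aux in
theorem stmt6 (p : ℕ) [Fact p.Prime] (hodd : Odd p)
    (δ : MvPolynomial ℕ ℤ_[p] → MvPolynomial ℕ ℤ_[p])
    (hadd : ∀ a b, (p : MvPolynomial ℕ ℤ_[p]) * (δ (a + b) - δ a - δ b)
      = a ^ p + b ^ p - (a + b) ^ p)
    (hmul : ∀ a b, δ (a * b) = a ^ p * δ b + b ^ p * δ a
      + (p : MvPolynomial ℕ ℤ_[p]) * δ a * δ b)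
    (hX : ∀ i, δ (X i) = X (i + 1))
    (hC : ∀ c : ℤ_[p], (p : MvPolynomial ℕ ℤ_[p]) * δ (C c) = C (c - c ^ p))
    (ν : ℕ) (hν : 1 ≤ ν) :
    (∀ n, 1 ≤ n → n ≤ ν → δ^[n] (X 0 ^ p ^ ν) ∈ Abrace p 0 ∩ ↑(Ibr p ν)) ∧
    (∀ n, ν + 1 ≤ n → δ^[n] (X 0 ^ p ^ ν) ∈ Abrace p (n - ν) ∩ ↑(Ibr p ν)) := by
  have hp : p.Prime := Fact.out
  have hkey := key p δ hadd hmul hX hC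
  have hGf : ∀ f, aeval (Phi p) f - f ^ p = (p : MvPolynomial ℕ ℤ_[p]) * δ f := fun f => by
    rw [hkey f]; ring
  have hpA : (p : MvPolynomial ℕ ℤ_[p]) ≠ 0 := pA_ne_zero p
  have deltaSSm : ∀ (a b : ℤ), 0 ≤ b → ∀ f, f ∈ SSm p a b →
      δ f ∈ SSm p (a - 1) ((max b 1) - 1) := by
    intro a b hb f hf
    apply div_SSm
    rw [← hGf f]
    exact L1 p hb hf
  have deltaIbr : ∀ f, f ∈ Ibr p ν → δ f ∈ Ibr p ν := by
    intro f hf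
    obtain ⟨w, hw, heq⟩ := Ibr_stab p hf
    have hcanc : (p : MvPolynomial ℕ ℤ_[p]) * δ f = (p : MvPolynomial ℕ ℤ_[p]) * w := by
      rw [← hGf f, heq]
    rwa [mul_left_cancel₀ hpA hcanc]
  have hbase : δ (X 0 ^ p ^ ν) = wBin p 0 ν := by
    apply mul_left_cancel₀ hpA
    rw [← hGf]
    rw [map_pow, aeval_X]
    rw [show Phi p 0 = X 0 ^ p + (p : MvPolynomial ℕ ℤ_[p]) * X (0 + 1) from rfl]
    rw [binom_eq p 0 ν, ← pow_mul, show (p : ℕ) ^ ν * p = p ^ (ν + 1) from by rw [pow_succ]]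
    ring
  have main1 : ∀ n, 1 ≤ n → n ≤ ν →
      δ^[n] (X 0 ^ p ^ ν) ∈ SSm p ((ν : ℤ) - n) ((ν : ℤ) - n) ∧
        δ^[n] (X 0 ^ p ^ ν) ∈ Ibr p ν := by
    intro n
    induction n with
    | zero => omega
    | succ n ih =>
      intro h1 h2
      rcases Nat.eq_zero_or_pos n with hn | hn
      · subst hn
        rw [show (0 + 1 : ℕ) = 1 from rfl, Function.iterate_one, hbase]
        constructor
        · have := wBin_mem_SSm p ν
          have hcast : ((ν : ℤ) - ((0 + 1 : ℕ) : ℤ)) = (ν : ℤ) - 1 := by push_cast; ring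
          rw [hcast]
          exact this
        · simpa using wBin_mem_Ibr p 0 ν 0 ν (by omega)
      · obtain ⟨hS, hI⟩ := ih hn (by omega)
        rw [Function.iterate_succ_apply']
        refine ⟨?_, deltaIbr _ hI⟩
        have hstep := deltaSSm ((ν : ℤ) - n) ((ν : ℤ) - n) (by omega) _ hS
        have hmax : max ((ν : ℤ) - n) 1 = (ν : ℤ) - n := by omega
        rw [hmax] at hstep
        have hcast : ((ν : ℤ) - ((n + 1 : ℕ) : ℤ)) = ((ν : ℤ) - n) - 1 := by push_cast; ring
        rw [hcast]
        exact hstep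
  have main2 : ∀ k : ℕ, δ^[ν + k] (X 0 ^ p ^ ν) ∈ SSm p (-(k : ℤ)) 0 ∧
      δ^[ν + k] (X 0 ^ p ^ ν) ∈ Ibr p ν := by
    intro k
    induction k with
    | zero =>
      obtain ⟨hS, hI⟩ := main1 ν hν le_rfl
      rw [Nat.add_zero]
      exact ⟨SSm_mono p (by push_cast; omega) (by push_cast; omega) hS, hI⟩
    | succ k ih =>
      obtain ⟨hS, hI⟩ := ih
      rw [show ν + (k + 1) = (ν + k) + 1 from rfl, Function.iterate_succ_apply']
      refine ⟨?_, deltaIbr _ hI⟩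
      have hstep := deltaSSm (-(k : ℤ)) 0 le_rfl _ hS
      have hmax : max (0 : ℤ) 1 = 1 := by omega
      rw [hmax] at hstep
      have hcast : (-((k + 1 : ℕ) : ℤ)) = -(k : ℤ) - 1 := by push_cast; ring
      rw [hcast]
      simpa using hstep
  refine ⟨?_, ?_⟩
  · intro n h1 h2
    obtain ⟨hS, hI⟩ := main1 n h1 h2
    refine ⟨?_, hI⟩
    apply SSm_to_Abrace p (n := 0)
    exact SSm_mono p (by push_cast; omega) (by omega) hS
  · intro n hn
    obtain ⟨hS, hI⟩ := main2 (n - ν)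
    rw [show ν + (n - ν) = n from by omega] at hS hI
    exact ⟨SSm_to_Abrace p hS, hI⟩
end

section
/- Fix an odd prime p. In the δ-polynomial ring A over ℤ_p, for every n ≥ 0 the element δ^n(x^p) lies in the ℤ_p-subalgebra of A generated by x^p, x', x'', …, x^{(n)}. -/
open MvPolynomial

theorem stmt8 (p : ℕ) [Fact p.Prime] (hodd : Odd p)
    (δ : MvPolynomial ℕ ℤ_[p] → MvPolynomial ℕ ℤ_[p])
    (hadd : ∀ a b, (p : MvPolynomial ℕ ℤ_[p]) * (δ (a + b) - δ a - δ b)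
      = a ^ p + b ^ p - (a + b) ^ p)
    (hmul : ∀ a b, δ (a * b) = a ^ p * δ b + b ^ p * δ a
      + (p : MvPolynomial ℕ ℤ_[p]) * δ a * δ b)
    (hX : ∀ i, δ (X i) = X (i + 1))
    (hC : ∀ c : ℤ_[p], (p : MvPolynomial ℕ ℤ_[p]) * δ (C c) = C (c - c ^ p))
    (n : ℕ) :
    δ^[n] (X 0 ^ p) ∈ Algebra.adjoin ℤ_[p]
      ({X 0 ^ p} ∪ {f : MvPolynomial ℕ ℤ_[p] | ∃ i, 1 ≤ i ∧ i ≤ n ∧ f = X i}) := by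
  have hp : p.Prime := Fact.out
  have hp0 : (p : MvPolynomial ℕ ℤ_[p]) ≠ 0 := by
    exact_mod_cast Nat.cast_ne_zero.mpr hp.ne_zero
  set S : ℕ → Set (MvPolynomial ℕ ℤ_[p]) := fun m =>
    ({X 0 ^ p} ∪ {f : MvPolynomial ℕ ℤ_[p] | ∃ i, 1 ≤ i ∧ i ≤ m ∧ f = X i}) with hS
  set B : ℕ → Subalgebra ℤ_[p] (MvPolynomial ℕ ℤ_[p]) := fun m => Algebra.adjoin ℤ_[p] (S m)
    with hB
  have hmono : ∀ m, B m ≤ B (m + 1) := fun m => Algebra.adjoin_mono (by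
    rintro f (hf | ⟨i, h1, h2, rfl⟩)
    · exact Or.inl hf
    · exact Or.inr ⟨i, h1, h2.trans (Nat.le_succ m), rfl⟩)
  -- δ of C c is algebraic constant
  have hδC : ∀ c : ℤ_[p], ∃ d : ℤ_[p], δ (C c) = C d := by
    intro c
    have hdvd : (p : ℤ_[p]) ∣ c - c ^ p := by
      rw [← Ideal.mem_span_singleton, ← PadicInt.maximalIdeal_eq_span_p,
        ← PadicInt.ker_toZMod, RingHom.mem_ker, map_sub, map_pow, ZMod.pow_card, sub_self]
    obtain ⟨d, hd⟩ := hdvd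
    refine ⟨d, mul_left_cancel₀ hp0 ?_⟩
    rw [hC c, hd, map_mul, map_natCast]
  -- δ of a sum
  have hδadd : ∀ a b, δ (a + b) = δ a + δ b
      - ∑ k ∈ Finset.Ioo 0 p, a ^ k * b ^ (p - k) * ((p.choose k / p : ℕ) :
        MvPolynomial ℕ ℤ_[p]) := by
    intro a b
    have h := hadd a b
    rw [add_pow_prime_eq' hp a b] at h
    apply mul_left_cancel₀ hp0
    linear_combination h
  -- δ of X 0 ^ (k+1)
  have hδXp : ∀ k : ℕ, δ (X 0 ^ (k + 1)) ∈ B 1 := by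
    intro k
    induction k with
    | zero =>
      rw [zero_add, pow_one, hX 0]
      exact Algebra.subset_adjoin (Or.inr ⟨1, le_refl 1, le_refl 1, rfl⟩)
    | succ k ih =>
      have hx0 : (X 0 : MvPolynomial ℕ ℤ_[p]) ^ p ∈ B 1 :=
        Algebra.subset_adjoin (Or.inl rfl)
      have hx1 : (X 1 : MvPolynomial ℕ ℤ_[p]) ∈ B 1 :=
        Algebra.subset_adjoin (Or.inr ⟨1, le_refl 1, le_refl 1, rfl⟩)
      have : (X 0 : MvPolynomial ℕ ℤ_[p]) ^ (k + 1 + 1) = X 0 ^ (k + 1) * X 0 := by ring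
      rw [this, hmul, hX 0]
      refine add_mem (add_mem ?_ ?_) ?_
      · exact mul_mem (by rw [← pow_mul, mul_comm, pow_mul]; exact pow_mem hx0 _) hx1
      · exact mul_mem hx0 ih
      · exact mul_mem (mul_mem (Subalgebra.natCast_mem _ p) ih) hx1
  -- key: δ maps B m into B (m+1)
  have key : ∀ m, ∀ a ∈ B m, δ a ∈ B (m + 1) := by
    intro m a ha
    induction ha using Algebra.adjoin_induction with
    | mem f hf =>
      rcases hf with hf | ⟨i, h1, h2, rfl⟩
      · rw [Set.mem_singleton_iff] at hf; subst hf
        have hppos := hp.pos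
        have : (X 0 : MvPolynomial ℕ ℤ_[p]) ^ p = X 0 ^ ((p - 1) + 1) := by
          congr 1; omega
        rw [this]
        have h1m : B 1 ≤ B (m + 1) := by
          have : ∀ j, B 1 ≤ B (j + 1) := by
            intro j; induction j with
            | zero => exact le_refl _
            | succ j ih => exact ih.trans (hmono (j + 1))
          exact this m
        exact h1m (hδXp (p - 1))
      · rw [hX i]
        exact Algebra.subset_adjoin (Or.inr ⟨i + 1, by omega, by omega, rfl⟩)
    | algebraMap c =>
      obtain ⟨d, hd⟩ := hδC c
      rw [MvPolynomial.algebraMap_eq, hd]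
      exact Subalgebra.algebraMap_mem _ d
    | add a b ha hb iha ihb =>
      rw [hδadd a b]
      have ha' : a ∈ B (m + 1) := hmono m ha
      have hb' : b ∈ B (m + 1) := hmono m hb
      refine sub_mem (add_mem iha ihb) (Subalgebra.sum_mem _ fun k _ => ?_)
      exact mul_mem (mul_mem (pow_mem ha' _) (pow_mem hb' _)) (Subalgebra.natCast_mem _ _)
    | mul a b ha hb iha ihb =>
      rw [hmul a b]
      have ha' : a ∈ B (m + 1) := hmono m ha
      have hb' : b ∈ B (m + 1) := hmono m hb
      exact add_mem (add_mem (mul_mem (pow_mem ha' p) ihb) (mul_mem (pow_mem hb' p) iha))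
        (mul_mem (mul_mem (Subalgebra.natCast_mem _ p) iha) ihb)
  -- conclude by induction on n
  show δ^[n] (X 0 ^ p) ∈ B n
  induction n with
  | zero => exact Algebra.subset_adjoin (Or.inl rfl)
  | succ n ih =>
    rw [Function.iterate_succ_apply']
    exact key n _ ih
end

section
/- Fix an odd prime p, let ν ≥ 1 and n ≥ 1, and let π denote reduction of coefficients modulo p from the δ-polynomial ring A over ℤ_p to MvPolynomial ℕ (ZMod p). Consider the ideal J_n of MvPolynomial ℕ (ZMod p) generated by x^{p^ν} − 1 together with π(δ^m(x^{p^ν})) for 1 ≤ m ≤ n. Then J_n = (x^{p^ν} − 1) if n ≤ ν, and J_n = (x^{p^ν} − 1, (x')^{p^ν}, (x'')^{p^ν}, …, (x^{(n−ν)})^{p^ν}) if n ≥ ν + 1. (This is the computation of the mod-p reduction of the ring of global functions of the n-th p-jet space of μ_{p^ν}, the kernel of multiplication by p^ν on the multiplicative group.) -/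
open MvPolynomial Finset

section Binomials
variable {R : Type*} [CommRing R]

private lemma natmul_pow_pred (x : R) (n : ℕ) : (n:R) * x^(n-1) * x = n * x^n := by
  cases n with
  | zero => simp
  | succ m =>
    have : (m+1) - 1 = m := rfl
    rw [this, mul_assoc, ← pow_succ]

/-- (x+y)^n = x^n + n x^{n-1} y + y^2 D -/
lemma bin_n (x y : R) (n : ℕ) : ∃ D, (x+y)^n = x^n + n*x^(n-1)*y + y^2*D := by
  induction n with
  | zero => exact ⟨0, by simp⟩
  | succ m ih =>
    obtain ⟨D, hD⟩ := ih
    refine ⟨(m:R) * x^(m-1) + D*(x+y), ?_⟩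
    have h1 : (x+y)^(m+1) = (x+y)^m * (x+y) := by ring
    rw [h1, hD]
    have h2 : (m:R) * x^(m-1) * y * x = (m:R)*x^m*y := by
      rw [show (m:R) * x^(m-1) * y * x = ((m:R) * x^(m-1) * x) * y by ring,
        natmul_pow_pred]
    calc (x^m + ↑m*x^(m-1)*y + y^2*D) * (x+y)
        = x^m*x + x^m*y + (↑m * x^(m-1) * y * x) + (↑m*x^(m-1))*y^2 + y^2*(D*(x+y)) := by ring
      _ = x^(m+1) + ((m:R)+1)*x^m*y + y^2*(↑m * x^(m-1) + D*(x+y)) := by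
          rw [h2, ← pow_succ]; ring
      _ = x^(m+1) + ((m+1:ℕ):R)*x^m*y + y^2*(↑m * x^(m-1) + D*(x+y)) := by push_cast; ring

variable (p : ℕ) [hfp : Fact p.Prime]

private lemma choose_cast (k : ℕ) (hk1 : k ≠ 0) (hk2 : k < p) :
    (p.choose k : R) = (p:R) * ((p.choose k / p : ℕ) : R) := by
  have hdvd : p ∣ p.choose k := Nat.Prime.dvd_choose_self hfp.out hk1 hk2
  conv_lhs => rw [← Nat.mul_div_cancel' hdvd]
  push_cast
  ring

/-- (x+y)^p = x^p + y^p + p·x·y·D -/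
lemma bin_p_sym (x y : R) : ∃ D, (x+y)^p = x^p + y^p + (p:R)*(x*(y*D)) := by
  obtain ⟨m, hm⟩ : ∃ m, p = m + 2 := ⟨p - 2, by have := hfp.out.two_le; omega⟩
  refine ⟨∑ k ∈ Finset.range (m+1), x^k * y^(m-k) * ((p.choose (k+1) / p : ℕ) : R), ?_⟩
  subst hm
  rw [add_pow, Finset.sum_range_succ, Finset.sum_range_succ']
  have hmid : ∀ k ∈ Finset.range (m+1),
      x^(k+1) * y^(m+2-(k+1)) * ((m+2).choose (k+1) : R)
      = ((m+2:ℕ):R) * (x * (y * (x^k * y^(m-k) * ((((m+2).choose (k+1)) / (m+2) : ℕ) : R)))) := by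
    intro k hk
    simp only [Finset.mem_range] at hk
    rw [choose_cast (m+2) (k+1) (by omega) (by omega)]
    have hy : y^(m+2-(k+1)) = y * y^(m-k) := by
      rw [← pow_succ']
      congr 1
      omega
    rw [hy]; ring
  rw [Finset.sum_congr rfl hmid]
  simp only [Nat.choose_self, Nat.cast_one, mul_one, Nat.sub_self, pow_zero,
    Nat.choose_zero_right, Nat.sub_zero, one_mul]
  rw [Finset.mul_sum, Finset.mul_sum, Finset.mul_sum]
  ring

/-- (x+y)^p = x^p + p x^{p-1} y + p y² D + y^p -/
lemma bin_p_main (x y : R) : ∃ D, (x+y)^p = x^p + (p:R)*(x^(p-1)*y) + (p:R)*(y^2*D) + y^p := by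
  obtain ⟨m, hm⟩ : ∃ m, p = m + 2 := ⟨p - 2, by have := hfp.out.two_le; omega⟩
  refine ⟨∑ k ∈ Finset.range m, x^(k+1) * y^(m-1-k) * ((p.choose (k+1) / p : ℕ) : R), ?_⟩
  subst hm
  rw [add_pow, Finset.sum_range_succ, Finset.sum_range_succ, Finset.sum_range_succ']
  -- Σ_{k∈range m} f(k+1) + f 0 + f(m+1) + f(m+2)
  have hmid : ∀ k ∈ Finset.range m,
      x^(k+1) * y^(m+2-(k+1)) * ((m+2).choose (k+1) : R)
      = ((m+2:ℕ):R) * (y^2 * (x^(k+1) * y^(m-1-k) * ((((m+2).choose (k+1)) / (m+2) : ℕ) : R))) := by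
    intro k hk
    simp only [Finset.mem_range] at hk
    rw [choose_cast (m+2) (k+1) (by omega) (by omega)]
    have hy : y^(m+2-(k+1)) = y^2 * y^(m-1-k) := by
      rw [← pow_add]
      congr 1
      omega
    rw [hy]; ring
  rw [Finset.sum_congr rfl hmid]
  have hc1 : ((m+2).choose (m+1) : R) = ((m+2:ℕ):R) := by
    rw [Nat.choose_succ_self_right]
  have hc2 : ((m+2).choose (m+2) : R) = 1 := by rw [Nat.choose_self]; norm_num
  rw [hc1, hc2]
  have he1 : m+2-(m+1) = 1 := by omega
  have he2 : (m+2:ℕ) - (m+2) = 0 := by omega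
  rw [he1, he2]
  have he3 : (m+1 : ℕ) = (m+2)-1 := by omega
  rw [← he3]
  simp only [Nat.choose_zero_right, Nat.sub_zero, pow_zero, pow_one, Nat.cast_one]
  rw [Finset.mul_sum, Finset.mul_sum]
  ring

end Binomials
section Bin1
variable {R : Type*} [CommRing R] (p : ℕ) [hfp : Fact p.Prime]

lemma exp_key {p : ℕ} (hp : 1 ≤ p) (k : ℕ) : p^k*(p-1) + (p^k-1) = p^(k+1)-1 := by
  obtain ⟨p', rfl⟩ : ∃ p', p = p'+1 := ⟨p-1, by omega⟩
  have h1 : 1 ≤ (p'+1)^k := Nat.one_le_pow _ _ (by omega)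
  have h2 : (p'+1)^(k+1) = (p'+1)^k*(p'+1) := pow_succ _ _
  have h3 : (p'+1)^k*(p'+1) = (p'+1)^k*p' + (p'+1)^k := by ring
  have h4 : (p'+1)^k*(p'+1-1) = (p'+1)^k*p' := by norm_num
  omega

lemma exp_key2 {p : ℕ} (hp : 1 ≤ p) (k : ℕ) : p*(p^k-1) = p^(k+1)-p := by
  have h1 : 1 ≤ p^k := Nat.one_le_pow _ _ (by omega)
  have h2 : p^(k+1) = p*p^k := by rw [pow_succ]; ring
  obtain ⟨q, hq⟩ : ∃ q, p^k = q+1 := ⟨p^k-1, by omega⟩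
  rw [hq] at h2 ⊢
  simp only [Nat.add_sub_cancel]
  have : p*(q+1) = p*q+p := by ring
  omega

/-- (a+pb)^{p^k} = a^{p^k} + p^{k+1} a^{p^k-1} b + p^{k+2} b² J -/
lemma bin1 (hp3 : 3 ≤ p) (a b : R) (k : ℕ) :
    ∃ J, (a + (p:R)*b)^(p^k)
      = a^(p^k) + (p:R)^(k+1)*(a^(p^k-1)*b) + (p:R)^(k+2)*(b^2*J) := by
  have hp1 : 1 ≤ p := by omega
  induction k with
  | zero =>
    refine ⟨0, ?_⟩
    simp [pow_one]
  | succ k ih =>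
    obtain ⟨J, hJ⟩ := ih
    obtain ⟨D, hD⟩ :=
      bin_p_main p (a^(p^k)) ((p:R)^(k+1)*(a^(p^k-1)*b + (p:R)*(b^2*J)))
    refine ⟨a^(p^k*(p-1))*J + (p:R)^k*((a^(p^k-1) + (p:R)*(b*J))^2*D)
      + (p:R)^((k+1)*p-(k+3))*(b^(p-2)*(a^(p^k-1) + (p:R)*(b*J))^p), ?_⟩
    have hsplit : (a + (p:R)*b)^(p^k)
        = a^(p^k) + (p:R)^(k+1)*(a^(p^k-1)*b + (p:R)*(b^2*J)) := by
      rw [hJ]; ring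
    have h0 : (a + (p:R)*b)^(p^(k+1)) = ((a + (p:R)*b)^(p^k))^p := by
      rw [← pow_mul, pow_succ]
    rw [h0, hsplit, hD]
    have e1 : (a^(p^k))^p = a^(p^(k+1)) := by rw [← pow_mul, ← pow_succ]
    have e2 : (a^(p^k))^(p-1) = a^(p^k*(p-1)) := by rw [← pow_mul]
    have e3 : a^(p^k*(p-1)) * a^(p^k-1) = a^(p^(k+1)-1) := by
      rw [← pow_add, exp_key hp1]
    have hle : k+3 ≤ (k+1)*p := by nlinarith
    have e5 : ((p:R)^(k+1))^p = (p:R)^(k+3) * (p:R)^((k+1)*p-(k+3)) := by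
      rw [← pow_mul, ← pow_add]
      congr 1
      omega
    have e9 : b^p = b^2*b^(p-2) := by rw [← pow_add]; congr 1; omega
    have e10 : (a^(p^k-1)*b + (p:R)*(b^2*J))^p
        = b^p * (a^(p^k-1) + (p:R)*(b*J))^p := by
      rw [← mul_pow]; congr 1; ring
    have eT4 : ((p:R)^(k+1)*(a^(p^k-1)*b + (p:R)*(b^2*J)))^p
        = (p:R)^(k+3)*((p:R)^((k+1)*p-(k+3))
            *(b^2*(b^(p-2)*(a^(p^k-1) + (p:R)*(b*J))^p))) := by
      rw [mul_pow, e5, e10, e9]; ring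
    linear_combination e1 + ((p:R)^(k+2)*(a^(p^k-1)*b) + (p:R)^(k+3)*(b^2*J))*e2
      + ((p:R)^(k+2)*b)*e3 + eT4
end Bin1
section Driver
variable (p : ℕ) [hfp : Fact p.Prime]

/-- The Frobenius lift on the δ-polynomial ring. -/
noncomputable def Phi : MvPolynomial ℕ ℤ_[p] →ₐ[ℤ_[p]] MvPolynomial ℕ ℤ_[p] :=
  bind₁ (fun i => X i ^ p + (p : MvPolynomial ℕ ℤ_[p]) * X (i+1))

lemma Phi_X (i : ℕ) : Phi p (X i) = X i ^ p + (p : MvPolynomial ℕ ℤ_[p]) * X (i+1) :=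
  bind₁_X_right _ i

lemma Phi_C (c : ℤ_[p]) : Phi p (C c) = C c := bind₁_C_right _ c

lemma Phi_nat (c : ℕ) : Phi p ((p : MvPolynomial ℕ ℤ_[p])^c) = (p : MvPolynomial ℕ ℤ_[p])^c := by
  rw [map_pow, map_natCast]

lemma pA_ne : (p : MvPolynomial ℕ ℤ_[p]) ≠ 0 :=
  Nat.cast_ne_zero.mpr hfp.out.ne_zero

lemma pcancel {x y : MvPolynomial ℕ ℤ_[p]}
    (h : (p : MvPolynomial ℕ ℤ_[p])*x = (p : MvPolynomial ℕ ℤ_[p])*y) : x = y :=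
  mul_left_cancel₀ (pA_ne p) h

lemma Phi_Xpow (hp3 : 3 ≤ p) (i k : ℕ) :
    ∃ J, Phi p (X i^(p^k)) = X i^(p^(k+1))
      + (p : MvPolynomial ℕ ℤ_[p])^(k+1)*(X i^(p^(k+1)-p)*X (i+1))
      + (p : MvPolynomial ℕ ℤ_[p])^(k+2)*((X (i+1))^2*J) := by
  obtain ⟨J, hJ⟩ := bin1 p hp3 (X i^p : MvPolynomial ℕ ℤ_[p]) (X (i+1)) k
  refine ⟨J, ?_⟩
  rw [map_pow, Phi_X, hJ, ← pow_mul, ← pow_mul, ← pow_succ', exp_key2 (by omega) k]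

variable (δ : MvPolynomial ℕ ℤ_[p] → MvPolynomial ℕ ℤ_[p])
    (hadd : ∀ a b, (p : MvPolynomial ℕ ℤ_[p]) * (δ (a + b) - δ a - δ b)
      = a ^ p + b ^ p - (a + b) ^ p)
    (hmul : ∀ a b, δ (a * b) = a ^ p * δ b + b ^ p * δ a
      + (p : MvPolynomial ℕ ℤ_[p]) * δ a * δ b)
    (hX : ∀ i, δ (X i) = X (i + 1))
    (hC : ∀ c : ℤ_[p], (p : MvPolynomial ℕ ℤ_[p]) * δ (C c) = C (c - c ^ p))

include hadd hmul hX hC in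
/-- fundamental driver: p δf = Φ f − f^p -/
lemma hP : ∀ f, (p : MvPolynomial ℕ ℤ_[p]) * δ f = Phi p f - f^p := by
  intro f
  induction f using MvPolynomial.induction_on with
  | C c =>
    rw [Phi_C, hC, map_sub, map_pow]
  | add f g hf hg =>
    rw [map_add]
    linear_combination (hadd f g) + hf + hg
  | mul_X f i hf =>
    rw [hmul, hX, map_mul, Phi_X, mul_pow]
    linear_combination ((X i)^p + (p : MvPolynomial ℕ ℤ_[p])*X (i+1)) * hf

section UseDriver
variable (hP' : ∀ f, (p : MvPolynomial ℕ ℤ_[p]) * δ f = Phi p f - f^p)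
include hP'

lemma delta_zero_s10 : δ 0 = 0 := by
  apply pcancel p
  rw [hP' 0]
  simp [zero_pow hfp.out.ne_zero]

lemma delta_add_s10 (x y : MvPolynomial ℕ ℤ_[p]) :
    ∃ D, δ (x+y) = δ x + δ y + x*(y*D) := by
  obtain ⟨D, hD⟩ := bin_p_sym p x y
  refine ⟨-D, ?_⟩
  apply pcancel p
  rw [hP', map_add]
  have h1 := hP' x
  have h2 := hP' y
  linear_combination -h1 - h2 - hD

lemma delta_pmul (c : ℕ) (hc : 1 ≤ c) (y : MvPolynomial ℕ ℤ_[p]) :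
    δ ((p : MvPolynomial ℕ ℤ_[p])^c*y)
      = (p : MvPolynomial ℕ ℤ_[p])^(c-1)*(Phi p y)
        - (p : MvPolynomial ℕ ℤ_[p])^(c*p-1)*y^p := by
  apply pcancel p
  rw [hP', map_mul, Phi_nat, mul_pow, ← pow_mul]
  have e1 : (p : MvPolynomial ℕ ℤ_[p])^c
      = (p : MvPolynomial ℕ ℤ_[p])*(p : MvPolynomial ℕ ℤ_[p])^(c-1) := by
    rw [← pow_succ']; congr 1; omega
  have e2 : (p : MvPolynomial ℕ ℤ_[p])^(c*p)
      = (p : MvPolynomial ℕ ℤ_[p])*(p : MvPolynomial ℕ ℤ_[p])^(c*p-1) := by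
    rw [← pow_succ']; congr 1
    have : 1 ≤ c*p := by have := hfp.out.two_le; nlinarith
    omega
  linear_combination (Phi p y) * e1 - y^p * e2


lemma delta_Xpow (hp3 : 3 ≤ p) (i k : ℕ) :
    ∃ J, δ (X i^(p^k))
      = (p : MvPolynomial ℕ ℤ_[p])^k*(X i^(p^(k+1)-p)*X (i+1))
      + (p : MvPolynomial ℕ ℤ_[p])^(k+1)*((X (i+1))^2*J) := by
  obtain ⟨J, hJ⟩ := Phi_Xpow p hp3 i k
  refine ⟨J, ?_⟩
  apply pcancel p
  rw [hP', hJ, ← pow_mul, ← pow_succ]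
  ring

end UseDriver
end Driver
section Buckets
variable (p : ℕ) [hfp : Fact p.Prime] (ν : ℕ)

/-- the bucket ideal 𝔇_t -/
noncomputable def Dd (t : ℕ) : Ideal (MvPolynomial ℕ ℤ_[p]) :=
  Ideal.span {r | ∃ i k, 1 ≤ i ∧ k ≤ ν ∧ i + k ≤ t ∧
    r = (p : MvPolynomial ℕ ℤ_[p])^(ν-k) * (X i)^(p^k)}

lemma Dd_mono {t t' : ℕ} (h : t ≤ t') : Dd p ν t ≤ Dd p ν t' := by
  apply Ideal.span_mono
  rintro r ⟨i, k, h1, h2, h3, rfl⟩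
  exact ⟨i, k, h1, h2, by omega, rfl⟩

lemma Dd_mem_factor {t i k a e : ℕ} (h1 : 1 ≤ i) (h2 : k ≤ ν) (h3 : i+k ≤ t)
    (ha : ν-k ≤ a) (he : p^k ≤ e) (w : MvPolynomial ℕ ℤ_[p]) :
    (p : MvPolynomial ℕ ℤ_[p])^a * ((X i)^e * w) ∈ Dd p ν t := by
  have key : (p : MvPolynomial ℕ ℤ_[p])^a * ((X i)^e * w)
      = ((p : MvPolynomial ℕ ℤ_[p])^(ν-k) * (X i)^(p^k))
        * ((p : MvPolynomial ℕ ℤ_[p])^(a-(ν-k)) * ((X i)^(e-p^k) * w)) := by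
    rw [show ((p : MvPolynomial ℕ ℤ_[p])^(ν-k) * (X i)^(p^k))
        * ((p : MvPolynomial ℕ ℤ_[p])^(a-(ν-k)) * ((X i)^(e-p^k) * w))
      = ((p : MvPolynomial ℕ ℤ_[p])^(ν-k) * (p : MvPolynomial ℕ ℤ_[p])^(a-(ν-k)))
        * (((X i)^(p^k) * (X i)^(e-p^k)) * w) by ring, ← pow_add, ← pow_add]
    congr 3 <;> omega
  rw [key]
  exact Ideal.mul_mem_right _ _ (Ideal.subset_span ⟨i, k, h1, h2, h3, rfl⟩)

variable (δ : MvPolynomial ℕ ℤ_[p] → MvPolynomial ℕ ℤ_[p])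
    (hP' : ∀ f, (p : MvPolynomial ℕ ℤ_[p]) * δ f = Phi p f - f^p)
include hP'

/-- the δ-closure lemma for spans -/
lemma delta_span {S : Set (MvPolynomial ℕ ℤ_[p])} {I : Ideal (MvPolynomial ℕ ℤ_[p])}
    (hmul : ∀ a b, δ (a * b) = a ^ p * δ b + b ^ p * δ a
      + (p : MvPolynomial ℕ ℤ_[p]) * δ a * δ b)
    (hSI : ∀ r ∈ S, r ∈ I) (hSd : ∀ r ∈ S, δ r ∈ I) :
    ∀ x ∈ Ideal.span S, δ x ∈ I := by
  have hspan : Ideal.span S ≤ I := Ideal.span_le.mpr hSI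
  intro x hx
  induction hx using Submodule.span_induction with
  | mem r hr => exact hSd r hr
  | zero => rw [delta_zero_s10 p δ hP']; exact I.zero_mem
  | add x y hx hy ihx ihy =>
    obtain ⟨D, hD⟩ := delta_add_s10 p δ hP' x y
    rw [hD]
    exact add_mem (add_mem ihx ihy)
      (Ideal.mul_mem_right _ _ (hspan hx))
  | smul a x hx ihx =>
    rw [smul_eq_mul, hmul a x]
    refine add_mem (add_mem ?_ ?_) ?_
    · exact Ideal.mul_mem_left _ _ ihx
    · exact Ideal.mul_mem_right _ _ (I.pow_mem_of_mem (hspan hx) p hfp.out.pos)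
    · exact Ideal.mul_mem_left _ _ ihx

/-- δ of a bucket generator climbs into the next bucket ideal -/
lemma delta_gen (hp3 : 3 ≤ p) {t i k : ℕ} (h1 : 1 ≤ i) (h2 : k ≤ ν) (h3 : i+k ≤ t) :
    δ ((p : MvPolynomial ℕ ℤ_[p])^(ν-k) * (X i)^(p^k)) ∈ Dd p ν (t+1) := by
  rcases Nat.lt_or_ge k ν with hkν | hkν
  · -- k < ν
    have hc : 1 ≤ ν - k := by omega
    rw [delta_pmul p δ hP' (ν-k) hc ((X i)^(p^k))]
    obtain ⟨J, hJ⟩ := Phi_Xpow p hp3 i k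
    rw [hJ, ← pow_mul, ← pow_succ]
    have hcp : (ν-k) ≤ (ν-k)*p := Nat.le_mul_of_pos_right _ (by omega)
    have m1 : (p : MvPolynomial ℕ ℤ_[p])^(ν-k-1) * ((X i)^(p^(k+1)) * 1) ∈ Dd p ν (t+1) :=
      Dd_mem_factor p ν h1 (show k+1 ≤ ν by omega) (by omega) (by omega) le_rfl 1
    have m2 : (p : MvPolynomial ℕ ℤ_[p])^(ν-k-1+(k+1)) * ((X (i+1))^1 * ((X i)^(p^(k+1)-p))) ∈ Dd p ν (t+1) :=
      Dd_mem_factor p ν (show 1 ≤ i+1 by omega) (show 0 ≤ ν by omega) (by omega)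
        (by omega) (by simp) _
    have m3 : (p : MvPolynomial ℕ ℤ_[p])^(ν-k-1+(k+2)) * ((X (i+1))^2 * J) ∈ Dd p ν (t+1) :=
      Dd_mem_factor p ν (show 1 ≤ i+1 by omega) (show 0 ≤ ν by omega) (by omega)
        (by omega) (by simp) _
    have m4 : (p : MvPolynomial ℕ ℤ_[p])^((ν-k)*p-1) * ((X i)^(p^(k+1)) * 1) ∈ Dd p ν (t+1) :=
      Dd_mem_factor p ν h1 (show k+1 ≤ ν by omega) (by omega) (by omega) le_rfl 1
    have expand : (p : MvPolynomial ℕ ℤ_[p])^(ν-k-1)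
        * ((X i)^(p^(k+1)) + (p : MvPolynomial ℕ ℤ_[p])^(k+1)*((X i)^(p^(k+1)-p)*X (i+1))
          + (p : MvPolynomial ℕ ℤ_[p])^(k+2)*((X (i+1))^2*J))
        - (p : MvPolynomial ℕ ℤ_[p])^((ν-k)*p-1) * (X i)^(p^(k+1))
        = (p : MvPolynomial ℕ ℤ_[p])^(ν-k-1) * ((X i)^(p^(k+1)) * 1)
          + (p : MvPolynomial ℕ ℤ_[p])^(ν-k-1+(k+1)) * ((X (i+1))^1 * ((X i)^(p^(k+1)-p)))
          + (p : MvPolynomial ℕ ℤ_[p])^(ν-k-1+(k+2)) * ((X (i+1))^2 * J)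
          - (p : MvPolynomial ℕ ℤ_[p])^((ν-k)*p-1) * ((X i)^(p^(k+1)) * 1) := by
      rw [pow_add, pow_add]; ring
    rw [expand]
    exact sub_mem (add_mem (add_mem m1 m2) m3) m4
  · -- k = ν
    rw [show ν - k = 0 by omega, pow_zero, one_mul]
    obtain ⟨J, hJ⟩ := delta_Xpow p δ hP' hp3 i k
    rw [hJ]
    have m1 : (p : MvPolynomial ℕ ℤ_[p])^k * ((X (i+1))^1 * ((X i)^(p^(k+1)-p))) ∈ Dd p ν (t+1) :=
      Dd_mem_factor p ν (show 1 ≤ i+1 by omega) (Nat.zero_le ν) (by omega)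
        (by omega) (by simp) _
    have m2 : (p : MvPolynomial ℕ ℤ_[p])^(k+1) * ((X (i+1))^2 * J) ∈ Dd p ν (t+1) :=
      Dd_mem_factor p ν (show 1 ≤ i+1 by omega) (Nat.zero_le ν) (by omega)
        (by omega) (by simp) _
    have expand : (p : MvPolynomial ℕ ℤ_[p])^k*((X i)^(p^(k+1)-p)*X (i+1))
          + (p : MvPolynomial ℕ ℤ_[p])^(k+1)*((X (i+1))^2*J)
        = (p : MvPolynomial ℕ ℤ_[p])^k * ((X (i+1))^1 * ((X i)^(p^(k+1)-p)))
          + (p : MvPolynomial ℕ ℤ_[p])^(k+1) * ((X (i+1))^2 * J) := by ring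
    rw [expand]
    exact add_mem m1 m2

/-- δ maps 𝔇_t into 𝔇_{t+1} -/
lemma delta_Dd (hp3 : 3 ≤ p)
    (hmul : ∀ a b, δ (a * b) = a ^ p * δ b + b ^ p * δ a
      + (p : MvPolynomial ℕ ℤ_[p]) * δ a * δ b)
    {t : ℕ} : ∀ x ∈ Dd p ν t, δ x ∈ Dd p ν (t+1) := by
  apply delta_span p δ hP' hmul
  · rintro r ⟨i, k, h1, h2, h3, rfl⟩
    exact Dd_mono p ν (show t ≤ t+1 by omega)
      (Ideal.subset_span ⟨i, k, h1, h2, h3, rfl⟩)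
  · rintro r ⟨i, k, h1, h2, h3, rfl⟩
    exact delta_gen p ν δ hP' hp3 h1 h2 h3
end Buckets
private lemma prod_shift {c q : ℕ} (h3 : 3 ≤ q) :
    c*(q-1) + c = c*q := by
  have h : q - 1 + 1 = q := by omega
  calc c*(q-1) + c = c*((q-1)+1) := by ring
    _ = c*q := by rw [h]

section Slots
variable (p : ℕ) [hfp : Fact p.Prime] (ν : ℕ)
variable (δ : MvPolynomial ℕ ℤ_[p] → MvPolynomial ℕ ℤ_[p])
    (hmul : ∀ a b, δ (a * b) = a ^ p * δ b + b ^ p * δ a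
      + (p : MvPolynomial ℕ ℤ_[p]) * δ a * δ b)
    (hP' : ∀ f, (p : MvPolynomial ℕ ℤ_[p]) * δ f = Phi p f - f^p)
include hmul hP'

/-- δ of a slot with k < ν -/
lemma slot_step (hp3 : 3 ≤ p) {k : ℕ} (hk : k < ν) (i : ℕ) (Wk : MvPolynomial ℕ ℤ_[p]) :
    ∃ Jk, δ ((p : MvPolynomial ℕ ℤ_[p])^(ν-k) * (X i)^(p^k) * Wk)
      = (p : MvPolynomial ℕ ℤ_[p])^(ν-(k+1)) * (X i)^(p^(k+1))
          * (Wk^p + (p : MvPolynomial ℕ ℤ_[p])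
              * (δ Wk - (p : MvPolynomial ℕ ℤ_[p])^((ν-k)*(p-1)-1)*Wk^p))
        + ((p : MvPolynomial ℕ ℤ_[p])^ν*((X i)^(p^(k+1)-p)*X (i+1))
            + (p : MvPolynomial ℕ ℤ_[p])^(ν+1)*((X (i+1))^2*Jk))
          * (Wk^p + (p : MvPolynomial ℕ ℤ_[p])*δ Wk) := by
  obtain ⟨J, hJ⟩ := Phi_Xpow p hp3 i k
  refine ⟨J, ?_⟩
  rw [hmul, delta_pmul p δ hP' (ν-k) (by omega), hJ]
  have ey : ((X i : MvPolynomial ℕ ℤ_[p])^(p^k))^p = (X i)^(p^(k+1)) := by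
    rw [← pow_mul, ← pow_succ]
  have ea : ((p : MvPolynomial ℕ ℤ_[p])^(ν-k) * (X i)^(p^k))^p
      = (p : MvPolynomial ℕ ℤ_[p])^((ν-k)*p) * (X i)^(p^(k+1)) := by
    rw [mul_pow, ← pow_mul, ey]
  rw [ea, ey]
  rw [show ν-k-1 = ν-(k+1) from by omega]
  have hb : (ν-k)*(p-1) + (ν-k) = (ν-k)*p := prod_shift hp3
  set P : MvPolynomial ℕ ℤ_[p] := ((p:ℕ) : MvPolynomial ℕ ℤ_[p]) with hPdef
  have E1 : P^((ν-k)*p) = P^(ν-(k+1)) * (P * P^((ν-k)*(p-1))) := by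
    rw [← pow_succ', ← pow_add]
    congr 1
    set b := (ν-k)*(p-1) with hbdef
    omega
  have E3 : P^((ν-k)*p-1) = P^(ν-(k+1)) * P^((ν-k)*(p-1)) := by
    rw [← pow_add]
    congr 1
    set b := (ν-k)*(p-1) with hbdef
    omega
  have E4 : P^((ν-k)*(p-1)) = P * P^((ν-k)*(p-1)-1) := by
    rw [← pow_succ']
    congr 1
    have h2 : 2 ≤ (ν-k)*(p-1) := by
      have : 2 ≤ p - 1 := by omega
      have h1 : 1 ≤ ν - k := by omega
      calc 2 = 1*2 := by ring
        _ ≤ (ν-k)*(p-1) := Nat.mul_le_mul h1 this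
    omega
  have E5 : P^(ν-(k+1)) * P^(k+1) = P^ν := by
    rw [← pow_add]; congr 1; omega
  have E6 : P^(ν-(k+1)) * P^(k+2) = P^(ν+1) := by
    rw [← pow_add]; congr 1; omega
  linear_combination ((X i)^(p^(k+1))*δ Wk)*E1
    - ((X i)^(p^(k+1))*Wk^p + P*(X i)^(p^(k+1))*δ Wk)*E3
    - (P^(ν-(k+1))*(X i)^(p^(k+1))*Wk^p)*E4
    + ((X i)^(p^(k+1)-p)*X (i+1)*Wk^p + P*((X i)^(p^(k+1)-p)*X (i+1))*δ Wk)*E5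
    + ((X (i+1))^2*J*Wk^p + P*((X (i+1))^2*J)*δ Wk)*E6

/-- δ of the top slot (k = ν) -/
lemma slot_nu (hp3 : 3 ≤ p) (i : ℕ) (Wk : MvPolynomial ℕ ℤ_[p]) :
    ∃ J, δ ((p : MvPolynomial ℕ ℤ_[p])^(ν-ν) * (X i)^(p^ν) * Wk)
      = (X i)^(p^(ν+1)) * δ Wk
        + ((p : MvPolynomial ℕ ℤ_[p])^ν*((X i)^(p^(ν+1)-p)*X (i+1))
            + (p : MvPolynomial ℕ ℤ_[p])^(ν+1)*((X (i+1))^2*J))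
          * (Wk^p + (p : MvPolynomial ℕ ℤ_[p])*δ Wk) := by
  rw [Nat.sub_self, pow_zero, one_mul]
  obtain ⟨J, hJ⟩ := delta_Xpow p δ hP' hp3 i ν
  refine ⟨J, ?_⟩
  rw [hmul, hJ]
  have ey : ((X i : MvPolynomial ℕ ℤ_[p])^(p^ν))^p = (X i)^(p^(ν+1)) := by
    rw [← pow_mul, ← pow_succ]
  rw [ey]
  ring
end Slots
section SumsIdeals
variable (p : ℕ) [hfp : Fact p.Prime] (ν : ℕ)

/-- 𝔇_t together with (p) -/
noncomputable def PDd (t : ℕ) : Ideal (MvPolynomial ℕ ℤ_[p]) :=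
  Dd p ν t ⊔ Ideal.span {(p : MvPolynomial ℕ ℤ_[p])}

lemma PDd_mono {t t' : ℕ} (h : t ≤ t') : PDd p ν t ≤ PDd p ν t' :=
  sup_le_sup_right (Dd_mono p ν h) _

lemma PDd_p_mul (t : ℕ) (x : MvPolynomial ℕ ℤ_[p]) :
    (p : MvPolynomial ℕ ℤ_[p]) * x ∈ PDd p ν t :=
  Ideal.mem_sup_right (Ideal.mem_span_singleton'.mpr ⟨x, mul_comm _ _⟩)

lemma Dd_le_PDd (t : ℕ) : Dd p ν t ≤ PDd p ν t := le_sup_left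

lemma mem_mul_absorb {I : Ideal (MvPolynomial ℕ ℤ_[p])} {s : MvPolynomial ℕ ℤ_[p]}
    (h : s ∈ I) (x y : MvPolynomial ℕ ℤ_[p]) : x*(s*y) ∈ I := by
  rw [show x*(s*y) = s*(x*y) by ring]
  exact Ideal.mul_mem_right _ _ h

lemma slot_mem {t i k : ℕ} (h1 : 1 ≤ i) (h2 : k ≤ ν) (h3 : i+k ≤ t)
    (w : MvPolynomial ℕ ℤ_[p]) :
    (p : MvPolynomial ℕ ℤ_[p])^(ν-k) * (X i)^(p^k) * w ∈ Dd p ν t := by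
  rw [mul_assoc]
  exact Dd_mem_factor p ν h1 h2 h3 le_rfl le_rfl w

variable (δ : MvPolynomial ℕ ℤ_[p] → MvPolynomial ℕ ℤ_[p])
    (hP' : ∀ f, (p : MvPolynomial ℕ ℤ_[p]) * δ f = Phi p f - f^p)
include hP'

lemma delta_sum {I : Ideal (MvPolynomial ℕ ℤ_[p])} (f : ℕ → MvPolynomial ℕ ℤ_[p])
    (n : ℕ) (hf : ∀ k, k < n → f k ∈ I) :
    ∃ c ∈ I, δ (∑ k ∈ Finset.range n, f k) = (∑ k ∈ Finset.range n, δ (f k)) + c := by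
  induction n with
  | zero =>
    refine ⟨0, I.zero_mem, ?_⟩
    simpa using delta_zero_s10 p δ hP'
  | succ n ih =>
    obtain ⟨c, hcI, hc⟩ := ih (fun k hk => hf k (by omega))
    obtain ⟨D, hD⟩ := delta_add_s10 p δ hP' (∑ k ∈ Finset.range n, f k) (f n)
    refine ⟨c + (∑ k ∈ Finset.range n, f k)*(f n*D), ?_, ?_⟩
    · refine add_mem hcI (mem_mul_absorb p (hf n (by omega)) _ _)
    · rw [Finset.sum_range_succ, hD, hc, Finset.sum_range_succ]
      ring
end SumsIdeals
section MoreHelpers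
variable (p : ℕ) [hfp : Fact p.Prime]

lemma pow_gap (hp2 : 2 ≤ p) {k : ℕ} (hk : 1 ≤ k) : p^k + p ≤ p^(k+1) := by
  have h1 : p ≤ p^k := by
    calc p = p^1 := (pow_one p).symm
    _ ≤ p^k := Nat.pow_le_pow_right (by omega) hk
  have h2 : 2*p^k ≤ p*p^k := Nat.mul_le_mul_right _ hp2
  have h3 : p^(k+1) = p*p^k := by rw [pow_succ]; ring
  omega

lemma gamma_mul (hp1 : 1 ≤ p) (ν n : ℕ) : (p^(ν+n)-p^n)*p = p^(ν+n+1)-p^(n+1) := by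
  have h1 : (p^(ν+n)-p^n)*p = p^(ν+n)*p - p^n*p := Nat.sub_mul _ _ _
  rw [h1, ← pow_succ, ← pow_succ]

lemma Xpow_gamma_p (ν n : ℕ) (hp1 : 1 ≤ p) :
    ((X 0 : MvPolynomial ℕ ℤ_[p])^(p^(ν+n)-p^n))^p = (X 0)^(p^(ν+n+1)-p^(n+1)) := by
  rw [← pow_mul, gamma_mul p hp1]
end MoreHelpers
section MainInduction
variable (p : ℕ) [hfp : Fact p.Prime] (ν : ℕ)
variable (δ : MvPolynomial ℕ ℤ_[p] → MvPolynomial ℕ ℤ_[p])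
    (hmul : ∀ a b, δ (a * b) = a ^ p * δ b + b ^ p * δ a
      + (p : MvPolynomial ℕ ℤ_[p]) * δ a * δ b)
    (hP' : ∀ f, (p : MvPolynomial ℕ ℤ_[p]) * δ f = Phi p f - f^p)
include hmul hP'

theorem main_inv (hν : 1 ≤ ν) (hp3 : 3 ≤ p) :
    ∀ m, 1 ≤ m →
    ∃ (W : ℕ → MvPolynomial ℕ ℤ_[p]) (s : MvPolynomial ℕ ℤ_[p]),
      δ^[m] ((X 0)^(p^ν)) =
        (∑ k ∈ Finset.range (min ν (m-1) + 1),
          (p : MvPolynomial ℕ ℤ_[p])^(ν-k) * (X (m-k))^(p^k) * W k) + s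
      ∧ s ∈ Dd p ν (m-1)
      ∧ ∀ k, k ≤ min ν (m-1) →
          W k - (X 0 : MvPolynomial ℕ ℤ_[p])^(p^(ν+m)-p^m) ∈ PDd p ν (m-1) := by
  intro m
  induction m with
  | zero => omega
  | succ n ih =>
    intro _
    rcases Nat.eq_zero_or_pos n with hn0 | hn1
    · -- base case m = 1
      subst hn0
      obtain ⟨J, hJ⟩ := delta_Xpow p δ hP' hp3 0 ν
      refine ⟨fun _ => (X 0 : MvPolynomial ℕ ℤ_[p])^(p^(ν+1)-p)
          + (p : MvPolynomial ℕ ℤ_[p])*(X 1*J), 0, ?_, ?_, ?_⟩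
      · rw [Function.iterate_one, hJ]
        rw [show min ν (0+1-1) = 0 from by omega]
        simp only [zero_add, Nat.sub_zero, Finset.sum_range_one, pow_zero, pow_one]
        ring
      · exact Ideal.zero_mem _
      · intro k _
        have hred : ((fun _ => (X 0 : MvPolynomial ℕ ℤ_[p])^(p^(ν+1)-p)
              + (p : MvPolynomial ℕ ℤ_[p])*(X 1*J)) k)
            - (X 0 : MvPolynomial ℕ ℤ_[p])^(p^(ν+1)-p^1)
            = (p : MvPolynomial ℕ ℤ_[p])*(X 1*J) := by
          simp only [pow_one]
          ring
        rw [hred]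
        exact PDd_p_mul p ν _ _
    · -- inductive step, n ≥ 1, proving for m = n+1
      obtain ⟨W, s, hdec, hs, hW⟩ := ih hn1
      -- choice function for the slot junk polynomials
      set Jf : ℕ → MvPolynomial ℕ ℤ_[p] := fun k =>
        if h : k < ν then Classical.choose (slot_step p ν δ hmul hP' hp3 h (n-k) (W k))
        else 0 with hJfdef
      have hJf : ∀ k, (h : k < ν) →
          δ ((p : MvPolynomial ℕ ℤ_[p])^(ν-k) * (X (n-k))^(p^k) * W k)
          = (p : MvPolynomial ℕ ℤ_[p])^(ν-(k+1)) * (X (n-k))^(p^(k+1))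
              * ((W k)^p + (p : MvPolynomial ℕ ℤ_[p])
                  * (δ (W k) - (p : MvPolynomial ℕ ℤ_[p])^((ν-k)*(p-1)-1)*(W k)^p))
            + ((p : MvPolynomial ℕ ℤ_[p])^ν*((X (n-k))^(p^(k+1)-p)*X (n-k+1))
                + (p : MvPolynomial ℕ ℤ_[p])^(ν+1)*((X (n-k+1))^2*(Jf k)))
              * ((W k)^p + (p : MvPolynomial ℕ ℤ_[p])*δ (W k)) := by
        intro k h
        have := Classical.choose_spec (slot_step p ν δ hmul hP' hp3 h (n-k) (W k))
        simpa [hJfdef, dif_pos h] using this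
      -- the new W function
      set Wn : ℕ → MvPolynomial ℕ ℤ_[p] := fun k' =>
        if k' = 0 then
          (W 0)^p + (p : MvPolynomial ℕ ℤ_[p])*δ (W 0)
            + (p : MvPolynomial ℕ ℤ_[p])
              *(X (n+1)*(Jf 0*((W 0)^p + (p : MvPolynomial ℕ ℤ_[p])*δ (W 0))))
        else
          (W (k'-1))^p + (p : MvPolynomial ℕ ℤ_[p])
            *(δ (W (k'-1)) - (p : MvPolynomial ℕ ℤ_[p])^((ν-(k'-1))*(p-1)-1)*(W (k'-1))^p)
        with hWndef
      obtain ⟨L'', hL'⟩ : ∃ x, min ν n = x + 1 := ⟨min ν n - 1, by omega⟩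
      -- the key decomposition of δ^[n+1] G
      have hkey : ∃ s' ∈ Dd p ν n,
          δ^[n+1] ((X 0)^(p^ν)) =
            (∑ k' ∈ Finset.range (L''+1+1),
              (p : MvPolynomial ℕ ℤ_[p])^(ν-k') * (X (n+1-k'))^(p^k') * Wn k') + s' := by
        set L : ℕ := min ν (n-1) with hLdef
        have hcases : L + 1 = L''+1 ∨ L + 1 = L''+1+1 := by omega
        have hbody_mem : ∀ k, k < L+1 →
            (p : MvPolynomial ℕ ℤ_[p])^(ν-k) * (X (n-k))^(p^k) * W k ∈ Dd p ν n := by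
          intro k hk
          exact slot_mem p ν (by omega) (by omega) (by omega) _
        obtain ⟨D₀, hD₀⟩ := delta_add_s10 p δ hP'
          (∑ k ∈ Finset.range (L+1),
            (p : MvPolynomial ℕ ℤ_[p])^(ν-k) * (X (n-k))^(p^k) * W k) s
        obtain ⟨c, hcI, hc⟩ := delta_sum p δ hP'
          (fun k => (p : MvPolynomial ℕ ℤ_[p])^(ν-k) * (X (n-k))^(p^k) * W k) (L+1) hbody_mem
        have e2 : δ^[n+1] ((X 0)^(p^ν))
            = (∑ k ∈ Finset.range (L+1),
                δ ((p : MvPolynomial ℕ ℤ_[p])^(ν-k) * (X (n-k))^(p^k) * W k))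
              + (c + δ s + (∑ k ∈ Finset.range (L+1),
                  (p : MvPolynomial ℕ ℤ_[p])^(ν-k) * (X (n-k))^(p^k) * W k)*(s*D₀)) := by
          rw [Function.iterate_succ_apply', hdec, hD₀, hc]
          ring
        have hrest_mem : c + δ s + (∑ k ∈ Finset.range (L+1),
            (p : MvPolynomial ℕ ℤ_[p])^(ν-k) * (X (n-k))^(p^k) * W k)*(s*D₀) ∈ Dd p ν n := by
          refine add_mem (add_mem hcI ?_) ?_
          · have h := delta_Dd p ν δ hP' hp3 hmul s hs
            rwa [show n-1+1 = n from by omega] at h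
          · exact Dd_mono p ν (by omega) (mem_mul_absorb p (I := Dd p ν (n-1)) hs _ _)
        have hsplit3 : ∃ R ∈ Dd p ν n,
            (∑ k ∈ Finset.range (L+1),
              δ ((p : MvPolynomial ℕ ℤ_[p])^(ν-k) * (X (n-k))^(p^k) * W k))
            = (∑ k ∈ Finset.range (L''+1),
              δ ((p : MvPolynomial ℕ ℤ_[p])^(ν-k) * (X (n-k))^(p^k) * W k)) + R := by
          rcases hcases with hA | hB
          · exact ⟨0, Ideal.zero_mem _, by rw [hA, add_zero]⟩
          · have hν' : L''+1 = ν := by omega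
            refine ⟨δ ((p : MvPolynomial ℕ ℤ_[p])^(ν-(L''+1))
                * (X (n-(L''+1)))^(p^(L''+1)) * W (L''+1)), ?_, ?_⟩
            · rw [hν']
              obtain ⟨Jν, hJν⟩ := slot_nu p ν δ hmul hP' hp3 (n-ν) (W ν)
              rw [hJν]
              have hgap := pow_gap p (by omega) hν
              refine add_mem ?_ ?_
              · rw [show (X (n-ν) : MvPolynomial ℕ ℤ_[p])^(p^(ν+1)) * δ (W ν)
                    = (p : MvPolynomial ℕ ℤ_[p])^0 * ((X (n-ν))^(p^(ν+1)) * δ (W ν))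
                  from by rw [pow_zero, one_mul]]
                exact Dd_mem_factor p ν (by omega) le_rfl (by omega) (by omega)
                  (Nat.pow_le_pow_right (by omega) (by omega)) _
              · rw [show ((p : MvPolynomial ℕ ℤ_[p])^ν*((X (n-ν))^(p^(ν+1)-p)*X (n-ν+1))
                    + (p : MvPolynomial ℕ ℤ_[p])^(ν+1)*((X (n-ν+1))^2*Jν))
                      * ((W ν)^p + (p : MvPolynomial ℕ ℤ_[p])*δ (W ν))
                  = (p : MvPolynomial ℕ ℤ_[p])^ν * ((X (n-ν))^(p^(ν+1)-p)
                      * (X (n-ν+1) * ((W ν)^p + (p : MvPolynomial ℕ ℤ_[p])*δ (W ν))))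
                    + (p : MvPolynomial ℕ ℤ_[p])^(ν+1) * ((X (n-ν+1))^2
                      * (Jν * ((W ν)^p + (p : MvPolynomial ℕ ℤ_[p])*δ (W ν)))) from by ring]
                refine add_mem ?_ ?_
                · exact Dd_mem_factor p ν (k := ν) (by omega) le_rfl (by omega) (by omega)
                    (by omega) _
                · exact Dd_mem_factor p ν (k := 0) (by omega) (by omega) (by omega) (by omega)
                    (by simp) _
            · rw [hB, Finset.sum_range_succ]
        obtain ⟨R, hRI, hR⟩ := hsplit3
        have htop : δ ((p : MvPolynomial ℕ ℤ_[p])^(ν-0)*(X (n-0))^(p^0)*W 0)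
            = (p : MvPolynomial ℕ ℤ_[p])^(ν-(0+1)) * (X (n+1-(0+1)))^(p^(0+1)) * Wn (0+1)
              + (p : MvPolynomial ℕ ℤ_[p])^(ν-0) * (X (n+1-0))^(p^0) * Wn 0 := by
          have h0 := hJf 0 (by omega)
          rw [h0]
          have e1 : Wn (0+1) = (W 0)^p + (p : MvPolynomial ℕ ℤ_[p])
              *(δ (W 0) - (p : MvPolynomial ℕ ℤ_[p])^((ν-0)*(p-1)-1)*(W 0)^p) := by
            simp [hWndef]
          have e0 : Wn 0 = (W 0)^p + (p : MvPolynomial ℕ ℤ_[p])*δ (W 0)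
              + (p : MvPolynomial ℕ ℤ_[p])
                *(X (n+1)*(Jf 0*((W 0)^p + (p : MvPolynomial ℕ ℤ_[p])*δ (W 0)))) := by
            simp [hWndef]
          rw [e1, e0, show p^(0+1)-p = 0 from by simp]
          simp only [Nat.sub_zero, Nat.add_sub_cancel, pow_zero, pow_one]
          ring
        have hmid : ∀ j ∈ Finset.range L'',
            δ ((p : MvPolynomial ℕ ℤ_[p])^(ν-(j+1))*(X (n-(j+1)))^(p^(j+1))*W (j+1))
            = (p : MvPolynomial ℕ ℤ_[p])^(ν-(j+1+1)) * (X (n+1-(j+1+1)))^(p^(j+1+1)) * Wn (j+1+1)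
              + ((p : MvPolynomial ℕ ℤ_[p])^ν*((X (n-(j+1)))^(p^(j+1+1)-p)*X (n-(j+1)+1))
                  + (p : MvPolynomial ℕ ℤ_[p])^(ν+1)*((X (n-(j+1)+1))^2*(Jf (j+1))))
                * ((W (j+1))^p + (p : MvPolynomial ℕ ℤ_[p])*δ (W (j+1))) := by
          intro j hj
          simp only [Finset.mem_range] at hj
          have h := hJf (j+1) (by omega)
          rw [h]
          have eW : Wn (j+1+1) = (W (j+1))^p + (p : MvPolynomial ℕ ℤ_[p])
              *(δ (W (j+1)) - (p : MvPolynomial ℕ ℤ_[p])^((ν-(j+1))*(p-1)-1)*(W (j+1))^p) := by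
            simp [hWndef]
          rw [eW, show n+1-(j+1+1) = n-(j+1) from by omega]
        have hBmem : ∀ j ∈ Finset.range L'',
            ((p : MvPolynomial ℕ ℤ_[p])^ν*((X (n-(j+1)))^(p^(j+1+1)-p)*X (n-(j+1)+1))
              + (p : MvPolynomial ℕ ℤ_[p])^(ν+1)*((X (n-(j+1)+1))^2*(Jf (j+1))))
                * ((W (j+1))^p + (p : MvPolynomial ℕ ℤ_[p])*δ (W (j+1))) ∈ Dd p ν n := by
          intro j hj
          simp only [Finset.mem_range] at hj
          have hgap := pow_gap p (by omega) (show 1 ≤ j+1 by omega)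
          rw [show ((p : MvPolynomial ℕ ℤ_[p])^ν*((X (n-(j+1)))^(p^(j+1+1)-p)*X (n-(j+1)+1))
              + (p : MvPolynomial ℕ ℤ_[p])^(ν+1)*((X (n-(j+1)+1))^2*(Jf (j+1))))
                * ((W (j+1))^p + (p : MvPolynomial ℕ ℤ_[p])*δ (W (j+1)))
            = (p : MvPolynomial ℕ ℤ_[p])^ν * ((X (n-(j+1)))^(p^(j+1+1)-p)
                * (X (n-(j+1)+1) * ((W (j+1))^p + (p : MvPolynomial ℕ ℤ_[p])*δ (W (j+1)))))
              + (p : MvPolynomial ℕ ℤ_[p])^(ν+1) * ((X (n-(j+1)+1))^2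
                * (Jf (j+1) * ((W (j+1))^p + (p : MvPolynomial ℕ ℤ_[p])*δ (W (j+1)))))
            from by ring]
          refine add_mem ?_ ?_
          · exact Dd_mem_factor p ν (k := j+1) (by omega) (by omega) (by omega) (by omega)
              (by omega) _
          · exact Dd_mem_factor p ν (k := 0) (by omega) (by omega) (by omega) (by omega)
              (by simp) _
        refine ⟨(∑ j ∈ Finset.range L'',
            ((p : MvPolynomial ℕ ℤ_[p])^ν*((X (n-(j+1)))^(p^(j+1+1)-p)*X (n-(j+1)+1))
              + (p : MvPolynomial ℕ ℤ_[p])^(ν+1)*((X (n-(j+1)+1))^2*(Jf (j+1))))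
                * ((W (j+1))^p + (p : MvPolynomial ℕ ℤ_[p])*δ (W (j+1))))
          + R + (c + δ s + (∑ k ∈ Finset.range (L+1),
              (p : MvPolynomial ℕ ℤ_[p])^(ν-k) * (X (n-k))^(p^k) * W k)*(s*D₀)), ?_, ?_⟩
        · exact add_mem (add_mem (Ideal.sum_mem _ hBmem) hRI) hrest_mem
        · rw [e2, hR]
          rw [Finset.sum_range_succ'
            (fun k => δ ((p : MvPolynomial ℕ ℤ_[p])^(ν-k) * (X (n-k))^(p^k) * W k)) L'']
          rw [Finset.sum_congr rfl hmid, htop]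
          rw [Finset.sum_range_succ'
            (fun k' => (p : MvPolynomial ℕ ℤ_[p])^(ν-k') * (X (n+1-k'))^(p^k') * Wn k') (L''+1)]
          rw [Finset.sum_range_succ'
            (fun k => (p : MvPolynomial ℕ ℤ_[p])^(ν-(k+1)) * (X (n+1-(k+1)))^(p^(k+1)) * Wn (k+1)) L'']
          rw [Finset.sum_add_distrib]
          ring
      obtain ⟨s', hs'I, hkey⟩ := hkey
      refine ⟨Wn, s', ?_, ?_, ?_⟩
      · simp only [Nat.add_sub_cancel]
        rw [hL']
        exact hkey
      · simpa only [Nat.add_sub_cancel] using hs'I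
      · -- congruences
        intro k' hk'
        simp only [Nat.add_sub_cancel] at hk' ⊢
        rw [show ν+(n+1) = ν+n+1 from by omega]
        have hXp : ((X 0 : MvPolynomial ℕ ℤ_[p])^(p^(ν+n)-p^n))^p
            = (X 0 : MvPolynomial ℕ ℤ_[p])^(p^(ν+n+1)-p^(n+1)) :=
          Xpow_gamma_p p ν n (by omega)
        rcases Nat.eq_zero_or_pos k' with hk0 | hkpos
        · subst hk0
          obtain ⟨q, hq⟩ := sub_dvd_pow_sub_pow (W 0)
            ((X 0 : MvPolynomial ℕ ℤ_[p])^(p^(ν+n)-p^n)) p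
          have hW0 : W 0 - (X 0 : MvPolynomial ℕ ℤ_[p])^(p^(ν+n)-p^n) ∈ PDd p ν n :=
            PDd_mono p ν (show n-1 ≤ n by omega) (hW 0 (Nat.zero_le _))
          have hsplit : Wn 0 - (X 0 : MvPolynomial ℕ ℤ_[p])^(p^(ν+n+1)-p^(n+1))
              = (W 0 - (X 0 : MvPolynomial ℕ ℤ_[p])^(p^(ν+n)-p^n))*q
                + ((p : MvPolynomial ℕ ℤ_[p])*(δ (W 0)
                    + X (n+1)*(Jf 0*((W 0)^p + (p : MvPolynomial ℕ ℤ_[p])*δ (W 0))))) := by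
            simp only [hWndef, if_pos rfl]
            rw [← hXp]
            linear_combination hq
          rw [hsplit]
          exact add_mem (Ideal.mul_mem_right _ _ hW0) (PDd_p_mul p ν _ _)
        · obtain ⟨j, rfl⟩ : ∃ j, k' = j+1 := ⟨k'-1, by omega⟩
          obtain ⟨q, hq⟩ := sub_dvd_pow_sub_pow (W j)
            ((X 0 : MvPolynomial ℕ ℤ_[p])^(p^(ν+n)-p^n)) p
          have hWj : W j - (X 0 : MvPolynomial ℕ ℤ_[p])^(p^(ν+n)-p^n) ∈ PDd p ν n :=
            PDd_mono p ν (show n-1 ≤ n by omega) (hW j (by omega))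
          have hsplit : Wn (j+1) - (X 0 : MvPolynomial ℕ ℤ_[p])^(p^(ν+n+1)-p^(n+1))
              = (W j - (X 0 : MvPolynomial ℕ ℤ_[p])^(p^(ν+n)-p^n))*q
                + ((p : MvPolynomial ℕ ℤ_[p])*(δ (W j)
                    - (p : MvPolynomial ℕ ℤ_[p])^((ν-j)*(p-1)-1)*(W j)^p)) := by
            simp only [hWndef, if_neg (Nat.succ_ne_zero j), Nat.add_sub_cancel]
            rw [← hXp]
            linear_combination hq
          rw [hsplit]
          exact add_mem (Ideal.mul_mem_right _ _ hWj) (PDd_p_mul p ν _ _)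
end MainInduction
section PiExtraction
variable (p : ℕ) [hfp : Fact p.Prime] (ν : ℕ)

lemma pi_p_zero :
    (MvPolynomial.map (PadicInt.toZMod (p := p))) ((p : ℕ) : MvPolynomial ℕ ℤ_[p]) = 0 := by
  rw [map_natCast]
  exact_mod_cast CharP.cast_eq_zero (MvPolynomial ℕ (ZMod p)) p

/-- image ideal of buckets: the span of X_u^{p^ν} for u+ν ≤ t -/
noncomputable def Espan (t : ℕ) : Ideal (MvPolynomial ℕ (ZMod p)) :=
  Ideal.span {g | ∃ u, 1 ≤ u ∧ u + ν ≤ t ∧ g = X u^(p^ν)}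

lemma pi_Dd {t : ℕ} {x : MvPolynomial ℕ ℤ_[p]} (hx : x ∈ Dd p ν t) :
    (MvPolynomial.map (PadicInt.toZMod (p := p))) x ∈ Espan p ν t := by
  have h1 : Ideal.map (MvPolynomial.map (PadicInt.toZMod (p := p)) :
      MvPolynomial ℕ ℤ_[p] →+* MvPolynomial ℕ (ZMod p)) (Dd p ν t) ≤ Espan p ν t := by
    rw [Dd, Ideal.map_span]
    apply Ideal.span_le.mpr
    rintro y ⟨r, ⟨i, k, hi, hk, hik, rfl⟩, rfl⟩
    rcases Nat.lt_or_ge k ν with hkν | hkν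
    · have hz : (MvPolynomial.map (PadicInt.toZMod (p := p)))
          ((p : MvPolynomial ℕ ℤ_[p])^(ν-k) * (X i)^(p^k)) = 0 := by
        rw [map_mul, map_pow, pi_p_zero, zero_pow (show ν-k ≠ 0 by omega), zero_mul]
      rw [hz]
      exact Ideal.zero_mem _
    · have hkeq : k = ν := by omega
      have hz : (MvPolynomial.map (PadicInt.toZMod (p := p)))
          ((p : MvPolynomial ℕ ℤ_[p])^(ν-k) * (X i)^(p^k)) = (X i)^(p^ν) := by
        rw [map_mul, map_pow, map_pow, MvPolynomial.map_X, show ν - k = 0 by omega,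
          pi_p_zero, pow_zero, one_mul, hkeq]
      rw [hz]
      exact Ideal.subset_span ⟨i, hi, by omega, rfl⟩
  exact h1 (Ideal.mem_map_of_mem _ hx)

lemma pi_PDd {t : ℕ} {x : MvPolynomial ℕ ℤ_[p]} (hx : x ∈ PDd p ν t) :
    (MvPolynomial.map (PadicInt.toZMod (p := p))) x ∈ Espan p ν t := by
  rw [PDd] at hx
  obtain ⟨y, hy, z, hz, rfl⟩ := Submodule.mem_sup.mp hx
  rw [map_add]
  refine add_mem (pi_Dd p ν hy) ?_
  obtain ⟨w, hw⟩ := Ideal.mem_span_singleton'.mp hz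
  rw [← hw, map_mul, pi_p_zero, mul_zero]
  exact Ideal.zero_mem _

lemma Espan_bot {t : ℕ} (ht : t < ν + 1) : Espan p ν t = ⊥ := by
  rw [Espan]
  have hempty : {g : MvPolynomial ℕ (ZMod p) | ∃ u, 1 ≤ u ∧ u + ν ≤ t ∧ g = X u^(p^ν)}
      = (∅ : Set (MvPolynomial ℕ (ZMod p))) := by
    ext g
    simp only [Set.mem_setOf_eq, Set.mem_empty_iff_false, iff_false]
    rintro ⟨u, h1, h2, _⟩
    omega
  rw [hempty, Ideal.span_empty]

variable (δ : MvPolynomial ℕ ℤ_[p] → MvPolynomial ℕ ℤ_[p])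
    (hmul : ∀ a b, δ (a * b) = a ^ p * δ b + b ^ p * δ a
      + (p : MvPolynomial ℕ ℤ_[p]) * δ a * δ b)
    (hP' : ∀ f, (p : MvPolynomial ℕ ℤ_[p]) * δ f = Phi p f - f^p)
include hmul hP'

lemma image_low (hν : 1 ≤ ν) (hp3 : 3 ≤ p) {m : ℕ} (hm : 1 ≤ m) (hmν : m ≤ ν) :
    (MvPolynomial.map (PadicInt.toZMod (p := p))) (δ^[m] ((X 0)^(p^ν))) = 0 := by
  obtain ⟨W, s, hdec, hs, hW⟩ := main_inv p ν δ hmul hP' hν hp3 m hm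
  have hsE : (MvPolynomial.map (PadicInt.toZMod (p := p))) s = 0 := by
    have h := pi_Dd p ν hs
    rwa [Espan_bot p ν (by omega), Ideal.mem_bot] at h
  rw [hdec, map_add, map_sum, hsE, add_zero]
  apply Finset.sum_eq_zero
  intro k hk
  simp only [Finset.mem_range] at hk
  rw [map_mul, map_mul, map_pow, pi_p_zero, zero_pow (show ν-k ≠ 0 by omega),
    zero_mul, zero_mul]

lemma image_high (hν : 1 ≤ ν) (hp3 : 3 ≤ p) {m : ℕ} (hm : ν + 1 ≤ m) :
    (MvPolynomial.map (PadicInt.toZMod (p := p))) (δ^[m] ((X 0)^(p^ν)))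
      - (X 0)^(p^(ν+m)-p^m) * (X (m-ν))^(p^ν) ∈ Espan p ν (m-1) := by
  obtain ⟨W, s, hdec, hs, hW⟩ := main_inv p ν δ hmul hP' hν hp3 m (by omega)
  have hmin : min ν (m-1) = ν := by omega
  rw [hmin] at hdec hW
  have hWν := hW ν le_rfl
  have h1 : (MvPolynomial.map (PadicInt.toZMod (p := p))) (W ν)
      - (X 0)^(p^(ν+m)-p^m) ∈ Espan p ν (m-1) := by
    have h := pi_PDd p ν hWν
    rwa [map_sub, map_pow, MvPolynomial.map_X] at h
  rw [hdec, map_add, map_sum, Finset.sum_range_succ]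
  have hzero : ∀ k ∈ Finset.range ν,
      (MvPolynomial.map (PadicInt.toZMod (p := p)))
        ((p : MvPolynomial ℕ ℤ_[p])^(ν-k) * (X (m-k))^(p^k) * W k) = 0 := by
    intro k hk
    simp only [Finset.mem_range] at hk
    rw [map_mul, map_mul, map_pow, pi_p_zero, zero_pow (show ν-k ≠ 0 by omega),
      zero_mul, zero_mul]
  rw [Finset.sum_eq_zero hzero, zero_add]
  have hterm : (MvPolynomial.map (PadicInt.toZMod (p := p)))
      ((p : MvPolynomial ℕ ℤ_[p])^(ν-ν) * (X (m-ν))^(p^ν) * W ν)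
      = (X (m-ν))^(p^ν) * (MvPolynomial.map (PadicInt.toZMod (p := p))) (W ν) := by
    rw [map_mul, map_mul, map_pow, map_pow, MvPolynomial.map_X, Nat.sub_self, pi_p_zero,
      pow_zero, one_mul]
  rw [hterm]
  rw [show (X (m-ν) : MvPolynomial ℕ (ZMod p))^(p^ν)
        * (MvPolynomial.map (PadicInt.toZMod (p := p))) (W ν)
      + (MvPolynomial.map (PadicInt.toZMod (p := p))) s
      - (X 0)^(p^(ν+m)-p^m) * (X (m-ν))^(p^ν)
    = (X (m-ν))^(p^ν) * ((MvPolynomial.map (PadicInt.toZMod (p := p))) (W ν)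
        - (X 0)^(p^(ν+m)-p^m))
      + (MvPolynomial.map (PadicInt.toZMod (p := p))) s from by ring]
  exact add_mem (Ideal.mul_mem_left _ _ h1) (pi_Dd p ν hs)
end PiExtraction
theorem stmt10 (p : ℕ) [Fact p.Prime] (hodd : Odd p)
    (δ : MvPolynomial ℕ ℤ_[p] → MvPolynomial ℕ ℤ_[p])
    (hadd : ∀ a b, (p : MvPolynomial ℕ ℤ_[p]) * (δ (a + b) - δ a - δ b)
      = a ^ p + b ^ p - (a + b) ^ p)
    (hmul : ∀ a b, δ (a * b) = a ^ p * δ b + b ^ p * δ a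
      + (p : MvPolynomial ℕ ℤ_[p]) * δ a * δ b)
    (hX : ∀ i, δ (X i) = X (i + 1))
    (hC : ∀ c : ℤ_[p], (p : MvPolynomial ℕ ℤ_[p]) * δ (C c) = C (c - c ^ p))
    (n ν : ℕ) (hn : 1 ≤ n) (hν : 1 ≤ ν) :
    (n ≤ ν →
      Ideal.span ({X 0 ^ p ^ ν - 1} ∪
          {g : MvPolynomial ℕ (ZMod p) | ∃ m, 1 ≤ m ∧ m ≤ n ∧
            g = MvPolynomial.map (PadicInt.toZMod (p := p)) (δ^[m] (X 0 ^ p ^ ν))}) =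
        Ideal.span {X 0 ^ p ^ ν - 1}) ∧
    (ν + 1 ≤ n →
      Ideal.span ({X 0 ^ p ^ ν - 1} ∪
          {g : MvPolynomial ℕ (ZMod p) | ∃ m, 1 ≤ m ∧ m ≤ n ∧
            g = MvPolynomial.map (PadicInt.toZMod (p := p)) (δ^[m] (X 0 ^ p ^ ν))}) =
        Ideal.span ({X 0 ^ p ^ ν - 1} ∪
          {g : MvPolynomial ℕ (ZMod p) | ∃ i, 1 ≤ i ∧ i ≤ n - ν ∧ g = X i ^ p ^ ν})) := by
  have hp3 : 3 ≤ p := by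
    rcases hodd with ⟨k, hk⟩
    have := (Fact.out : p.Prime).two_le
    omega
  have hP' := hP p δ hadd hmul hX hC
  constructor
  · -- part 1 : n ≤ ν
    intro hnν
    apply le_antisymm
    · apply Ideal.span_le.mpr
      intro g hg
      simp only [Set.mem_union, Set.mem_singleton_iff, Set.mem_setOf_eq] at hg
      rcases hg with hg | ⟨m, hm1, hm2, rfl⟩
      · exact hg ▸ Ideal.subset_span rfl
      · rw [image_low p ν δ hmul hP' hν hp3 hm1 (le_trans hm2 hnν)]
        exact Ideal.zero_mem _
    · exact Ideal.span_mono Set.subset_union_left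
  · -- part 2 : ν + 1 ≤ n
    intro hnν
    apply le_antisymm
    · apply Ideal.span_le.mpr
      intro g hg
      simp only [Set.mem_union, Set.mem_singleton_iff, Set.mem_setOf_eq] at hg
      rcases hg with hg | ⟨m, hm1, hm2, rfl⟩
      · exact hg ▸ Ideal.subset_span (Set.mem_union_left _ rfl)
      · rcases le_or_gt m ν with hmν | hmν
        · rw [image_low p ν δ hmul hP' hν hp3 hm1 hmν]
          exact Ideal.zero_mem _
        · have hkey := image_high p ν δ hmul hP' hν hp3 (show ν+1 ≤ m by omega)
          have hE : Espan p ν (m-1) ≤ Ideal.span ({X 0 ^ p ^ ν - 1} ∪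
              {g : MvPolynomial ℕ (ZMod p) | ∃ i, 1 ≤ i ∧ i ≤ n - ν ∧ g = X i ^ p ^ ν}) := by
            apply Ideal.span_le.mpr
            rintro g ⟨u, h1, h2, rfl⟩
            exact Ideal.subset_span (Set.mem_union_right _ ⟨u, h1, by omega, rfl⟩)
          have hXmem : (X (m-ν) : MvPolynomial ℕ (ZMod p))^(p^ν) ∈
              Ideal.span ({X 0 ^ p ^ ν - 1} ∪
                {g : MvPolynomial ℕ (ZMod p) | ∃ i, 1 ≤ i ∧ i ≤ n - ν ∧ g = X i ^ p ^ ν}) :=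
            Ideal.subset_span (Set.mem_union_right _ ⟨m-ν, by omega, by omega, rfl⟩)
          have hG : ((X 0 : MvPolynomial ℕ (ZMod p))^(p^ν) - 1) ∈
              Ideal.span ({X 0 ^ p ^ ν - 1} ∪
                {g : MvPolynomial ℕ (ZMod p) | ∃ i, 1 ≤ i ∧ i ≤ n - ν ∧ g = X i ^ p ^ ν}) :=
            Ideal.subset_span (Set.mem_union_left _ rfl)
          have hgamma : (X 0 : MvPolynomial ℕ (ZMod p))^(p^(ν+m)-p^m)
              = ((X 0)^(p^ν))^(p^m - p^(m-ν)) := by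
            rw [← pow_mul]
            congr 1
            rw [Nat.mul_sub, ← pow_add, ← pow_add]
            congr 2
            omega
          obtain ⟨w, hw⟩ := sub_dvd_pow_sub_pow ((X 0 : MvPolynomial ℕ (ZMod p))^(p^ν)) 1
            (p^m - p^(m-ν))
          rw [one_pow] at hw
          have hrw : MvPolynomial.map (PadicInt.toZMod (p := p)) (δ^[m] (X 0 ^ p ^ ν))
              = (MvPolynomial.map (PadicInt.toZMod (p := p)) (δ^[m] ((X 0)^(p^ν)))
                  - (X 0)^(p^(ν+m)-p^m) * (X (m-ν))^(p^ν))
                + (((X 0)^(p^ν))^(p^m - p^(m-ν)) - 1)*(X (m-ν))^(p^ν)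
                + (X (m-ν))^(p^ν) := by
            rw [← hgamma]
            ring
          rw [hrw, hw]
          exact add_mem (add_mem (hE hkey)
            (Ideal.mul_mem_right _ _ (Ideal.mul_mem_right _ _ hG))) hXmem
    · apply Ideal.span_le.mpr
      intro g hg
      simp only [Set.mem_union, Set.mem_singleton_iff, Set.mem_setOf_eq] at hg
      rcases hg with hg | ⟨i, hi1, hi2, rfl⟩
      · exact hg ▸ Ideal.subset_span (Set.mem_union_left _ rfl)
      · have hGmem : ((X 0 : MvPolynomial ℕ (ZMod p))^(p^ν) - 1) ∈
            Ideal.span ({X 0 ^ p ^ ν - 1} ∪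
              {g : MvPolynomial ℕ (ZMod p) | ∃ m, 1 ≤ m ∧ m ≤ n ∧
                g = MvPolynomial.map (PadicInt.toZMod (p := p)) (δ^[m] (X 0 ^ p ^ ν))}) :=
          Ideal.subset_span (Set.mem_union_left _ rfl)
        suffices hclaim : ∀ i, 1 ≤ i → i ≤ n - ν → (X i : MvPolynomial ℕ (ZMod p))^(p^ν) ∈
            Ideal.span ({X 0 ^ p ^ ν - 1} ∪
              {g : MvPolynomial ℕ (ZMod p) | ∃ m, 1 ≤ m ∧ m ≤ n ∧
                g = MvPolynomial.map (PadicInt.toZMod (p := p)) (δ^[m] (X 0 ^ p ^ ν))}) by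
          exact hclaim i hi1 hi2
        intro i
        induction i using Nat.strong_induction_on with
        | _ i IH =>
          intro hi1 hi2
          have hgen : MvPolynomial.map (PadicInt.toZMod (p := p)) (δ^[ν+i] (X 0 ^ p ^ ν)) ∈
              Ideal.span ({X 0 ^ p ^ ν - 1} ∪
                {g : MvPolynomial ℕ (ZMod p) | ∃ m, 1 ≤ m ∧ m ≤ n ∧
                  g = MvPolynomial.map (PadicInt.toZMod (p := p)) (δ^[m] (X 0 ^ p ^ ν))}) :=
            Ideal.subset_span (Set.mem_union_right _ ⟨ν+i, by omega, by omega, rfl⟩)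
          have hkey := image_high p ν δ hmul hP' hν hp3 (m := ν+i) (by omega)
          rw [Nat.add_sub_cancel_left] at hkey
          have hEL : Espan p ν (ν+i-1) ≤ Ideal.span ({X 0 ^ p ^ ν - 1} ∪
              {g : MvPolynomial ℕ (ZMod p) | ∃ m, 1 ≤ m ∧ m ≤ n ∧
                g = MvPolynomial.map (PadicInt.toZMod (p := p)) (δ^[m] (X 0 ^ p ^ ν))}) := by
            apply Ideal.span_le.mpr
            rintro g ⟨u, h1, h2, rfl⟩
            exact IH u (by omega) h1 (by omega)
          have hgamma : (X 0 : MvPolynomial ℕ (ZMod p))^(p^(ν+(ν+i))-p^(ν+i))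
              = ((X 0)^(p^ν))^(p^(ν+i) - p^i) := by
            rw [← pow_mul]
            congr 1
            rw [Nat.mul_sub, ← pow_add, ← pow_add]
          obtain ⟨w, hw⟩ := sub_dvd_pow_sub_pow ((X 0 : MvPolynomial ℕ (ZMod p))^(p^ν)) 1
            (p^(ν+i) - p^i)
          rw [one_pow] at hw
          have hfinal : (X i : MvPolynomial ℕ (ZMod p))^(p^ν)
              = MvPolynomial.map (PadicInt.toZMod (p := p)) (δ^[ν+i] ((X 0)^(p^ν)))
                - (MvPolynomial.map (PadicInt.toZMod (p := p)) (δ^[ν+i] ((X 0)^(p^ν)))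
                    - (X 0)^(p^(ν+(ν+i))-p^(ν+i)) * (X i)^(p^ν))
                - (((X 0)^(p^ν))^(p^(ν+i) - p^i) - 1)*(X i)^(p^ν) := by
            rw [← hgamma]
            ring
          rw [hfinal, hw]
          exact sub_mem (sub_mem hgen (hEL hkey))
            (Ideal.mul_mem_right _ _ (Ideal.mul_mem_right _ _ hGmem))
end

section
/- Fix a prime p and let n ≥ 0, ν ≥ 1. In MvPolynomial ℕ (ZMod p) with variables x^{(0)} = x, x^{(1)} = x', x^{(2)} = x'', …, let L be the ideal generated by x^{p^ν} − 1 together with all (x^{(i)})^{p^ν} for i ≥ 1. Then the intersection of L with the subring (ZMod p)[x, x', …, x^{(n)}] (the subalgebra generated by x^{(0)}, …, x^{(n)}) equals the ideal of that subring generated by x^{p^ν} − 1, (x')^{p^ν}, …, (x^{(n)})^{p^ν}. -/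
open MvPolynomial

/-- The subring `(ZMod p)[x, x', …, x^{(n)}]` of `MvPolynomial ℕ (ZMod p)`, i.e. the
subalgebra generated by the variables `x^{(0)}, …, x^{(n)}`. -/
noncomputable def Sn (p n : ℕ) : Subalgebra (ZMod p) (MvPolynomial ℕ (ZMod p)) :=
  Algebra.adjoin (ZMod p) {f | ∃ i ≤ n, f = X i}

theorem stmt11 (p : ℕ) (hp : p.Prime) (n ν : ℕ) (hν : 1 ≤ ν) (a : Sn p n) :
    ((a : MvPolynomial ℕ (ZMod p)) ∈
        Ideal.span ({X 0 ^ p ^ ν - 1} ∪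
          {f : MvPolynomial ℕ (ZMod p) | ∃ i, 1 ≤ i ∧ f = X i ^ p ^ ν})) ↔
      a ∈ Ideal.span {s : Sn p n |
        (s : MvPolynomial ℕ (ZMod p)) = X 0 ^ p ^ ν - 1 ∨
        ∃ i, 1 ≤ i ∧ i ≤ n ∧ (s : MvPolynomial ℕ (ZMod p)) = X i ^ p ^ ν} := by
  classical
  have hmem : ∀ i, i ≤ n → X i ∈ Sn p n := fun i hi =>
    Algebra.subset_adjoin ⟨i, hi, rfl⟩
  set g : ℕ → Sn p n := fun i => if h : i ≤ n then ⟨X i, hmem i h⟩ else 0 with hg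
  set ψ : MvPolynomial ℕ (ZMod p) →ₐ[ZMod p] Sn p n := aeval g with hψ
  have hψfix : ∀ s : Sn p n, ψ (s : MvPolynomial ℕ (ZMod p)) = s := by
    rintro ⟨s, hs⟩
    have key : ∀ x ∈ Sn p n, ((ψ x : Sn p n) : MvPolynomial ℕ (ZMod p)) = x := by
      intro x hx
      induction hx using Algebra.adjoin_induction with
      | mem y hy =>
        obtain ⟨i, hi, rfl⟩ := hy
        simp [hψ, hg, aeval_X, dif_pos hi]
      | algebraMap r => simp [hψ]
      | add x y _ _ hx hy => simp [map_add, hx, hy]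
      | mul x y _ _ hx hy => simp [map_mul, hx, hy]
    exact Subtype.ext (key s hs)
  constructor
  · intro ha
    have h1 : a = ψ (a : MvPolynomial ℕ (ZMod p)) := (hψfix a).symm
    have h2 : ψ (a : MvPolynomial ℕ (ZMod p)) ∈
        Ideal.map (ψ : MvPolynomial ℕ (ZMod p) →+* Sn p n)
          (Ideal.span ({X 0 ^ p ^ ν - 1} ∪
            {f : MvPolynomial ℕ (ZMod p) | ∃ i, 1 ≤ i ∧ f = X i ^ p ^ ν})) :=
      Ideal.mem_map_of_mem _ ha
    rw [Ideal.map_span, ← h1] at h2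
    refine Ideal.span_le.mpr ?_ h2
    rintro _ ⟨f, hf, rfl⟩
    rcases hf with hf | ⟨i, hi1, rfl⟩
    · rw [Set.mem_singleton_iff] at hf
      subst hf
      apply Ideal.subset_span
      left
      simp [hψ, hg, aeval_X, dif_pos (Nat.zero_le n)]
    · by_cases hin : i ≤ n
      · apply Ideal.subset_span
        right
        refine ⟨i, hi1, hin, ?_⟩
        simp [hψ, hg, aeval_X, dif_pos hin]
      · have hz : (ψ : MvPolynomial ℕ (ZMod p) →+* Sn p n) (X i ^ p ^ ν) = 0 := by
          have hpν : p ^ ν ≠ 0 := pow_ne_zero _ hp.pos.ne'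
          simp [hψ, hg, aeval_X, dif_neg hin, zero_pow hpν]
        rw [hz]
        exact Ideal.zero_mem _
  · intro ha
    have h2 : (a : MvPolynomial ℕ (ZMod p)) ∈
        Ideal.map ((Sn p n).val : Sn p n →+* MvPolynomial ℕ (ZMod p))
          (Ideal.span {s : Sn p n |
            (s : MvPolynomial ℕ (ZMod p)) = X 0 ^ p ^ ν - 1 ∨
            ∃ i, 1 ≤ i ∧ i ≤ n ∧ (s : MvPolynomial ℕ (ZMod p)) = X i ^ p ^ ν}) :=
      Ideal.mem_map_of_mem _ ha
    rw [Ideal.map_span] at h2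
    refine Ideal.span_le.mpr ?_ h2
    rintro _ ⟨s, hs, rfl⟩
    rcases hs with hs | ⟨i, hi1, _, hs⟩
    · apply Ideal.subset_span; left; exact hs
    · apply Ideal.subset_span; right; exact ⟨i, hi1, hs⟩
end

section
/- Fix an odd prime p and integers ν ≥ 1, 1 ≤ m ≤ ν, n ≥ m. Let d : ℤ_p → ℤ_p be the map with p·d(r) = r − r^p for all r (the Fermat quotient operator on ℤ_p). Let a ∈ ℤ_p be such that p^m divides a − 1 but p^{m+1} does not divide a − 1. Let π denote reduction of coefficients modulo p from the δ-polynomial ring A over ℤ_p to MvPolynomial ℕ (ZMod p). Then the ideal of MvPolynomial ℕ (ZMod p) generated by the elements π(δ^i(x^{p^ν}) − C(d^{∘i}(a))) for 0 ≤ i ≤ n is the unit ideal. (This is the statement that the reduction mod p of the ring of global functions of the n-th p-jet space of the μ_{p^ν}-torsor μ_{p^ν}^a = Spec R[x]/(x^{p^ν} − a) vanishes when a ∈ U_m \ U_{m+1}, m ≤ ν.) -/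
open MvPolynomial

theorem stmt12 (p : ℕ) [Fact p.Prime] (hodd : Odd p)
    (δ : MvPolynomial ℕ ℤ_[p] → MvPolynomial ℕ ℤ_[p])
    (hadd : ∀ a b, (p : MvPolynomial ℕ ℤ_[p]) * (δ (a + b) - δ a - δ b)
      = a ^ p + b ^ p - (a + b) ^ p)
    (hmul : ∀ a b, δ (a * b) = a ^ p * δ b + b ^ p * δ a
      + (p : MvPolynomial ℕ ℤ_[p]) * δ a * δ b)
    (hX : ∀ i, δ (X i) = X (i + 1))
    (hC : ∀ c : ℤ_[p], (p : MvPolynomial ℕ ℤ_[p]) * δ (C c) = C (c - c ^ p))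
    (d : ℤ_[p] → ℤ_[p]) (hd : ∀ r : ℤ_[p], (p : ℤ_[p]) * d r = r - r ^ p)
    (ν m n : ℕ) (hν : 1 ≤ ν) (hm1 : 1 ≤ m) (hmν : m ≤ ν) (hnm : m ≤ n)
    (a : ℤ_[p]) (ha : (p : ℤ_[p]) ^ m ∣ a - 1) (ha' : ¬ (p : ℤ_[p]) ^ (m + 1) ∣ a - 1) :
    Ideal.span {g : MvPolynomial ℕ (ZMod p) | ∃ i ≤ n,
        g = MvPolynomial.map (PadicInt.toZMod (p := p))
          (δ^[i] (X 0 ^ p ^ ν) - C (d^[i] a))} = ⊤ := by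
  have hp : p.Prime := Fact.out
  have hpZ : (p : ℤ_[p]) ≠ 0 := Nat.cast_ne_zero.mpr hp.ne_zero
  have hpA : (p : MvPolynomial ℕ ℤ_[p]) ≠ 0 := by
    intro h
    apply hpZ
    have h2 : C ((p : ℕ) : ℤ_[p]) = (0 : MvPolynomial ℕ ℤ_[p]) := by
      rw [map_natCast (C : ℤ_[p] →+* MvPolynomial ℕ ℤ_[p])]; exact h
    exact C_eq_zero.mp h2
  have hdvdZ : ∀ z : ℤ_[p], (p : ℤ_[p]) ∣ z ↔ PadicInt.toZMod z = 0 := by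
    intro z
    rw [← Ideal.mem_span_singleton, ← PadicInt.maximalIdeal_eq_span_p,
      ← PadicInt.ker_toZMod]
    exact RingHom.mem_ker
  have harith : ∀ j : ℕ, (j + 1) * p = (j + 1) + (j + 1) * (p - 1) := by
    intro j
    have h1 : p - 1 + 1 = p := by have := hp.two_le; omega
    calc (j + 1) * p = (j + 1) * ((p - 1) + 1) := by rw [h1]
      _ = (j + 1) + (j + 1) * (p - 1) := by ring
  -- the Frobenius lift
  set φ : MvPolynomial ℕ ℤ_[p] → MvPolynomial ℕ ℤ_[p] :=
    fun y => y ^ p + (p : MvPolynomial ℕ ℤ_[p]) * δ y with hφ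
  have hδφ : ∀ y, (p : MvPolynomial ℕ ℤ_[p]) * δ y = φ y - y ^ p := by
    intro y; simp only [hφ]; ring
  have hφmul : ∀ a b, φ (a * b) = φ a * φ b := by
    intro a b
    simp only [hφ]
    rw [hmul, mul_pow]
    ring
  have hφC : ∀ c : ℤ_[p], φ (C c) = C c := by
    intro c
    simp only [hφ]
    rw [hC, ← C_pow, ← map_add]
    congr 1
    ring
  have hφpow : ∀ (y : MvPolynomial ℕ ℤ_[p]) (k : ℕ), φ (y ^ (k + 1)) = φ y ^ (k + 1) := by
    intro y k
    induction k with
    | zero => simp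
    | succ k ih => rw [pow_succ, hφmul, ih, ← pow_succ]
  -- base case: δ(X^{p^ν}) = p^ν ⬝ F
  have hbase : ∃ F, δ (X 0 ^ p ^ ν) = (p : MvPolynomial ℕ ℤ_[p]) ^ ν * F := by
    have h1 : (p : MvPolynomial ℕ ℤ_[p]) ∣
        (X 0 ^ p + (p : MvPolynomial ℕ ℤ_[p]) * X 1) - (X 0) ^ p := ⟨X 1, by ring⟩
    obtain ⟨F, hF⟩ := dvd_sub_pow_of_dvd_sub h1 ν
    refine ⟨F, mul_left_cancel₀ hpA ?_⟩
    rw [hδφ]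
    obtain ⟨k, hk⟩ : ∃ k, p ^ ν = k + 1 :=
      ⟨p ^ ν - 1, (Nat.succ_pred_eq_of_pos (pow_pos hp.pos ν)).symm⟩
    have hφXν : φ (X 0 ^ p ^ ν) =
        (X 0 ^ p + (p : MvPolynomial ℕ ℤ_[p]) * X 1) ^ p ^ ν := by
      rw [hk, hφpow]
      congr 1
      simp only [hφ]
      rw [hX]
    have hXp : ((X 0 : MvPolynomial ℕ ℤ_[p]) ^ p ^ ν) ^ p = (X 0 ^ p) ^ p ^ ν := by
      rw [← pow_mul, ← pow_mul, mul_comm]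
    rw [hφXν, hXp, hF, pow_succ]
    ring
  -- step: δ(p^{j+1} F) = p^j ⬝ (...)
  have hstep : ∀ (F : MvPolynomial ℕ ℤ_[p]) (j : ℕ),
      δ ((p : MvPolynomial ℕ ℤ_[p]) ^ (j + 1) * F) =
        (p : MvPolynomial ℕ ℤ_[p]) ^ j *
          (φ F - (p : MvPolynomial ℕ ℤ_[p]) ^ ((j + 1) * (p - 1)) * F ^ p) := by
    intro F j
    apply mul_left_cancel₀ hpA
    rw [hδφ]
    have hCp : ((p : MvPolynomial ℕ ℤ_[p])) ^ (j + 1) = C ((p : ℤ_[p]) ^ (j + 1)) := by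
      rw [map_pow, map_natCast]
    rw [hCp, hφmul, hφC, ← hCp, mul_pow, ← pow_mul, harith j, pow_add]
    ring
  -- iterated: δ^[t+1](X^{p^ν}) = p^{ν-t} ⬝ F
  have hiter : ∀ t, t + 1 ≤ m → ∃ F,
      δ^[t + 1] (X 0 ^ p ^ ν) = (p : MvPolynomial ℕ ℤ_[p]) ^ (ν - t) * F := by
    intro t
    induction t with
    | zero => intro _; simpa using hbase
    | succ t ih =>
      intro h
      obtain ⟨F, hF⟩ := ih (by omega)
      have hj : ν - t = (ν - (t + 1)) + 1 := by omega
      exact ⟨_, by rw [Function.iterate_succ_apply', hF, hj, hstep]⟩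
  obtain ⟨F, hF⟩ := hiter (m - 1) (by omega)
  rw [show m - 1 + 1 = m by omega] at hF
  -- now the p-adic side
  obtain ⟨u, hu⟩ := ha
  have hu0 : ¬ (p : ℤ_[p]) ∣ u := by
    rintro ⟨v, hv⟩
    exact ha' ⟨v, by rw [hu, hv, pow_succ]; ring⟩
  have hta : PadicInt.toZMod a = 1 := by
    have h1 : (p : ℤ_[p]) ∣ a - 1 :=
      (dvd_pow_self (p : ℤ_[p]) (by omega : m ≠ 0)).trans ⟨u, hu⟩
    have h2 := (hdvdZ _).mp h1
    rw [map_sub, map_one, sub_eq_zero] at h2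
    exact h2
  set s : ℤ_[p] := ∑ i ∈ Finset.range p, a ^ i with hs
  have hts : PadicInt.toZMod s = 0 := by
    rw [hs, map_sum]
    simp only [map_pow, hta, one_pow]
    rw [Finset.sum_const, Finset.card_range, nsmul_eq_mul, mul_one, ZMod.natCast_self]
  have hdstep : ∀ (w : ℤ_[p]) (j : ℕ),
      d ((p : ℤ_[p]) ^ (j + 1) * w) =
        (p : ℤ_[p]) ^ j * (w - (p : ℤ_[p]) ^ ((j + 1) * (p - 1)) * w ^ p) := by
    intro w j
    apply mul_left_cancel₀ hpZ
    rw [hd, mul_pow, ← pow_mul, harith j, pow_add]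
    ring
  have hdbase : d a = (p : ℤ_[p]) ^ (m - 1) * (u * (1 - s)) := by
    apply mul_left_cancel₀ hpZ
    rw [hd]
    have h1 : a ^ p - 1 = s * (a - 1) := by rw [hs]; exact (geom_sum_mul a p).symm
    have hpm : (p : ℤ_[p]) ^ m = p * (p : ℤ_[p]) ^ (m - 1) := by
      conv_lhs => rw [show m = (m - 1) + 1 by omega]
      rw [pow_succ]; ring
    calc a - a ^ p = (a - 1) - (a ^ p - 1) := by ring
      _ = (a - 1) - s * (a - 1) := by rw [h1]
      _ = (a - 1) * (1 - s) := by ring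
      _ = (p : ℤ_[p]) ^ m * u * (1 - s) := by rw [hu]
      _ = p * ((p : ℤ_[p]) ^ (m - 1) * (u * (1 - s))) := by rw [hpm]; ring
  have hdiv : ∀ i, i + 1 ≤ m → ∃ w, d^[i + 1] a = (p : ℤ_[p]) ^ (m - 1 - i) * w ∧
      ¬ (p : ℤ_[p]) ∣ w := by
    intro i
    induction i with
    | zero =>
      intro _
      refine ⟨u * (1 - s), by simpa using hdbase, ?_⟩
      rw [hdvdZ, map_mul]
      intro h
      rcases mul_eq_zero.mp h with h | h
      · exact hu0 ((hdvdZ u).mpr h)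
      · rw [map_sub, map_one, hts, sub_zero] at h
        exact one_ne_zero h
    | succ i ih =>
      intro h
      obtain ⟨w, hw, hw0⟩ := ih (by omega)
      have hj : m - 1 - i = (m - 1 - (i + 1)) + 1 := by omega
      refine ⟨w - (p : ℤ_[p]) ^ ((m - 1 - (i + 1) + 1) * (p - 1)) * w ^ p, ?_, ?_⟩
      · rw [Function.iterate_succ_apply', hw, hj, hdstep]
      · intro hdvd
        apply hw0
        have h2 : (p : ℤ_[p]) ∣ (p : ℤ_[p]) ^ ((m - 1 - (i + 1) + 1) * (p - 1)) * w ^ p :=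
          dvd_mul_of_dvd_left
            (dvd_pow_self _ (Nat.mul_ne_zero (by omega) (by have := hp.two_le; omega))) _
        simpa using dvd_add hdvd h2
  obtain ⟨w, hw, hw0⟩ := hdiv (m - 1) (by omega)
  rw [show m - 1 + 1 = m by omega, show m - 1 - (m - 1) = 0 by omega,
    pow_zero, one_mul] at hw
  -- the key generator reduces to a nonzero constant
  have key : MvPolynomial.map (PadicInt.toZMod (p := p))
      (δ^[m] (X 0 ^ p ^ ν) - C (d^[m] a)) = - C (PadicInt.toZMod w) := by
    rw [hF, hw, map_sub, MvPolynomial.map_C, map_mul, map_pow, map_natCast]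
    have h0 : ((p : ℕ) : MvPolynomial ℕ (ZMod p)) = 0 := by
      rw [← map_natCast (C : ZMod p →+* MvPolynomial ℕ (ZMod p)) p,
        ZMod.natCast_self, map_zero]
    rw [h0, zero_pow (by omega : ν - (m - 1) ≠ 0), zero_mul, zero_sub]
  have hwne : PadicInt.toZMod w ≠ 0 := fun h => hw0 ((hdvdZ w).mpr h)
  have hunit : IsUnit (- C (PadicInt.toZMod w) : MvPolynomial ℕ (ZMod p)) :=
    ((hwne.isUnit).map (C : ZMod p →+* MvPolynomial ℕ (ZMod p))).neg
  exact Ideal.eq_top_of_isUnit_mem _ (Ideal.subset_span ⟨m, hnm, key.symm⟩) hunit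
end

section
/- Fix an odd prime p. Let f(X) = X^e + a₁X^{e−1} + … + a_{e−1}X + a_e ∈ ℤ_p[X] be an Eisenstein polynomial: e ≥ 2, a₁, …, a_e ∈ pℤ_p, and a_e ∉ p²ℤ_p. In the δ-polynomial ring A over ℤ_p, let f(x) ∈ A denote the evaluation of f at the variable x = x^{(0)}. Then the ideal of A generated by p, f(x) and δ(f(x)) is the unit ideal. (Consequently, for X = Spec R[x]/(f(x)) the rings 𝒪^n(X) of global functions of the p-jet spaces J^n(X) vanish for all n ≥ 1.) -/
open MvPolynomial

theorem stmt14 (p : ℕ) [Fact p.Prime] (hodd : Odd p)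
    (δ : MvPolynomial ℕ ℤ_[p] → MvPolynomial ℕ ℤ_[p])
    (hadd : ∀ a b, (p : MvPolynomial ℕ ℤ_[p]) * (δ (a + b) - δ a - δ b)
      = a ^ p + b ^ p - (a + b) ^ p)
    (hmul : ∀ a b, δ (a * b) = a ^ p * δ b + b ^ p * δ a
      + (p : MvPolynomial ℕ ℤ_[p]) * δ a * δ b)
    (hX : ∀ i, δ (X i) = X (i + 1))
    (hC : ∀ c : ℤ_[p], (p : MvPolynomial ℕ ℤ_[p]) * δ (C c) = C (c - c ^ p))
    (f : Polynomial ℤ_[p]) (hmonic : f.Monic) (hdeg : 2 ≤ f.natDegree)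
    (heis : ∀ i < f.natDegree, (p : ℤ_[p]) ∣ f.coeff i)
    (hconst : ¬ (p : ℤ_[p]) ^ 2 ∣ f.coeff 0) :
    Ideal.span {(p : MvPolynomial ℕ ℤ_[p]),
        Polynomial.aeval (X 0 : MvPolynomial ℕ ℤ_[p]) f,
        δ (Polynomial.aeval (X 0 : MvPolynomial ℕ ℤ_[p]) f)} = ⊤ := by
  classical
  have hpprime : p.Prime := Fact.out
  have hp0 : p ≠ 0 := hpprime.ne_zero
  have hp2 : 2 ≤ p := hpprime.two_le
  have hpZ : (p : ℤ_[p]) ≠ 0 := by exact_mod_cast hp0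
  set π : MvPolynomial ℕ ℤ_[p] := (p : MvPolynomial ℕ ℤ_[p]) with hπ
  have hπC : π = C ((p : ℕ) : ℤ_[p]) := by
    rw [hπ, map_natCast (C : ℤ_[p] →+* MvPolynomial ℕ ℤ_[p]) p]
  have hpA : π ≠ 0 := by
    rw [hπC]
    simpa using hpZ
  -- δ basics
  have hδ1 : δ (1 : MvPolynomial ℕ ℤ_[p]) = 0 := by
    have h := hC 1
    rw [map_one] at h
    simp only [one_pow, sub_self, map_zero] at h
    exact (mul_eq_zero.mp h).resolve_left hpA
  have hδ0 : δ (0 : MvPolynomial ℕ ℤ_[p]) = 0 := by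
    have h := hC 0
    rw [map_zero] at h
    simp only [zero_pow hp0, sub_self, map_zero] at h
    exact (mul_eq_zero.mp h).resolve_left hpA
  -- the Frobenius lift
  have hφadd : ∀ a b : MvPolynomial ℕ ℤ_[p],
      (a + b) ^ p + π * δ (a + b) = (a ^ p + π * δ a) + (b ^ p + π * δ b) := by
    intro a b
    have h := hadd a b
    have hc : π * ((a + b) ^ p + π * δ (a + b))
        = π * ((a ^ p + π * δ a) + (b ^ p + π * δ b)) := by
      linear_combination π * h
    exact mul_left_cancel₀ hpA hc
  let Φ : MvPolynomial ℕ ℤ_[p] →+* MvPolynomial ℕ ℤ_[p] :=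
    { toFun := fun a => a ^ p + π * δ a
      map_one' := by simp [hδ1]
      map_mul' := fun a b => by
        show (a * b) ^ p + π * δ (a * b) = (a ^ p + π * δ a) * (b ^ p + π * δ b)
        rw [hmul]; ring
      map_zero' := by simp [hδ0, zero_pow hp0]
      map_add' := hφadd }
  have hΦdef : ∀ a, Φ a = a ^ p + π * δ a := fun a => rfl
  have hφC : ∀ c : ℤ_[p], Φ (C c) = C c := by
    intro c
    rw [hΦdef, ← map_pow, hC c, ← map_add]
    ring_nf
  have hcommutes : ∀ c : ℤ_[p], Φ (algebraMap ℤ_[p] (MvPolynomial ℕ ℤ_[p]) c)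
      = algebraMap ℤ_[p] (MvPolynomial ℕ ℤ_[p]) c := by
    intro c
    rw [MvPolynomial.algebraMap_eq]
    exact hφC c
  let Ψ : MvPolynomial ℕ ℤ_[p] →ₐ[ℤ_[p]] MvPolynomial ℕ ℤ_[p] :=
    { Φ with commutes' := hcommutes }
  have hΨΦ : ∀ a, Ψ a = Φ a := fun a => rfl
  have key : ∀ a : MvPolynomial ℕ ℤ_[p],
      Φ (Polynomial.aeval a f) = Polynomial.aeval (Φ a) f := by
    intro a
    rw [← hΨΦ, ← hΨΦ]
    exact (Polynomial.aeval_algHom_apply Ψ a f).symm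
  -- decomposition of f
  set e := f.natDegree with he
  have hgdvd : Polynomial.C ((p : ℕ) : ℤ_[p]) ∣ f - Polynomial.X ^ e := by
    rw [Polynomial.C_dvd_iff_dvd_coeff]
    intro i
    rcases lt_trichotomy i e with hi | hi | hi
    · rw [Polynomial.coeff_sub, Polynomial.coeff_X_pow, if_neg (by omega)]
      simpa using heis i hi
    · subst hi
      rw [Polynomial.coeff_sub, Polynomial.coeff_X_pow, if_pos rfl, hmonic.coeff_natDegree]
      simp
    · rw [Polynomial.coeff_sub, Polynomial.coeff_X_pow, if_neg (by omega),
        Polynomial.coeff_eq_zero_of_natDegree_lt hi]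
      simp
  obtain ⟨g, hg⟩ := hgdvd
  have hf : f = Polynomial.X ^ e + Polynomial.C ((p : ℕ) : ℤ_[p]) * g := by
    rw [← hg]; ring
  set b0 := g.coeff 0 with hb0def
  have hcoeff0 : f.coeff 0 = (p : ℤ_[p]) * b0 := by
    rw [hf]
    rw [Polynomial.coeff_add, Polynomial.coeff_X_pow, if_neg (by omega),
      Polynomial.coeff_C_mul]
    simp [hb0def]
  have hb0unit : IsUnit b0 := by
    by_contra h
    rw [PadicInt.not_isUnit_iff, PadicInt.norm_lt_one_iff_dvd] at h
    obtain ⟨c, hc⟩ := h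
    exact hconst ⟨c, by rw [hcoeff0, hc]; ring⟩
  -- evaluation decomposition
  have haeval : ∀ a : MvPolynomial ℕ ℤ_[p],
      Polynomial.aeval a f = a ^ e + π * Polynomial.aeval a g := by
    intro a
    conv_lhs => rw [hf]
    rw [map_add, map_mul, map_pow, Polynomial.aeval_X, Polynomial.aeval_C,
      MvPolynomial.algebraMap_eq, ← hπC]
  have hgdecomp : ∀ a : MvPolynomial ℕ ℤ_[p],
      Polynomial.aeval a g = a * Polynomial.aeval a g.divX + C b0 := by
    intro a
    conv_lhs => rw [← Polynomial.X_mul_divX_add g]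
    rw [map_add, map_mul, Polynomial.aeval_X, Polynomial.aeval_C,
      MvPolynomial.algebraMap_eq]
  -- ideals
  set x : MvPolynomial ℕ ℤ_[p] := X 0 with hxdef
  set y : MvPolynomial ℕ ℤ_[p] := X 1 with hydef
  set M : Ideal (MvPolynomial ℕ ℤ_[p]) := Ideal.span {π, x} with hM
  set N : Ideal (MvPolynomial ℕ ℤ_[p]) := Ideal.span {π ^ 2, π * x} with hN
  have hπM : π ∈ M := Ideal.subset_span (by simp)
  have hxM : x ∈ M := Ideal.subset_span (by simp)
  have L1 : ∀ u v : MvPolynomial ℕ ℤ_[p], u ∈ M → π * u * v ∈ N := by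
    intro u v hu
    rw [hM, Ideal.mem_span_pair] at hu
    obtain ⟨s, t, hst⟩ := hu
    rw [hN, Ideal.mem_span_pair]
    exact ⟨s * v, t * v, by linear_combination π * v * hst⟩
  have L3 : ∀ a b : MvPolynomial ℕ ℤ_[p], a ∈ M → b ∈ M → ∀ n, 2 ≤ n →
      ∃ c ∈ M, a ^ n - b ^ n = (a - b) * c := by
    intro a b ha hb n hn
    refine ⟨∑ i ∈ Finset.range n, a ^ i * b ^ (n - 1 - i), ?_, ?_⟩
    · apply Ideal.sum_mem
      intro i hi
      rw [Finset.mem_range] at hi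
      rcases Nat.eq_zero_or_pos i with h0 | h0
      · subst h0
        exact Ideal.mul_mem_left _ _ (Ideal.pow_mem_of_mem M hb _ (by omega))
      · exact Ideal.mul_mem_right _ _ (Ideal.pow_mem_of_mem M ha _ h0)
    · rw [← geom_sum₂_mul a b n]; ring
  set F : MvPolynomial ℕ ℤ_[p] := Polynomial.aeval x f with hFdef
  set G : MvPolynomial ℕ ℤ_[p] := Polynomial.aeval x g with hGdef
  set z : MvPolynomial ℕ ℤ_[p] := x ^ p + π * y with hzdef
  set W : MvPolynomial ℕ ℤ_[p] := Polynomial.aeval z g.divX with hWdef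
  have hxp : x ^ p = x ^ (p - 1) * x := by
    rw [← pow_succ]; congr 1; omega
  have hzM : z ∈ M := by
    rw [hzdef, hxp]
    exact M.add_mem (Ideal.mul_mem_left _ _ hxM) (Ideal.mul_mem_right _ _ hπM)
  have hxpM : x ^ p ∈ M := Ideal.pow_mem_of_mem M hxM _ (by omega)
  have hxeM : x ^ e ∈ M := Ideal.pow_mem_of_mem M hxM _ (by omega)
  have hFM : F ∈ M := by
    rw [hFdef, haeval x]
    exact M.add_mem hxeM (Ideal.mul_mem_right _ _ hπM)
  have hΦx : Φ x = z := by
    rw [hΦdef, hxdef, hX 0, hzdef, hydef]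
  have hΦF : Φ F = z ^ e + π * (z * W + C b0) := by
    rw [hFdef, key, hΦx, haeval z, hgdecomp z, hWdef]
  have hF : F = x ^ e + π * G := by rw [hFdef, haeval x, hGdef]
  -- the key membership
  have hmemN : π * δ F - π * C b0 ∈ N := by
    have hpδ : π * δ F - π * C b0 = Φ F - F ^ p - π * C b0 := by
      rw [hΦdef]; ring
    obtain ⟨c1, hc1M, hc1⟩ := L3 z (x ^ p) hzM hxpM e (by omega)
    have hFM' : x ^ e + π * G ∈ M := by rw [← hF]; exact hFM
    obtain ⟨c2, hc2M, hc2⟩ := L3 (x ^ e) (x ^ e + π * G) hxeM hFM' p hp2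
    have hsplit : π * δ F - π * C b0
        = (z - x ^ p) * c1 + (x ^ e - (x ^ e + π * G)) * c2 + π * z * W := by
      rw [hpδ, hΦF, hF, ← hc1, ← hc2]
      rw [← pow_mul, ← pow_mul, Nat.mul_comm]
      ring
    rw [hsplit]
    refine N.add_mem (N.add_mem ?_ ?_) (L1 z W hzM)
    · have h1 : (z - x ^ p) * c1 = π * c1 * y := by rw [hzdef]; ring
      rw [h1]; exact L1 c1 y hc1M
    · have h2 : (x ^ e - (x ^ e + π * G)) * c2 = π * c2 * (-G) := by ring
      rw [h2]; exact L1 c2 (-G) hc2M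
  have hmemM : δ F - C b0 ∈ M := by
    rw [hN, Ideal.mem_span_pair] at hmemN
    obtain ⟨s, t, hst⟩ := hmemN
    rw [hM, Ideal.mem_span_pair]
    refine ⟨s, t, mul_left_cancel₀ hpA ?_⟩
    linear_combination hst
  -- conclude
  set J : Ideal (MvPolynomial ℕ ℤ_[p]) :=
    Ideal.span {π, F, δ F} with hJ
  have hπJ : π ∈ J := Ideal.subset_span (by simp)
  have hFJ : F ∈ J := Ideal.subset_span (by simp)
  have hδFJ : δ F ∈ J := Ideal.subset_span (by simp)
  have hxeJ : x ^ e ∈ J := by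
    have hx : x ^ e = F - π * G := by rw [hF]; ring
    rw [hx]
    exact J.sub_mem hFJ (J.mul_mem_right _ hπJ)
  obtain ⟨s, t, hst⟩ := (Ideal.mem_span_pair).mp (hM ▸ hmemM)
  have hCb0 : (C b0 : MvPolynomial ℕ ℤ_[p]) = δ F - s * π - t * x := by
    linear_combination hst
  have hmk : Ideal.Quotient.mk J (C (b0 ^ e)) = 0 := by
    have h1 : Ideal.Quotient.mk J (C b0) = Ideal.Quotient.mk J (-(t * x)) := by
      rw [hCb0]
      rw [Ideal.Quotient.mk_eq_mk_iff_sub_mem]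
      have : δ F - s * π - t * x - -(t * x) = δ F - s * π := by ring
      rw [this]
      exact J.sub_mem hδFJ (J.mul_mem_left _ hπJ)
    have h2 : (C (b0 ^ e) : MvPolynomial ℕ ℤ_[p]) = (C b0) ^ e := by
      rw [map_pow]
    rw [h2, map_pow, h1]
    rw [← map_pow, neg_pow, mul_pow, map_mul, map_mul, map_pow]
    rw [Ideal.Quotient.eq_zero_iff_mem.mpr hxeJ]
    ring
  have hCb0eJ : (C (b0 ^ e) : MvPolynomial ℕ ℤ_[p]) ∈ J := by
    rwa [← Ideal.Quotient.eq_zero_iff_mem]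
  have hbunit : IsUnit (b0 ^ e) := hb0unit.pow e
  rw [isUnit_iff_exists] at hbunit
  obtain ⟨v, hv, -⟩ := hbunit
  have h1J : (1 : MvPolynomial ℕ ℤ_[p]) ∈ J := by
    have : (1 : MvPolynomial ℕ ℤ_[p]) = C (b0 ^ e) * C v := by
      rw [← map_mul, hv, map_one]
    rw [this]
    exact J.mul_mem_right _ hCb0eJ
  rw [hJ, hFdef, hxdef, hπ] at h1J
  exact (Ideal.eq_top_iff_one _).mpr h1J
end
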